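/- arXiv:1404.4380 — 9 statements merged into one kernel-verified Lean document; each statement's English description precedes it below -/
import Mathlib

section
/- Let C = (c_{j,k}) be a non-splitting symmetric nonnegative matrix on ℤ with zero diagonal, let 1 ≤ p < ∞, and define the seminorm ‖x‖^p = Σ_{j,k} c_{j,k} |x_j − x_k|^p on finitely supported complex sequences S₀. If the coordinate functional φ₀ : x ↦ x₀ is bounded on (S₀, ‖·‖), then every coordinate functional φ_n : x ↦ x_n is bounded on (S₀, ‖·‖). -/
private lemma besov_summable {c : ℤ → ℤ → ℝ} {p : ℝ} (hp : 1 ≤ p)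
    (hsymm : ∀ j k, c j k = c k j) (hnonneg : ∀ j k, 0 ≤ c j k)
    (hrow : ∀ n : ℤ, Summable fun j => c j n)
    (x : ℤ → ℂ) (hx : (Function.support x).Finite) :
    Summable fun q : ℤ × ℤ => c q.1 q.2 * ‖x q.1 - x q.2‖ ^ p := by
  classical
  have hp0 : (0:ℝ) < p := lt_of_lt_of_le one_pos hp
  set f : ℤ × ℤ → ℝ := fun q => c q.1 q.2 * ‖x q.1 - x q.2‖ ^ p with hf
  have fnn : ∀ q, 0 ≤ f q := fun q =>
    mul_nonneg (hnonneg _ _) (Real.rpow_nonneg (norm_nonneg _) _)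
  set F : Finset ℤ := hx.toFinset with hF
  set T : ℝ := ∑ i ∈ F, ‖x i‖ with hT
  have hTk : ∀ k, ‖x k‖ ≤ T := by
    intro k
    by_cases hk : k ∈ F
    · exact Finset.single_le_sum (fun i _ => norm_nonneg _) hk
    · have : x k = 0 := by
        by_contra h
        exact hk (hx.mem_toFinset.mpr h)
      simp [this, hT]
      exact Finset.sum_nonneg fun i _ => norm_nonneg _
  have hbound : ∀ j k, f (j, k) ≤ (2 * T) ^ p * c j k := by
    intro j k
    have h1 : ‖x j - x k‖ ≤ 2 * T := by
      calc ‖x j - x k‖ ≤ ‖x j‖ + ‖x k‖ :=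
            norm_sub_le _ _
        _ ≤ T + T := add_le_add (hTk j) (hTk k)
        _ = 2 * T := by ring
    have h2 : ‖x j - x k‖ ^ p ≤ (2 * T) ^ p :=
      Real.rpow_le_rpow (norm_nonneg _) h1 (le_of_lt hp0)
    calc f (j, k) = c j k * ‖x j - x k‖ ^ p := rfl
      _ ≤ c j k * (2 * T) ^ p := mul_le_mul_of_nonneg_left h2 (hnonneg _ _)
      _ = (2 * T) ^ p * c j k := mul_comm _ _
  have hrowj : ∀ j, Summable fun k => c j k := fun j =>
    (hrow j).congr fun k => hsymm k j
  have hslice1 : ∀ j, Summable fun k => f (j, k) := fun j =>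
    Summable.of_nonneg_of_le (fun k => fnn _) (fun k => hbound j k)
      ((hrowj j).mul_left _)
  have hslice2 : ∀ k, Summable fun j => f (j, k) := fun k =>
    Summable.of_nonneg_of_le (fun j => fnn _)
      (fun j => by simpa [mul_comm (c j k)] using hbound j k)
      (((hrow k)).mul_left ((2*T)^p))
  set g : ℤ × ℤ → ℝ := fun q => if q.1 ∈ F then f q else 0 with hg
  have gnn : ∀ q, 0 ≤ g q := by
    intro q; simp only [hg]; split <;> [exact fnn _; exact le_refl 0]
  have hgsum : Summable g := by
    rw [summable_prod_of_nonneg gnn]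
    constructor
    · intro j
      by_cases hj : j ∈ F
      · simpa [hg, hj] using hslice1 j
      · simp [hg, hj]
    · apply summable_of_ne_finset_zero (s := F)
      intro j hj
      simp [hg, hj]
  set h' : ℤ × ℤ → ℝ := fun q => if q.1 ∈ F then f (q.2, q.1) else 0 with hh'
  have hh'sum : Summable h' := by
    rw [summable_prod_of_nonneg (f := h') (by
      intro q; simp only [hh']; split <;> [exact fnn _; exact le_refl 0])]
    constructor
    · intro k
      by_cases hk : k ∈ F
      · simpa [hh', hk] using hslice2 k
      · simp [hh', hk]
    · apply summable_of_ne_finset_zero (s := F)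
      intro k hk
      simp [hh', hk]
  have hhsum : Summable fun q : ℤ × ℤ => h' q.swap := hh'sum.prod_symm
  have hle : ∀ q, f q ≤ g q + h' q.swap := by
    intro q
    by_cases h1 : q.1 ∈ F
    · have : g q = f q := by simp [hg, h1]
      rw [this]
      have : (0:ℝ) ≤ h' q.swap := by
        simp only [hh']; split <;> [exact fnn _; exact le_refl 0]
      linarith
    · by_cases h2 : q.2 ∈ F
      · have : h' q.swap = f q := by simp [hh', h2, Prod.swap]
        rw [this]
        linarith [gnn q]
      · have hx1 : x q.1 = 0 := by
          by_contra h; exact h1 (hx.mem_toFinset.mpr h)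
        have hx2 : x q.2 = 0 := by
          by_contra h; exact h2 (hx.mem_toFinset.mpr h)
        have : f q = 0 := by
          simp [hf, hx1, hx2, Real.zero_rpow (ne_of_gt hp0)]
        rw [this]
        have : (0:ℝ) ≤ h' q.swap := by
          simp only [hh']; split <;> [exact fnn _; exact le_refl 0]
        linarith [gnn q]
  exact Summable.of_nonneg_of_le fnn hle (hgsum.add hhsum)

/-- If one coordinate functional is bounded on `S₀` for the Besov–Dirichlet seminorm,
then all of them are. -/
theorem stmt_1 (c : ℤ → ℤ → ℝ) (p : ℝ) (hp : 1 ≤ p)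
    (hsymm : ∀ j k, c j k = c k j)
    (hnonneg : ∀ j k, 0 ≤ c j k)
    (hdiag : ∀ j, c j j = 0)
    (hrow : ∀ n : ℤ, Summable fun j => c j n)
    (hns : ∀ A : Set ℤ, (∀ j ∈ A, ∀ k ∉ A, c j k = 0) → A = ∅ ∨ A = Set.univ)
    (h0 : ∃ M : ℝ, ∀ x : ℤ → ℂ, (Function.support x).Finite →
      ‖x 0‖ ≤
        M * (∑' q : ℤ × ℤ, c q.1 q.2 * ‖x q.1 - x q.2‖ ^ p) ^ (1 / p)) :
    ∀ n : ℤ, ∃ M : ℝ, ∀ x : ℤ → ℂ, (Function.support x).Finite →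
      ‖x n‖ ≤
        M * (∑' q : ℤ × ℤ, c q.1 q.2 * ‖x q.1 - x q.2‖ ^ p) ^ (1 / p) := by
  classical
  have hp0 : (0:ℝ) < p := lt_of_lt_of_le one_pos hp
  set S : (ℤ → ℂ) → ℝ :=
    fun x => ∑' q : ℤ × ℤ, c q.1 q.2 * ‖x q.1 - x q.2‖ ^ p with hS
  have hSnn : ∀ x, 0 ≤ S x := fun x =>
    tsum_nonneg fun q => mul_nonneg (hnonneg _ _) (Real.rpow_nonneg (norm_nonneg _) _)
  set A : Set ℤ := {n | ∃ M : ℝ, ∀ x : ℤ → ℂ, (Function.support x).Finite →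
      ‖x n‖ ≤ M * (S x) ^ (1 / p)} with hA
  -- propagation along positive entries
  have key : ∀ n m : ℤ, 0 < c n m → n ∈ A → m ∈ A := by
    intro n m hc ⟨M, hM⟩
    refine ⟨M + ((c n m) ^ (1/p))⁻¹, ?_⟩
    intro x hx
    have hsum := besov_summable hp hsymm hnonneg hrow x hx
    have hterm : c n m * ‖x n - x m‖ ^ p ≤ S x :=
      Summable.le_tsum hsum (n, m) fun q _ =>
        mul_nonneg (hnonneg _ _) (Real.rpow_nonneg (norm_nonneg _) _)
    have hdiff : ‖x n - x m‖ ≤ (S x) ^ (1/p) / (c n m) ^ (1/p) := by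
      have h1 : ‖x n - x m‖ ^ p ≤ S x / c n m := by
        rw [le_div_iff₀ hc]
        linarith [hterm]
      have h2 : (‖x n - x m‖ ^ p) ^ (1/p) ≤ (S x / c n m) ^ (1/p) :=
        Real.rpow_le_rpow (Real.rpow_nonneg (norm_nonneg _) _) h1
          (by positivity)
      have h3 : (‖x n - x m‖ ^ p) ^ (1/p) = ‖x n - x m‖ := by
        rw [← Real.rpow_mul (norm_nonneg _), mul_one_div,
          div_self (ne_of_gt hp0), Real.rpow_one]
      rw [h3] at h2
      calc ‖x n - x m‖ ≤ (S x / c n m) ^ (1/p) := h2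
        _ = (S x) ^ (1/p) / (c n m) ^ (1/p) :=
            Real.div_rpow (hSnn x) (le_of_lt hc) _
    have htri : ‖x m‖ ≤ ‖x n‖ + ‖x n - x m‖ := by
      calc ‖x m‖ = ‖x n - (x n - x m)‖ := by ring_nf
        _ ≤ ‖x n‖ + ‖x n - x m‖ := norm_sub_le _ _
    have hcpos : (0:ℝ) < (c n m) ^ (1/p) := Real.rpow_pos_of_pos hc _
    calc ‖x m‖ ≤ ‖x n‖ + ‖x n - x m‖ := htri
      _ ≤ M * (S x) ^ (1/p) + (S x) ^ (1/p) / (c n m) ^ (1/p) :=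
          add_le_add (hM x hx) hdiff
      _ = (M + ((c n m) ^ (1/p))⁻¹) * (S x) ^ (1/p) := by
          field_simp
  have h0A : (0:ℤ) ∈ A := h0
  have hsplit : ∀ j ∈ A, ∀ k ∉ A, c j k = 0 := by
    intro j hj k hk
    by_contra h
    have : 0 < c j k := lt_of_le_of_ne (hnonneg j k) (Ne.symm h)
    exact hk (key j k this hj)
  rcases hns A hsplit with h | h
  · exact absurd (h ▸ h0A) (Set.notMem_empty 0)
  · intro n
    have : n ∈ A := h ▸ Set.mem_univ n
    exact this
end

section
/- Let C = (c_{j,k}) be a non-splitting symmetric nonnegative matrix on ℤ with zero diagonal and Σ_j c_{j,n} < ∞ for every n, and let 1 ≤ p < ∞. Then ‖x‖ = (Σ_{j,k} c_{j,k} |x_j − x_k|^p)^{1/p} is a norm (not merely a seminorm) on the space S₀ of finitely supported sequences: ‖x‖ = 0 implies x = 0. -/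
/-- For a non-splitting matrix, the Besov–Dirichlet seminorm is a norm on `S₀`. -/
theorem stmt_2 (c : ℤ → ℤ → ℝ) (p : ℝ) (hp : 1 ≤ p)
    (hsymm : ∀ j k, c j k = c k j)
    (hnonneg : ∀ j k, 0 ≤ c j k)
    (hdiag : ∀ j, c j j = 0)
    (hrow : ∀ n : ℤ, Summable fun j => c j n)
    (hns : ∀ A : Set ℤ, (∀ j ∈ A, ∀ k ∉ A, c j k = 0) → A = ∅ ∨ A = Set.univ)
    (x : ℤ → ℂ) (hx : (Function.support x).Finite)
    (hzero : ∑' q : ℤ × ℤ, c q.1 q.2 * ‖x q.1 - x q.2‖ ^ p = 0) :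
    x = 0 := by
  classical
  have hp0 : 0 < p := lt_of_lt_of_le one_pos hp
  set S := hx.toFinset with hS
  have hmemS : ∀ j, j ∈ S ↔ x j ≠ 0 := by
    intro j; simp [hS, Function.mem_support]
  set M := ∑ j ∈ S, ‖x j‖ with hM
  have hM0 : 0 ≤ M := Finset.sum_nonneg fun _ _ => norm_nonneg _
  have hbound : ∀ j, ‖x j‖ ≤ M := by
    intro j
    by_cases h : x j = 0
    · simpa [h] using hM0
    · exact Finset.single_le_sum (f := fun j => ‖x j‖)
        (fun i _ => norm_nonneg _) ((hmemS j).2 h)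
  set B := (2 * M) ^ p with hB
  have hB0 : 0 ≤ B := Real.rpow_nonneg (by linarith) p
  set f : ℤ × ℤ → ℝ := fun q => c q.1 q.2 * ‖x q.1 - x q.2‖ ^ p with hf
  have hf0 : ∀ q, 0 ≤ f q := fun q =>
    mul_nonneg (hnonneg _ _) (Real.rpow_nonneg (norm_nonneg _) p)
  have hrow' : ∀ n, Summable fun k => c n k := by
    intro n
    have := hrow n
    apply this.congr
    intro k; exact (hsymm n k).symm
  -- first comparison function
  have hg1 : Summable (fun q : ℤ × ℤ => B * (if q.1 ∈ S then c q.1 q.2 else 0)) := by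
    rw [summable_prod_of_nonneg]
    · constructor
      · intro j
        by_cases h : j ∈ S
        · simpa [h] using ((hrow' j).mul_left B)
        · simpa [h] using summable_zero
      · apply summable_of_ne_finset_zero (s := S)
        intro j hj
        simp [hj]
    · intro q
      apply mul_nonneg hB0
      split_ifs
      exacts [hnonneg _ _, le_rfl]
  have hg2 : Summable (fun q : ℤ × ℤ => B * (if q.2 ∈ S then c q.1 q.2 else 0)) := by
    rw [summable_prod_of_nonneg]
    · constructor
      · intro j
        apply summable_of_ne_finset_zero (s := S)
        intro k hk
        simp [hk]
      · have hcongr : ∀ j : ℤ, (∑' k, B * (if k ∈ S then c j k else 0))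
            = ∑ k ∈ S, B * c j k := by
          intro j
          rw [tsum_eq_sum (s := S)]
          · exact Finset.sum_congr rfl fun k hk => by simp [hk]
          · intro k hk; simp [hk]
        apply Summable.congr (f := fun j => ∑ k ∈ S, B * c j k)
        · exact summable_sum fun k _ => (hrow k).mul_left B
        · intro j; exact (hcongr j).symm
    · intro q
      apply mul_nonneg hB0
      split_ifs
      exacts [hnonneg _ _, le_rfl]
  have hle : ∀ q : ℤ × ℤ, f q ≤ B * (if q.1 ∈ S then c q.1 q.2 else 0)
      + B * (if q.2 ∈ S then c q.1 q.2 else 0) := by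
    rintro ⟨j, k⟩
    by_cases hj : j ∈ S
    · have h1 : ‖x j - x k‖ ≤ 2 * M := by
        calc ‖x j - x k‖ ≤ ‖x j‖ + ‖x k‖ :=
              norm_sub_le _ _
          _ ≤ M + M := add_le_add (hbound j) (hbound k)
          _ = 2 * M := by ring
      have h2 : ‖x j - x k‖ ^ p ≤ B :=
        Real.rpow_le_rpow (norm_nonneg _) h1 hp0.le
      have h3 : f (j, k) ≤ c j k * B := by
        exact mul_le_mul_of_nonneg_left h2 (hnonneg j k)
      have h4 : 0 ≤ B * (if k ∈ S then c j k else 0) := by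
        apply mul_nonneg hB0
        split_ifs
        exacts [hnonneg _ _, le_rfl]
      simp only [hj, if_true]
      calc f (j, k) ≤ c j k * B := h3
        _ = B * c j k + 0 := by ring
        _ ≤ B * c j k + B * (if k ∈ S then c j k else 0) := by linarith
    · by_cases hk : k ∈ S
      · have h1 : ‖x j - x k‖ ≤ 2 * M := by
          calc ‖x j - x k‖ ≤ ‖x j‖ + ‖x k‖ :=
                norm_sub_le _ _
            _ ≤ M + M := add_le_add (hbound j) (hbound k)
            _ = 2 * M := by ring
        have h2 : ‖x j - x k‖ ^ p ≤ B :=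
          Real.rpow_le_rpow (norm_nonneg _) h1 hp0.le
        have h3 : f (j, k) ≤ c j k * B :=
          mul_le_mul_of_nonneg_left h2 (hnonneg j k)
        simp only [hj, hk, if_true, if_false]
        calc f (j, k) ≤ c j k * B := h3
          _ = B * 0 + B * c j k := by ring
          _ ≤ B * 0 + B * c j k := le_refl _
      · have hxj : x j = 0 := by
          by_contra h; exact hj ((hmemS j).2 h)
        have hxk : x k = 0 := by
          by_contra h; exact hk ((hmemS k).2 h)
        have : f (j, k) = 0 := by
          simp [hf, hxj, hxk, Real.zero_rpow hp0.ne']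
        simp [hj, hk, this]
  have hfs : Summable f := Summable.of_nonneg_of_le hf0 hle (hg1.add hg2)
  have hterm : ∀ q : ℤ × ℤ, f q = 0 := by
    intro q
    have h1 : f q ≤ ∑' q', f q' := Summable.le_tsum hfs q (fun q' _ => hf0 q')
    have h2 : (∑' q', f q') = 0 := hzero
    exact le_antisymm (h1.trans h2.le) (hf0 q)
  -- now the splitting argument
  funext n
  by_contra hn
  have hn' : x n ≠ 0 := hn
  set A : Set ℤ := {k | x k = x n} with hA
  have hcz : ∀ j ∈ A, ∀ k ∉ A, c j k = 0 := by
    intro j hj k hk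
    have hne : x j ≠ x k := by
      intro h
      exact hk (by rw [hA, Set.mem_setOf_eq, ← h, hj])
    have habs : 0 < ‖x j - x k‖ := by
      rw [norm_pos_iff]
      exact sub_ne_zero.mpr hne
    have hpos : 0 < ‖x j - x k‖ ^ p := Real.rpow_pos_of_pos habs p
    have := hterm (j, k)
    simp only [hf] at this
    rcases mul_eq_zero.mp this with h | h
    · exact h
    · exact absurd h hpos.ne'
  rcases hns A hcz with h | h
  · have : n ∈ A := by rw [hA]; exact rfl
    rw [h] at this
    exact this
  · obtain ⟨k, hk⟩ := (hx.infinite_compl).nonempty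
    have hxk : x k = 0 := by
      simpa [Function.mem_support] using hk
    have : k ∈ A := h ▸ Set.mem_univ k
    rw [hA, Set.mem_setOf_eq, hxk] at this
    exact hn' this.symm
end

section
/- Let C = (c_{j,k}) satisfy the standing assumptions, let 1 ≤ p < ∞, and let λ = (λ_j)_{j∈ℤ} be a bounded complex sequence that is a multiplier of the Besov–Dirichlet space B₀^p(c_{j,k}), with multiplier norm ‖T_λ‖. If δ = inf_j |λ_j| > 0, then 1/λ = (1/λ_j) is also a multiplier, and ‖T_{1/λ}‖ ≤ δ^{−2}(‖T_λ‖ + ‖λ‖_∞) + δ^{−1}. -/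
/-- A finitely supported sequence is bounded. -/
lemma aux_bounded (z : ℤ → ℂ) (hz : (Function.support z).Finite) :
    ∃ B : ℝ, 0 ≤ B ∧ ∀ j, ‖z j‖ ≤ B := by
  refine ⟨∑ j ∈ hz.toFinset, ‖z j‖,
    Finset.sum_nonneg fun _ _ => norm_nonneg _, fun j => ?_⟩
  by_cases h : j ∈ hz.toFinset
  · exact Finset.single_le_sum (f := fun j => ‖z j‖) (fun i _ => norm_nonneg _) h
  · rw [Set.Finite.mem_toFinset, Function.mem_support, not_not] at h
    rw [h]
    simpa using Finset.sum_nonneg fun i _ => norm_nonneg (z i)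

lemma key_summable (c : ℤ → ℤ → ℝ) (p : ℝ) (hp : 1 ≤ p)
    (hsymm : ∀ j k, c j k = c k j) (hnonneg : ∀ j k, 0 ≤ c j k)
    (hrow : ∀ n : ℤ, Summable fun j => c j n)
    (z : ℤ → ℂ) (hz : (Function.support z).Finite) :
    Summable (fun q : ℤ × ℤ => c q.1 q.2 * ‖z q.1 - z q.2‖ ^ p) := by
  have hp0 : (0:ℝ) < p := lt_of_lt_of_le one_pos hp
  obtain ⟨B, hB0, hB⟩ := aux_bounded z hz
  set M : ℝ := (2 * B) ^ p with hM
  have hM0 : 0 ≤ M := Real.rpow_nonneg (by linarith) p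
  have habs : ∀ j k, ‖z j - z k‖ ^ p ≤ M := by
    intro j k
    apply Real.rpow_le_rpow (norm_nonneg _) _ hp0.le
    calc ‖z j - z k‖ ≤ ‖z j‖ + ‖z k‖ :=
          norm_sub_le _ _
      _ ≤ 2 * B := by have := hB j; have := hB k; linarith
  have hrow' : ∀ j : ℤ, Summable fun k => c j k := by
    intro j
    exact (hrow j).congr fun k => (hsymm j k).symm ▸ rfl
  have hg : Summable (fun q : ℤ × ℤ => if q.1 ∈ hz.toFinset then c q.1 q.2 * M else 0) := by
    rw [summable_prod_of_nonneg]
    · constructor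
      · intro j
        by_cases h : j ∈ hz.toFinset
        · simp only [h, if_true]
          exact (hrow' j).mul_right M
        · simp only [h, if_false]
          exact summable_zero
      · apply summable_of_ne_finset_zero (s := hz.toFinset)
        intro j hj
        simp [hj]
    · intro q
      by_cases h : q.1 ∈ hz.toFinset <;>
        simp [h, mul_nonneg (hnonneg _ _) hM0]
  have hh : Summable (fun q : ℤ × ℤ => if q.2 ∈ hz.toFinset then c q.1 q.2 * M else 0) := by
    have := (Equiv.prodComm ℤ ℤ).summable_iff.mpr hg
    apply this.congr
    intro q
    simp only [Function.comp_apply, Equiv.prodComm_apply, Prod.fst_swap, Prod.snd_swap]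
    rw [hsymm q.2 q.1]
    congr
  apply Summable.of_nonneg_of_le _ _ (hg.add hh)
  · intro q
    exact mul_nonneg (hnonneg _ _) (Real.rpow_nonneg (norm_nonneg _) _)
  · intro q
    by_cases h1 : q.1 ∈ hz.toFinset
    · have h2 : (0:ℝ) ≤ if q.2 ∈ hz.toFinset then c q.1 q.2 * M else 0 := by
        by_cases h : q.2 ∈ hz.toFinset <;> simp [h, mul_nonneg (hnonneg _ _) hM0]
      simp only [h1, if_true]
      have := mul_le_mul_of_nonneg_left (habs q.1 q.2) (hnonneg q.1 q.2)
      linarith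
    · by_cases h2 : q.2 ∈ hz.toFinset
      · have h1' : (0:ℝ) ≤ if q.1 ∈ hz.toFinset then c q.1 q.2 * M else 0 := by
          simp [h1]
        simp only [h2, if_true]
        have := mul_le_mul_of_nonneg_left (habs q.1 q.2) (hnonneg q.1 q.2)
        linarith
      · rw [Set.Finite.mem_toFinset, Function.mem_support, not_not] at h1 h2
        simp [h1, h2, Real.zero_rpow (ne_of_gt hp0)]



lemma norm_w_mul {c0 p : ℝ} (hc : 0 ≤ c0) (hp0 : 0 < p) (v : ℂ) :
    ‖((c0 ^ (1/p) : ℝ) : ℂ) * v‖ ^ p = c0 * ‖v‖ ^ p := by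
  rw [norm_mul, Complex.norm_real, Real.norm_of_nonneg (Real.rpow_nonneg hc _),
    Real.mul_rpow (Real.rpow_nonneg hc _) (norm_nonneg _),
    ← Real.rpow_mul hc, one_div_mul_cancel (ne_of_gt hp0), Real.rpow_one]

lemma div_bound {δ : ℝ} (a b : ℝ) (ha : 0 ≤ a) (hδ : 0 < δ) (hb : δ ≤ b) :
    a / b ≤ δ⁻¹ * a := by
  rw [div_le_iff₀ (lt_of_lt_of_le hδ hb)]
  have h1 : 1 ≤ δ⁻¹ * b := by
    rw [← inv_mul_cancel₀ (ne_of_gt hδ)]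
    exact mul_le_mul_of_nonneg_left hb (inv_nonneg.mpr hδ.le)
  nlinarith [mul_le_mul_of_nonneg_left h1 ha]

lemma master_est (c : ℤ → ℤ → ℝ) (p : ℝ) (hp : 1 ≤ p)
    (hnonneg : ∀ j k, 0 ≤ c j k)
    (z : ℤ → ℂ) (K : ℝ) (hK : 0 ≤ K) (d : ℤ × ℤ → ℂ)
    (hd : ∀ q : ℤ × ℤ, ‖d q‖ ≤ K * ‖z q.1 - z q.2‖)
    (hsum : Summable (fun q : ℤ × ℤ => c q.1 q.2 * ‖z q.1 - z q.2‖ ^ p)) :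
    Summable (fun q : ℤ × ℤ => ‖((c q.1 q.2 ^ (1/p) : ℝ) : ℂ) * d q‖ ^ p) ∧
    (∑' q : ℤ × ℤ, ‖((c q.1 q.2 ^ (1/p) : ℝ) : ℂ) * d q‖ ^ p)
      ≤ K ^ p * ∑' q : ℤ × ℤ, c q.1 q.2 * ‖z q.1 - z q.2‖ ^ p := by
  have hp0 : (0:ℝ) < p := lt_of_lt_of_le one_pos hp
  have hb : ∀ q : ℤ × ℤ, ‖((c q.1 q.2 ^ (1/p) : ℝ) : ℂ) * d q‖ ^ p
      ≤ K ^ p * (c q.1 q.2 * ‖z q.1 - z q.2‖ ^ p) := by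
    intro q
    rw [norm_w_mul (hnonneg _ _) hp0]
    have hle : ‖d q‖ ^ p ≤ K ^ p * ‖z q.1 - z q.2‖ ^ p := by
      rw [← Real.mul_rpow hK (norm_nonneg _)]
      exact Real.rpow_le_rpow (norm_nonneg _) (hd q) hp0.le
    have := mul_le_mul_of_nonneg_left hle (hnonneg q.1 q.2)
    nlinarith
  have hS : Summable (fun q : ℤ × ℤ => ‖((c q.1 q.2 ^ (1/p) : ℝ) : ℂ) * d q‖ ^ p) :=
    Summable.of_nonneg_of_le (fun q => Real.rpow_nonneg (norm_nonneg _) _) hb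
      (hsum.mul_left (K ^ p))
  refine ⟨hS, ?_⟩
  calc (∑' q : ℤ × ℤ, ‖((c q.1 q.2 ^ (1/p) : ℝ) : ℂ) * d q‖ ^ p)
      ≤ ∑' q : ℤ × ℤ, K ^ p * (c q.1 q.2 * ‖z q.1 - z q.2‖ ^ p) :=
        Summable.tsum_le_tsum hb hS (hsum.mul_left (K ^ p))
    _ = K ^ p * ∑' q : ℤ × ℤ, c q.1 q.2 * ‖z q.1 - z q.2‖ ^ p :=
        tsum_mul_left

/-- The Besov–Dirichlet `p`-norm of a sequence on `ℤ`. -/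
noncomputable def BDnorm (c : ℤ → ℤ → ℝ) (p : ℝ) (x : ℤ → ℂ) : ℝ :=
  (∑' q : ℤ × ℤ, c q.1 q.2 * ‖x q.1 - x q.2‖ ^ p) ^ (1 / p)

/-- If `λ` is a multiplier of `B₀^p(c_{j,k})` with `inf_j |λ_j| = δ > 0`, then `1/λ`
is also a multiplier, with `‖T_{1/λ}‖ ≤ δ⁻²(‖T_λ‖ + ‖λ‖_∞) + δ⁻¹`. -/
theorem stmt_4 (c : ℤ → ℤ → ℝ) (p : ℝ) (hp : 1 ≤ p)
    (hsymm : ∀ j k, c j k = c k j)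
    (hnonneg : ∀ j k, 0 ≤ c j k)
    (hdiag : ∀ j, c j j = 0)
    (hrow : ∀ n : ℤ, Summable fun j => c j n)
    (hns : ∀ A : Set ℤ, (∀ j ∈ A, ∀ k ∉ A, c j k = 0) → A = ∅ ∨ A = Set.univ)
    (hnorm : ∀ x : ℤ → ℂ, (Function.support x).Finite → BDnorm c p x = 0 → x = 0)
    (lam : ℤ → ℂ) (L T δ : ℝ)
    (hL : ∀ j, ‖lam j‖ ≤ L)
    (hT : 0 ≤ T)
    (hmult : ∀ x : ℤ → ℂ, (Function.support x).Finite →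
      BDnorm c p (fun j => lam j * x j) ≤ T * BDnorm c p x)
    (hδ : 0 < δ) (hδle : ∀ j, δ ≤ ‖lam j‖) :
    ∀ x : ℤ → ℂ, (Function.support x).Finite →
      BDnorm c p (fun j => x j / lam j) ≤ (δ⁻¹ ^ 2 * (T + L) + δ⁻¹) * BDnorm c p x := by
  intro x hx
  have hp0 : (0:ℝ) < p := lt_of_lt_of_le one_pos hp
  have hlam : ∀ j, lam j ≠ 0 := by
    intro j h
    have := hδle j
    rw [h, norm_zero] at this
    linarith
  have hδi : (0:ℝ) ≤ δ⁻¹ := inv_nonneg.mpr hδ.le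
  -- the multiplied sequence
  set z2 : ℤ → ℂ := fun j => lam j * x j with hz2def
  have hz2 : (Function.support z2).Finite := by
    apply hx.subset
    intro j hj
    simp only [Function.mem_support, hz2def] at hj ⊢
    intro h; apply hj; rw [h, mul_zero]
  -- the quotient sequence
  set y : ℤ → ℂ := fun j => x j / lam j with hydef
  have hy : (Function.support y).Finite := by
    apply hx.subset
    intro j hj
    simp only [Function.mem_support, hydef] at hj ⊢
    intro h; apply hj; rw [h, zero_div]
  -- summability of the three basic series
  have hsx := key_summable c p hp hsymm hnonneg hrow x hx
  have hsz2 := key_summable c p hp hsymm hnonneg hrow z2 hz2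
  -- the three pieces
  set d1 : ℤ × ℤ → ℂ := fun q => (x q.1 - x q.2) / lam q.1 with hd1def
  set d2 : ℤ × ℤ → ℂ :=
    fun q => (lam q.2 * x q.2 - lam q.1 * x q.1) / (lam q.1 * lam q.2) with hd2def
  set d3 : ℤ × ℤ → ℂ := fun q => (x q.1 - x q.2) / lam q.2 with hd3def
  have hd1 : ∀ q : ℤ × ℤ, ‖d1 q‖ ≤ δ⁻¹ * ‖x q.1 - x q.2‖ := by
    intro q
    rw [hd1def]
    simp only [norm_div]
    exact div_bound _ _ (norm_nonneg _) hδ (hδle q.1)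
  have hd3 : ∀ q : ℤ × ℤ, ‖d3 q‖ ≤ δ⁻¹ * ‖x q.1 - x q.2‖ := by
    intro q
    rw [hd3def]
    simp only [norm_div]
    exact div_bound _ _ (norm_nonneg _) hδ (hδle q.2)
  have hd2 : ∀ q : ℤ × ℤ, ‖d2 q‖ ≤ δ⁻¹ ^ 2 * ‖z2 q.1 - z2 q.2‖ := by
    intro q
    rw [hd2def]
    simp only [norm_div, norm_mul]
    have hnum : ‖lam q.2 * x q.2 - lam q.1 * x q.1‖
        = ‖z2 q.1 - z2 q.2‖ := by
      rw [hz2def]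
      exact norm_sub_rev _ _
    rw [hnum, ← div_div]
    calc ‖z2 q.1 - z2 q.2‖ / ‖lam q.1‖ / ‖lam q.2‖
        ≤ δ⁻¹ * (‖z2 q.1 - z2 q.2‖ / ‖lam q.1‖) := by
          exact div_bound _ _ (div_nonneg (norm_nonneg _) (norm_nonneg _)) hδ (hδle q.2)
      _ ≤ δ⁻¹ * (δ⁻¹ * ‖z2 q.1 - z2 q.2‖) := by
          apply mul_le_mul_of_nonneg_left _ hδi
          exact div_bound _ _ (norm_nonneg _) hδ (hδle q.1)
      _ = δ⁻¹ ^ 2 * ‖z2 q.1 - z2 q.2‖ := by ring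
  -- lp space setup
  set P : ENNReal := ENNReal.ofReal p with hPdef
  haveI : Fact (1 ≤ P) := ⟨by rw [hPdef]; exact ENNReal.one_le_ofReal.mpr hp⟩
  have hPt : P.toReal = p := ENNReal.toReal_ofReal hp0.le
  have hPt0 : 0 < P.toReal := by rw [hPt]; exact hp0
  have M1 := master_est c p hp hnonneg x δ⁻¹ hδi d1 hd1 hsx
  have M2 := master_est c p hp hnonneg z2 (δ⁻¹ ^ 2) (by positivity) d2 hd2 hsz2
  have M3 := master_est c p hp hnonneg x δ⁻¹ hδi d3 hd3 hsx
  have m1 : Memℓp (fun q => ((c q.1 q.2 ^ (1/p) : ℝ) : ℂ) * d1 q) P :=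
    memℓp_gen (by rw [hPt]; exact M1.1)
  have m2 : Memℓp (fun q => ((c q.1 q.2 ^ (1/p) : ℝ) : ℂ) * d2 q) P :=
    memℓp_gen (by rw [hPt]; exact M2.1)
  have m3 : Memℓp (fun q => ((c q.1 q.2 ^ (1/p) : ℝ) : ℂ) * d3 q) P :=
    memℓp_gen (by rw [hPt]; exact M3.1)
  set F1 : lp (fun _ : ℤ × ℤ => ℂ) P := ⟨_, m1⟩ with hF1def
  set F2 : lp (fun _ : ℤ × ℤ => ℂ) P := ⟨_, m2⟩ with hF2def
  set F3 : lp (fun _ : ℤ × ℤ => ℂ) P := ⟨_, m3⟩ with hF3def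
  -- generic norm estimate
  have key : ∀ (K : ℝ), 0 ≤ K → ∀ (z : ℤ → ℂ) (d : ℤ × ℤ → ℂ)
      (hm : Memℓp (fun q => ((c q.1 q.2 ^ (1/p) : ℝ) : ℂ) * d q) P),
      Summable (fun q : ℤ × ℤ => c q.1 q.2 * ‖z q.1 - z q.2‖ ^ p) →
      ((∑' q : ℤ × ℤ, ‖((c q.1 q.2 ^ (1/p) : ℝ) : ℂ) * d q‖ ^ p)
        ≤ K ^ p * ∑' q : ℤ × ℤ, c q.1 q.2 * ‖z q.1 - z q.2‖ ^ p) →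
      ‖(⟨_, hm⟩ : lp (fun _ : ℤ × ℤ => ℂ) P)‖ ≤ K * BDnorm c p z := by
    intro K hK z d hm hs2 hest
    rw [lp.norm_eq_tsum_rpow hPt0, BDnorm]
    simp only [hPt]
    have hcoe : ∀ q : ℤ × ℤ, (⟨_, hm⟩ : lp (fun _ : ℤ × ℤ => ℂ) P) q
        = ((c q.1 q.2 ^ (1/p) : ℝ) : ℂ) * d q := fun q => rfl
    have hts : 0 ≤ ∑' q : ℤ × ℤ, c q.1 q.2 * ‖z q.1 - z q.2‖ ^ p :=
      tsum_nonneg fun q => mul_nonneg (hnonneg _ _)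
        (Real.rpow_nonneg (norm_nonneg _) _)
    calc (∑' q : ℤ × ℤ, ‖((c q.1 q.2 ^ (1/p) : ℝ) : ℂ) * d q‖ ^ p) ^ (1/p)
        ≤ (K ^ p * ∑' q : ℤ × ℤ, c q.1 q.2 * ‖z q.1 - z q.2‖ ^ p) ^ (1/p) :=
          Real.rpow_le_rpow
            (tsum_nonneg fun q => Real.rpow_nonneg (norm_nonneg _) _) hest (by positivity)
      _ = K * (∑' q : ℤ × ℤ, c q.1 q.2 * ‖z q.1 - z q.2‖ ^ p) ^ (1/p) := by
          rw [Real.mul_rpow (Real.rpow_nonneg hK _) hts, ← Real.rpow_mul hK,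
            mul_one_div_cancel (ne_of_gt hp0), Real.rpow_one]
  have hn1 : ‖F1‖ ≤ δ⁻¹ * BDnorm c p x := key δ⁻¹ hδi x d1 m1 hsx M1.2
  have hn3 : ‖F3‖ ≤ δ⁻¹ * BDnorm c p x := key δ⁻¹ hδi x d3 m3 hsx M3.2
  have hz2n : BDnorm c p z2 ≤ T * BDnorm c p x := hmult x hx
  have hn2 : ‖F2‖ ≤ δ⁻¹ ^ 2 * (T * BDnorm c p x) := by
    refine le_trans (key (δ⁻¹ ^ 2) (by positivity) z2 d2 m2 hsz2 M2.2) ?_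
    exact mul_le_mul_of_nonneg_left hz2n (by positivity)
  -- identify BDnorm of y with the lp norm of the sum
  have hyeq : BDnorm c p y = ‖F1 + F2 + F3‖ := by
    rw [lp.norm_eq_tsum_rpow hPt0, BDnorm]
    simp only [hPt]
    congr 1
    apply tsum_congr
    intro q
    have h12 : (F1 + F2 + F3) q = F1 q + F2 q + F3 q := by
      rw [lp.coeFn_add, lp.coeFn_add]; rfl
    have hq : (F1 + F2 + F3) q
        = ((c q.1 q.2 ^ (1/p) : ℝ) : ℂ) * (y q.1 - y q.2) := by
      rw [h12]
      show ((c q.1 q.2 ^ (1/p) : ℝ) : ℂ) * d1 q + ((c q.1 q.2 ^ (1/p) : ℝ) : ℂ) * d2 q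
          + ((c q.1 q.2 ^ (1/p) : ℝ) : ℂ) * d3 q
          = ((c q.1 q.2 ^ (1/p) : ℝ) : ℂ) * (y q.1 - y q.2)
      rw [hd1def, hd2def, hd3def, hydef]
      have h1 := hlam q.1
      have h2 := hlam q.2
      field_simp
      ring
    rw [hq, norm_w_mul (hnonneg _ _) hp0]
  -- final assembly
  have htri : ‖F1 + F2 + F3‖ ≤ ‖F1‖ + ‖F2‖ + ‖F3‖ :=
    le_trans (norm_add_le _ _) (by linarith [norm_add_le F1 F2])
  have hNx : 0 ≤ BDnorm c p x :=
    Real.rpow_nonneg (tsum_nonneg fun q => mul_nonneg (hnonneg _ _)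
      (Real.rpow_nonneg (norm_nonneg _) _)) _
  have hδL : δ ≤ L := le_trans (hδle 0) (hL 0)
  have hkey : δ⁻¹ ≤ δ⁻¹ ^ 2 * L := by
    have h1 : δ⁻¹ ^ 2 * δ = δ⁻¹ := by
      field_simp
    nlinarith [sq_nonneg δ⁻¹]
  have hexp : (δ⁻¹ ^ 2 * (T + L) + δ⁻¹) * BDnorm c p x
      = δ⁻¹ ^ 2 * (T * BDnorm c p x) + δ⁻¹ ^ 2 * L * BDnorm c p x + δ⁻¹ * BDnorm c p x := by
    ring
  have hLx := mul_le_mul_of_nonneg_right hkey hNx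
  rw [hyeq, hexp]
  linarith
end

section
/- Let C = (c_{j,k}) satisfy the standing assumptions and 1 ≤ p < ∞. A bounded sequence λ = (λ_j) is a multiplier of B₀^p(c_{j,k}) if and only if there is a constant C' > 0 such that Σ_k |x_k|^p μ_k^p ≤ C'^p ‖x‖_{B^p}^p for all x ∈ S₀, where μ_k^p = Σ_j c_{j,k} |λ_j − λ_k|^p. Moreover, if C(λ) is the best such constant, then C(λ) − ‖λ‖_∞ ≤ ‖T_λ‖ ≤ C(λ) + ‖λ‖_∞. -/
/-- `μ_k^p = Σ_j c_{j,k}|λ_j − λ_k|^p`. -/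
noncomputable def muP (c : ℤ → ℤ → ℝ) (p : ℝ) (lam : ℤ → ℂ) (k : ℤ) : ℝ :=
  ∑' j : ℤ, c j k * ‖lam j - lam k‖ ^ p

open MeasureTheory Function
open scoped ENNReal NNReal

/-- real tsum of nonneg function as toReal of ENNReal tsum -/
lemma tsum_nonneg_toReal {ι : Type*} (g : ι → ℝ) (hg : ∀ i, 0 ≤ g i) :
    ∑' i, g i = (∑' i, ENNReal.ofReal (g i)).toReal := by
  by_cases h : Summable g
  · rw [← ENNReal.ofReal_tsum_of_nonneg hg h, ENNReal.toReal_ofReal (tsum_nonneg hg)]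
  · rw [tsum_eq_zero_of_not_summable h]
    rcases eq_or_ne (∑' i, ENNReal.ofReal (g i)) ⊤ with ht | ht
    · rw [ht]; simp
    · exact absurd ((ENNReal.summable_toReal ht).congr
        (fun i => ENNReal.toReal_ofReal (hg i))) h

/-- Minkowski inequality for weighted tsums over ℤ×ℤ, in ℝ≥0∞. -/
lemma mink {p : ℝ} (hp : 1 ≤ p) (w : ℤ × ℤ → ℝ≥0∞) (f g : ℤ × ℤ → ℂ) :
    (∑' q, w q * (‖f q + g q‖₊ : ℝ≥0∞) ^ p) ^ (1/p) ≤
      (∑' q, w q * (‖f q‖₊ : ℝ≥0∞) ^ p) ^ (1/p) +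
      (∑' q, w q * (‖g q‖₊ : ℝ≥0∞) ^ p) ^ (1/p) := by
  have hp0 : (0:ℝ) ≤ p := le_trans zero_le_one hp
  have hpne : p ≠ 0 := by linarith
  set F : ℤ × ℤ → ℝ≥0∞ := fun q => w q ^ (1/p) * (‖f q‖₊ : ℝ≥0∞)
  set G : ℤ × ℤ → ℝ≥0∞ := fun q => w q ^ (1/p) * (‖g q‖₊ : ℝ≥0∞)
  have hpow : ∀ (a : ℝ≥0∞) (q : ℤ × ℤ), (w q ^ (1/p) * a) ^ p = w q * a ^ p := by
    intro a q
    rw [ENNReal.mul_rpow_of_nonneg _ _ hp0, ← ENNReal.rpow_mul,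
      one_div_mul_cancel hpne, ENNReal.rpow_one]
  have key := ENNReal.lintegral_Lp_add_le (μ := Measure.count)
    (measurable_of_countable F).aemeasurable (measurable_of_countable G).aemeasurable hp
  rw [lintegral_count, lintegral_count, lintegral_count] at key
  have hF : ∀ q, F q ^ p = w q * (‖f q‖₊ : ℝ≥0∞) ^ p := fun q => hpow _ q
  have hG : ∀ q, G q ^ p = w q * (‖g q‖₊ : ℝ≥0∞) ^ p := fun q => hpow _ q
  calc (∑' q, w q * (‖f q + g q‖₊ : ℝ≥0∞) ^ p) ^ (1/p)
      ≤ (∑' q, (F + G) q ^ p) ^ (1/p) := by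
        apply ENNReal.rpow_le_rpow _ (by positivity)
        apply ENNReal.tsum_le_tsum
        intro q
        have h1 : (‖f q + g q‖₊ : ℝ≥0∞) ≤ (‖f q‖₊ : ℝ≥0∞) + (‖g q‖₊ : ℝ≥0∞) := by
          rw [← ENNReal.coe_add]; exact_mod_cast nnnorm_add_le _ _
        calc w q * (‖f q + g q‖₊ : ℝ≥0∞) ^ p
            ≤ w q * ((‖f q‖₊ : ℝ≥0∞) + (‖g q‖₊ : ℝ≥0∞)) ^ p := by
              gcongr
          _ = (F + G) q ^ p := by
              simp only [Pi.add_apply, F, G, ← mul_add, hpow]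
    _ ≤ (∑' q, F q ^ p) ^ (1/p) + (∑' q, G q ^ p) ^ (1/p) := key
    _ = _ := by simp only [hF, hG]

section
variable (c : ℤ → ℤ → ℝ) (p : ℝ)

lemma rowfin (hnonneg : ∀ j k, 0 ≤ c j k) (hrow : ∀ n : ℤ, Summable fun j => c j n)
    (n : ℤ) : ∑' j : ℤ, ENNReal.ofReal (c j n) ≠ ⊤ := by
  rw [← ENNReal.ofReal_tsum_of_nonneg (fun j => hnonneg j n) (hrow n)]
  exact ENNReal.ofReal_ne_top

lemma colfin (hsymm : ∀ j k, c j k = c k j) (hnonneg : ∀ j k, 0 ≤ c j k)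
    (hrow : ∀ n : ℤ, Summable fun j => c j n)
    (j : ℤ) : ∑' k : ℤ, ENNReal.ofReal (c j k) ≠ ⊤ := by
  have : (fun k => ENNReal.ofReal (c j k)) = fun k => ENNReal.ofReal (c k j) := by
    funext k; rw [hsymm]
  rw [this]; exact rowfin c hnonneg hrow j

lemma finN (hp : 0 < p) (hsymm : ∀ j k, c j k = c k j) (hnonneg : ∀ j k, 0 ≤ c j k)
    (hrow : ∀ n : ℤ, Summable fun j => c j n)
    (x : ℤ → ℂ) (hx : (Function.support x).Finite) :
    ∑' q : ℤ × ℤ, ENNReal.ofReal (c q.1 q.2) * (‖x q.1 - x q.2‖₊ : ℝ≥0∞) ^ p ≠ ⊤ := by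
  classical
  set s : Finset ℤ := hx.toFinset with hs
  set K : ℝ≥0∞ := ((2 : ℝ≥0∞) * (s.sup fun j => ‖x j‖₊ : ℝ≥0)) ^ p with hK
  have hKt : K ≠ ⊤ := by
    apply ENNReal.rpow_ne_top_of_nonneg hp.le
    exact ENNReal.mul_ne_top (by norm_num) ENNReal.coe_ne_top
  have hb : ∀ j : ℤ, (‖x j‖₊ : ℝ≥0∞) ≤ (s.sup fun j => ‖x j‖₊ : ℝ≥0) := by
    intro j
    by_cases hj : j ∈ s
    · exact ENNReal.coe_le_coe.mpr (Finset.le_sup (f := fun j => ‖x j‖₊) hj)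
    · have : x j = 0 := by
        by_contra h
        exact hj (hx.mem_toFinset.mpr h)
      simp [this]
  set u : ℤ × ℤ → ℝ≥0∞ := fun q => if q.1 ∈ s then ENNReal.ofReal (c q.1 q.2) * K else 0
  set v : ℤ × ℤ → ℝ≥0∞ := fun q => if q.2 ∈ s then ENNReal.ofReal (c q.1 q.2) * K else 0
  have hterm : ∀ q : ℤ × ℤ,
      ENNReal.ofReal (c q.1 q.2) * (‖x q.1 - x q.2‖₊ : ℝ≥0∞) ^ p ≤ u q + v q := by
    intro q
    by_cases h1 : q.1 ∈ s
    · refine le_trans ?_ (le_self_add : u q ≤ u q + v q)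
      have hu : u q = ENNReal.ofReal (c q.1 q.2) * K := if_pos h1
      rw [hu]
      gcongr
      rw [hK]
      apply ENNReal.rpow_le_rpow _ hp.le
      calc (‖x q.1 - x q.2‖₊ : ℝ≥0∞) ≤ (‖x q.1‖₊ : ℝ≥0∞) + (‖x q.2‖₊ : ℝ≥0∞) := by
            rw [← ENNReal.coe_add]; exact_mod_cast nnnorm_sub_le _ _
        _ ≤ (s.sup fun j => ‖x j‖₊ : ℝ≥0) + (s.sup fun j => ‖x j‖₊ : ℝ≥0) := by
            exact add_le_add (hb _) (hb _)
        _ = 2 * (s.sup fun j => ‖x j‖₊ : ℝ≥0) := (two_mul _).symm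
    · by_cases h2 : q.2 ∈ s
      · refine le_trans ?_ le_add_self
        have hv : v q = ENNReal.ofReal (c q.1 q.2) * K := if_pos h2
        rw [hv]
        gcongr
        rw [hK]
        apply ENNReal.rpow_le_rpow _ hp.le
        calc (‖x q.1 - x q.2‖₊ : ℝ≥0∞) ≤ (‖x q.1‖₊ : ℝ≥0∞) + (‖x q.2‖₊ : ℝ≥0∞) := by
              rw [← ENNReal.coe_add]; exact_mod_cast nnnorm_sub_le _ _
          _ ≤ _ := by rw [two_mul]; exact add_le_add (hb _) (hb _)
      · have hx1 : x q.1 = 0 := by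
          by_contra h; exact h1 (hx.mem_toFinset.mpr h)
        have hx2 : x q.2 = 0 := by
          by_contra h; exact h2 (hx.mem_toFinset.mpr h)
        simp [hx1, hx2, ENNReal.zero_rpow_of_pos hp]
  have husum : ∑' q : ℤ × ℤ, u q ≠ ⊤ := by
    rw [ENNReal.tsum_prod']
    have hinner : ∀ j : ℤ, ∑' k : ℤ, u (j, k) =
        if j ∈ s then (∑' k : ℤ, ENNReal.ofReal (c j k)) * K else 0 := by
      intro j
      by_cases hj : j ∈ s
      · simp only [u, hj, if_true, ENNReal.tsum_mul_right]
      · simp [u, hj]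
    rw [tsum_congr hinner, tsum_eq_sum (s := s) (by intro b hb'; simp [hb'])]
    refine (lt_of_le_of_lt (Finset.sum_le_sum (fun j _ => le_of_eq rfl)) ?_).ne
    apply ENNReal.sum_lt_top.mpr
    intro j hj
    simp only [hj, if_true]
    exact ENNReal.mul_lt_top (colfin c hsymm hnonneg hrow j).lt_top hKt.lt_top
  have hvsum : ∑' q : ℤ × ℤ, v q ≠ ⊤ := by
    rw [ENNReal.tsum_prod', ENNReal.tsum_comm]
    have hinner : ∀ k : ℤ, ∑' j : ℤ, v (j, k) =
        if k ∈ s then (∑' j : ℤ, ENNReal.ofReal (c j k)) * K else 0 := by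
      intro k
      by_cases hk : k ∈ s
      · simp only [v, hk, if_true, ENNReal.tsum_mul_right]
      · simp [v, hk]
    rw [tsum_congr hinner, tsum_eq_sum (s := s) (by intro b hb'; simp [hb'])]
    refine (lt_of_le_of_lt le_rfl ?_).ne
    apply ENNReal.sum_lt_top.mpr
    intro k hk
    simp only [hk, if_true]
    exact ENNReal.mul_lt_top (rowfin c hnonneg hrow k).lt_top hKt.lt_top
  refine ne_top_of_le_ne_top ?_ (ENNReal.tsum_le_tsum hterm)
  rw [ENNReal.tsum_add]
  exact ENNReal.add_ne_top.mpr ⟨husum, hvsum⟩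

end


section main
variable (c : ℤ → ℤ → ℝ) (p : ℝ) (lam : ℤ → ℂ)

noncomputable def NP (x : ℤ → ℂ) : ℝ≥0∞ :=
  ∑' q : ℤ × ℤ, ENNReal.ofReal (c q.1 q.2) * (‖x q.1 - x q.2‖₊ : ℝ≥0∞) ^ p

noncomputable def Mk (k : ℤ) : ℝ≥0∞ :=
  ∑' j : ℤ, ENNReal.ofReal (c j k) * (‖lam j - lam k‖₊ : ℝ≥0∞) ^ p

noncomputable def DP (x : ℤ → ℂ) : ℝ≥0∞ :=
  ∑' q : ℤ × ℤ, ENNReal.ofReal (c q.1 q.2) *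
    ((‖lam q.1 - lam q.2‖₊ : ℝ≥0∞) ^ p * (‖x q.2‖₊ : ℝ≥0∞) ^ p)

variable {c p lam}

lemma term_match (hp : 0 < p) (hnonneg : ∀ j k, 0 ≤ c j k) (j k : ℤ) (z : ℂ) :
    ENNReal.ofReal (c j k * ‖z‖ ^ p) =
      ENNReal.ofReal (c j k) * (‖z‖₊ : ℝ≥0∞) ^ p := by
  rw [ENNReal.ofReal_mul (hnonneg j k), ← enorm_eq_nnnorm, ← ofReal_norm,
    ENNReal.ofReal_rpow_of_nonneg (norm_nonneg _) hp.le]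

lemma BD_eq (hp : 0 < p) (hnonneg : ∀ j k, 0 ≤ c j k) (x : ℤ → ℂ) :
    BDnorm c p x = (NP c p x ^ (1/p)).toReal := by
  unfold BDnorm NP
  rw [← ENNReal.toReal_rpow]
  congr 1
  rw [tsum_nonneg_toReal _ (fun q => mul_nonneg (hnonneg _ _)
    (Real.rpow_nonneg (norm_nonneg _) p))]
  congr 1
  exact tsum_congr fun q => term_match hp hnonneg q.1 q.2 _

lemma muP_eq (hp : 0 < p) (hnonneg : ∀ j k, 0 ≤ c j k) (k : ℤ) :
    muP c p lam k = (Mk c p lam k).toReal := by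
  unfold muP Mk
  rw [tsum_nonneg_toReal _ (fun j => mul_nonneg (hnonneg _ _)
    (Real.rpow_nonneg (norm_nonneg _) p))]
  congr 1
  exact tsum_congr fun j => term_match hp hnonneg j k _

lemma Mk_ne_top (hp : 0 < p) (hnonneg : ∀ j k, 0 ≤ c j k)
    (hrow : ∀ n : ℤ, Summable fun j => c j n) {L : ℝ}
    (hlam : ∀ j, ‖lam j‖ ≤ L) (k : ℤ) : Mk c p lam k ≠ ⊤ := by
  have hb : ∀ j, (‖lam j - lam k‖₊ : ℝ≥0∞) ^ p ≤ (ENNReal.ofReal (2*L)) ^ p := by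
    intro j
    apply ENNReal.rpow_le_rpow _ hp.le
    rw [← enorm_eq_nnnorm, ← ofReal_norm]
    apply ENNReal.ofReal_le_ofReal
    calc ‖lam j - lam k‖ ≤ ‖lam j‖ + ‖lam k‖ := norm_sub_le _ _
      _ ≤ L + L := by
          exact add_le_add (hlam j) (hlam k)
      _ = 2*L := by ring
  have hle : Mk c p lam k ≤ ∑' j : ℤ, ENNReal.ofReal (c j k) * ENNReal.ofReal (2*L) ^ p := by
    unfold Mk
    exact ENNReal.tsum_le_tsum fun j => mul_le_mul_right (hb j) _
  refine ne_top_of_le_ne_top ?_ hle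
  rw [ENNReal.tsum_mul_right]
  exact ENNReal.mul_ne_top (rowfin c hnonneg hrow k)
    (ENNReal.rpow_ne_top_of_nonneg hp.le ENNReal.ofReal_ne_top)

lemma dsum_eq (hp : 0 < p) (hnonneg : ∀ j k, 0 ≤ c j k)
    (hrow : ∀ n : ℤ, Summable fun j => c j n) {L : ℝ}
    (hlam : ∀ j, ‖lam j‖ ≤ L) (x : ℤ → ℂ) :
    ∑' k : ℤ, ‖x k‖ ^ p * muP c p lam k = (DP c p lam x).toReal := by
  have h1 : ∀ k : ℤ, ‖x k‖ ^ p * muP c p lam k =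
      ((‖x k‖₊ : ℝ≥0∞) ^ p * Mk c p lam k).toReal := by
    intro k
    rw [muP_eq hp hnonneg, ENNReal.toReal_mul, ← ENNReal.toReal_rpow,
      ENNReal.coe_toReal, coe_nnnorm]
  rw [tsum_congr h1, ← ENNReal.tsum_toReal_eq (fun k =>
    ENNReal.mul_ne_top (ENNReal.rpow_ne_top_of_nonneg hp.le ENNReal.coe_ne_top)
      (Mk_ne_top hp hnonneg hrow hlam k))]
  congr 1
  unfold DP Mk
  rw [ENNReal.tsum_prod', ENNReal.tsum_comm]
  refine tsum_congr fun k => ?_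
  rw [← ENNReal.tsum_mul_left]
  exact tsum_congr fun j => by ring

end main
section ineqs
variable {c : ℤ → ℤ → ℝ} {p : ℝ} {lam : ℤ → ℂ}

lemma Abound (hp1 : 1 ≤ p) {L : ℝ} (hlam : ∀ j, ‖lam j‖ ≤ L) (x : ℤ → ℂ) :
    (∑' q : ℤ × ℤ, ENNReal.ofReal (c q.1 q.2) *
      (‖lam q.1 * (x q.1 - x q.2)‖₊ : ℝ≥0∞) ^ p) ^ (1/p) ≤
    ENNReal.ofReal L * NP c p x ^ (1/p) := by
  have hp0 : 0 < p := lt_of_lt_of_le zero_lt_one hp1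
  unfold NP
  have h1 : ∀ q : ℤ × ℤ, ENNReal.ofReal (c q.1 q.2) *
      (‖lam q.1 * (x q.1 - x q.2)‖₊ : ℝ≥0∞) ^ p ≤
      ENNReal.ofReal L ^ p *
        (ENNReal.ofReal (c q.1 q.2) * (‖x q.1 - x q.2‖₊ : ℝ≥0∞) ^ p) := by
    intro q
    have h2 : (‖lam q.1 * (x q.1 - x q.2)‖₊ : ℝ≥0∞) ^ p ≤
        ENNReal.ofReal L ^ p * (‖x q.1 - x q.2‖₊ : ℝ≥0∞) ^ p := by
      rw [← ENNReal.mul_rpow_of_nonneg _ _ hp0.le]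
      apply ENNReal.rpow_le_rpow _ hp0.le
      rw [nnnorm_mul, ENNReal.coe_mul]
      gcongr
      rw [← enorm_eq_nnnorm, ← ofReal_norm]
      exact ENNReal.ofReal_le_ofReal (hlam q.1)
    calc ENNReal.ofReal (c q.1 q.2) * (‖lam q.1 * (x q.1 - x q.2)‖₊ : ℝ≥0∞) ^ p
        ≤ ENNReal.ofReal (c q.1 q.2) *
          (ENNReal.ofReal L ^ p * (‖x q.1 - x q.2‖₊ : ℝ≥0∞) ^ p) := by gcongr
      _ = _ := by ring
  calc (∑' q : ℤ × ℤ, ENNReal.ofReal (c q.1 q.2) *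
        (‖lam q.1 * (x q.1 - x q.2)‖₊ : ℝ≥0∞) ^ p) ^ (1/p)
      ≤ (∑' q : ℤ × ℤ, ENNReal.ofReal L ^ p *
          (ENNReal.ofReal (c q.1 q.2) * (‖x q.1 - x q.2‖₊ : ℝ≥0∞) ^ p)) ^ (1/p) :=
        ENNReal.rpow_le_rpow (ENNReal.tsum_le_tsum h1) (by positivity)
    _ = _ := by
        rw [ENNReal.tsum_mul_left, ENNReal.mul_rpow_of_nonneg _ _ (by positivity),
          ← ENNReal.rpow_mul, mul_one_div_cancel hp0.ne', ENNReal.rpow_one]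

lemma DP_eq_g (hp1 : 1 ≤ p) (x : ℤ → ℂ) :
    DP c p lam x = ∑' q : ℤ × ℤ, ENNReal.ofReal (c q.1 q.2) *
      (‖(lam q.1 - lam q.2) * x q.2‖₊ : ℝ≥0∞) ^ p := by
  have hp0 : (0:ℝ) ≤ p := le_trans zero_le_one hp1
  unfold DP
  refine tsum_congr fun q => ?_
  rw [nnnorm_mul, ENNReal.coe_mul, ENNReal.mul_rpow_of_nonneg _ _ hp0]

lemma ineq1 (hp1 : 1 ≤ p) {L : ℝ} (hlam : ∀ j, ‖lam j‖ ≤ L) (x : ℤ → ℂ) :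
    NP c p (fun j => lam j * x j) ^ (1/p) ≤
      ENNReal.ofReal L * NP c p x ^ (1/p) + DP c p lam x ^ (1/p) := by
  have key := mink hp1 (fun q => ENNReal.ofReal (c q.1 q.2))
      (fun q => lam q.1 * (x q.1 - x q.2)) (fun q => (lam q.1 - lam q.2) * x q.2)
  have hid : NP c p (fun j => lam j * x j) =
      ∑' q : ℤ × ℤ, ENNReal.ofReal (c q.1 q.2) *
        (‖lam q.1 * (x q.1 - x q.2) + (lam q.1 - lam q.2) * x q.2‖₊ : ℝ≥0∞) ^ p := by
    unfold NP
    refine tsum_congr fun q => ?_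
    congr 2
    ring
  rw [hid, DP_eq_g hp1]
  exact le_trans key (by gcongr; exact Abound hp1 hlam x)

lemma ineq2 (hp1 : 1 ≤ p) {L : ℝ} (hlam : ∀ j, ‖lam j‖ ≤ L) (x : ℤ → ℂ) :
    DP c p lam x ^ (1/p) ≤
      NP c p (fun j => lam j * x j) ^ (1/p) + ENNReal.ofReal L * NP c p x ^ (1/p) := by
  have key := mink hp1 (fun q => ENNReal.ofReal (c q.1 q.2))
      (fun q => lam q.1 * x q.1 - lam q.2 * x q.2)
      (fun q => -(lam q.1 * (x q.1 - x q.2)))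
  have hid : DP c p lam x = ∑' q : ℤ × ℤ, ENNReal.ofReal (c q.1 q.2) *
      (‖(lam q.1 * x q.1 - lam q.2 * x q.2) + -(lam q.1 * (x q.1 - x q.2))‖₊ : ℝ≥0∞) ^ p := by
    rw [DP_eq_g hp1]
    refine tsum_congr fun q => ?_
    congr 2
    ring
  have hneg : (∑' q : ℤ × ℤ, ENNReal.ofReal (c q.1 q.2) *
      (‖-(lam q.1 * (x q.1 - x q.2))‖₊ : ℝ≥0∞) ^ p) ^ (1/p) ≤
      ENNReal.ofReal L * NP c p x ^ (1/p) := by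
    have : ∀ q : ℤ × ℤ, (‖-(lam q.1 * (x q.1 - x q.2))‖₊ : ℝ≥0∞) =
        (‖lam q.1 * (x q.1 - x q.2)‖₊ : ℝ≥0∞) := by
      intro q; rw [nnnorm_neg]
    simp only [this]
    exact Abound hp1 hlam x
  have hNP : (∑' q : ℤ × ℤ, ENNReal.ofReal (c q.1 q.2) *
      (‖lam q.1 * x q.1 - lam q.2 * x q.2‖₊ : ℝ≥0∞) ^ p) ^ (1/p) =
      NP c p (fun j => lam j * x j) ^ (1/p) := by rw [NP]
  rw [hid]
  exact le_trans key (by rw [hNP]; gcongr)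

end ineqs
section realside
variable {c : ℤ → ℤ → ℝ} {p : ℝ} {lam : ℤ → ℂ} {L : ℝ}

lemma NP_ne_top (hp : 0 < p) (hsymm : ∀ j k, c j k = c k j) (hnonneg : ∀ j k, 0 ≤ c j k)
    (hrow : ∀ n : ℤ, Summable fun j => c j n)
    (x : ℤ → ℂ) (hx : (Function.support x).Finite) : NP c p x ≠ ⊤ := by
  unfold NP
  exact finN c p hp hsymm hnonneg hrow x hx

lemma supp_mul (x : ℤ → ℂ) :
    Function.support (fun j => lam j * x j) ⊆ Function.support x := by
  intro j hj
  simp only [Function.mem_support] at *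
  exact fun h => hj (by rw [h, mul_zero])

lemma DP_ne_top (hp1 : 1 ≤ p) (hsymm : ∀ j k, c j k = c k j) (hnonneg : ∀ j k, 0 ≤ c j k)
    (hrow : ∀ n : ℤ, Summable fun j => c j n)
    (hlam : ∀ j, ‖lam j‖ ≤ L)
    (x : ℤ → ℂ) (hx : (Function.support x).Finite) : DP c p lam x ≠ ⊤ := by
  have hp0 : 0 < p := lt_of_lt_of_le zero_lt_one hp1
  have hfin : NP c p (fun j => lam j * x j) ^ (1/p) +
      ENNReal.ofReal L * NP c p x ^ (1/p) ≠ ⊤ := by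
    apply ENNReal.add_ne_top.mpr
    constructor
    · exact ENNReal.rpow_ne_top_of_nonneg (by positivity)
        (NP_ne_top hp0 hsymm hnonneg hrow _ (hx.subset (supp_mul x)))
    · exact ENNReal.mul_ne_top ENNReal.ofReal_ne_top
        (ENNReal.rpow_ne_top_of_nonneg (by positivity) (NP_ne_top hp0 hsymm hnonneg hrow x hx))
  have hroot : DP c p lam x ^ (1/p) ≠ ⊤ := ne_top_of_le_ne_top hfin (ineq2 hp1 hlam x)
  have hDP : DP c p lam x = (DP c p lam x ^ (1/p)) ^ p := by
    rw [← ENNReal.rpow_mul, one_div_mul_cancel hp0.ne', ENNReal.rpow_one]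
  rw [hDP]
  exact ENNReal.rpow_ne_top_of_nonneg hp0.le hroot

lemma K1 (hp1 : 1 ≤ p) (hsymm : ∀ j k, c j k = c k j) (hnonneg : ∀ j k, 0 ≤ c j k)
    (hrow : ∀ n : ℤ, Summable fun j => c j n)
    (hlam : ∀ j, ‖lam j‖ ≤ L)
    (x : ℤ → ℂ) (hx : (Function.support x).Finite) :
    BDnorm c p (fun j => lam j * x j) ≤
      L * BDnorm c p x + (∑' k : ℤ, ‖x k‖ ^ p * muP c p lam k) ^ (1/p) := by
  have hp0 : 0 < p := lt_of_lt_of_le zero_lt_one hp1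
  have hL0 : 0 ≤ L := le_trans (norm_nonneg _) (hlam 0)
  have hNx := NP_ne_top (c := c) hp0 hsymm hnonneg hrow x hx
  have hNlx := NP_ne_top (c := c) hp0 hsymm hnonneg hrow _ (hx.subset (supp_mul (lam := lam) x))
  have hD := DP_ne_top hp1 hsymm hnonneg hrow hlam x hx
  rw [BD_eq hp0 hnonneg, BD_eq hp0 hnonneg, dsum_eq hp0 hnonneg hrow hlam,
    ENNReal.toReal_rpow]
  have hL' : L = (ENNReal.ofReal L).toReal := (ENNReal.toReal_ofReal hL0).symm
  rw [hL', ← ENNReal.toReal_mul,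
    ← ENNReal.toReal_add
      (ENNReal.mul_ne_top ENNReal.ofReal_ne_top
        (ENNReal.rpow_ne_top_of_nonneg (by positivity) hNx))
      (ENNReal.rpow_ne_top_of_nonneg (by positivity) hD)]
  exact ENNReal.toReal_mono
    (ENNReal.add_ne_top.mpr ⟨ENNReal.mul_ne_top ENNReal.ofReal_ne_top
        (ENNReal.rpow_ne_top_of_nonneg (by positivity) hNx),
      ENNReal.rpow_ne_top_of_nonneg (by positivity) hD⟩)
    (ineq1 hp1 hlam x)

lemma K2 (hp1 : 1 ≤ p) (hsymm : ∀ j k, c j k = c k j) (hnonneg : ∀ j k, 0 ≤ c j k)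
    (hrow : ∀ n : ℤ, Summable fun j => c j n)
    (hlam : ∀ j, ‖lam j‖ ≤ L)
    (x : ℤ → ℂ) (hx : (Function.support x).Finite) :
    (∑' k : ℤ, ‖x k‖ ^ p * muP c p lam k) ^ (1/p) ≤
      BDnorm c p (fun j => lam j * x j) + L * BDnorm c p x := by
  have hp0 : 0 < p := lt_of_lt_of_le zero_lt_one hp1
  have hL0 : 0 ≤ L := le_trans (norm_nonneg _) (hlam 0)
  have hNx := NP_ne_top (c := c) hp0 hsymm hnonneg hrow x hx
  have hNlx := NP_ne_top (c := c) hp0 hsymm hnonneg hrow _ (hx.subset (supp_mul (lam := lam) x))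
  rw [BD_eq hp0 hnonneg, BD_eq hp0 hnonneg, dsum_eq hp0 hnonneg hrow hlam,
    ENNReal.toReal_rpow]
  have hL' : L = (ENNReal.ofReal L).toReal := (ENNReal.toReal_ofReal hL0).symm
  rw [hL', ← ENNReal.toReal_mul,
    ← ENNReal.toReal_add (ENNReal.rpow_ne_top_of_nonneg (by positivity) hNlx)
      (ENNReal.mul_ne_top ENNReal.ofReal_ne_top
        (ENNReal.rpow_ne_top_of_nonneg (by positivity) hNx))]
  exact ENNReal.toReal_mono
    (ENNReal.add_ne_top.mpr ⟨ENNReal.rpow_ne_top_of_nonneg (by positivity) hNlx,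
      ENNReal.mul_ne_top ENNReal.ofReal_ne_top
        (ENNReal.rpow_ne_top_of_nonneg (by positivity) hNx)⟩)
    (ineq2 hp1 hlam x)

lemma root_le {a b : ℝ} (hp0 : 0 < p) (ha : 0 ≤ a) (hb : 0 ≤ b) (h : a ≤ b ^ p) :
    a ^ (1/p) ≤ b := by
  calc a ^ (1/p) ≤ (b ^ p) ^ (1/p) := Real.rpow_le_rpow ha h (by positivity)
    _ = b := by rw [← Real.rpow_mul hb, mul_one_div_cancel hp0.ne', Real.rpow_one]

lemma le_pow {a b : ℝ} (hp0 : 0 < p) (ha : 0 ≤ a) (h : a ^ (1/p) ≤ b) : a ≤ b ^ p := by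
  calc a = (a ^ (1/p)) ^ p := by
        rw [← Real.rpow_mul ha, one_div_mul_cancel hp0.ne', Real.rpow_one]
    _ ≤ b ^ p := Real.rpow_le_rpow (Real.rpow_nonneg ha _) h hp0.le

lemma BD_nonneg (hnonneg : ∀ j k, 0 ≤ c j k) (x : ℤ → ℂ) : 0 ≤ BDnorm c p x :=
  Real.rpow_nonneg (tsum_nonneg fun q => mul_nonneg (hnonneg _ _)
    (Real.rpow_nonneg (norm_nonneg _) _)) _

lemma dsum_nonneg (hnonneg : ∀ j k, 0 ≤ c j k) (x : ℤ → ℂ) :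
    0 ≤ ∑' k : ℤ, ‖x k‖ ^ p * muP c p lam k :=
  tsum_nonneg fun k => mul_nonneg (Real.rpow_nonneg (norm_nonneg _) _)
    (tsum_nonneg fun j => mul_nonneg (hnonneg _ _)
      (Real.rpow_nonneg (norm_nonneg _) _))

end realside

/-- A bounded sequence `λ` is a multiplier of `B₀^p(c_{j,k})` iff the embedding
inequality `Σ_k |x_k|^p μ_k^p ≤ C'^p ‖x‖^p` holds on `S₀`; moreover the best constants
satisfy `C(λ) − ‖λ‖_∞ ≤ ‖T_λ‖ ≤ C(λ) + ‖λ‖_∞`. -/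
theorem stmt_5 (c : ℤ → ℤ → ℝ) (p : ℝ) (hp : 1 ≤ p)
    (hsymm : ∀ j k, c j k = c k j)
    (hnonneg : ∀ j k, 0 ≤ c j k)
    (hdiag : ∀ j, c j j = 0)
    (hrow : ∀ n : ℤ, Summable fun j => c j n)
    (hns : ∀ A : Set ℤ, (∀ j ∈ A, ∀ k ∉ A, c j k = 0) → A = ∅ ∨ A = Set.univ)
    (lam : ℤ → ℂ) (L : ℝ)
    (hL : IsLUB (Set.range fun j => ‖lam j‖) L) :
    ((∃ M : ℝ, 0 ≤ M ∧ ∀ x : ℤ → ℂ, (Function.support x).Finite →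
        BDnorm c p (fun j => lam j * x j) ≤ M * BDnorm c p x) ↔
      (∃ C' : ℝ, 0 < C' ∧ ∀ x : ℤ → ℂ, (Function.support x).Finite →
        ∑' k : ℤ, ‖x k‖ ^ p * muP c p lam k ≤ C' ^ p * (BDnorm c p x) ^ p))
    ∧ ∀ Tn Cb : ℝ,
        IsLeast {M : ℝ | 0 ≤ M ∧ ∀ x : ℤ → ℂ, (Function.support x).Finite →
          BDnorm c p (fun j => lam j * x j) ≤ M * BDnorm c p x} Tn →
        IsLeast {C' : ℝ | 0 ≤ C' ∧ ∀ x : ℤ → ℂ, (Function.support x).Finite →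
          ∑' k : ℤ, ‖x k‖ ^ p * muP c p lam k ≤ C' ^ p * (BDnorm c p x) ^ p} Cb →
        Cb - L ≤ Tn ∧ Tn ≤ Cb + L := by
  have hp0 : 0 < p := lt_of_lt_of_le zero_lt_one hp
  have hlam : ∀ j, ‖lam j‖ ≤ L := fun j => hL.1 ⟨j, rfl⟩
  have hL0 : 0 ≤ L := le_trans (norm_nonneg _) (hlam 0)
  have emb : ∀ a : ℝ, 0 ≤ a →
      (∀ x : ℤ → ℂ, (Function.support x).Finite →
        BDnorm c p (fun j => lam j * x j) ≤ a * BDnorm c p x) →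
      ∀ x : ℤ → ℂ, (Function.support x).Finite →
        ∑' k : ℤ, ‖x k‖ ^ p * muP c p lam k ≤
          (a + L) ^ p * (BDnorm c p x) ^ p := by
    intro a ha hmul x hx
    have hBD := BD_nonneg (p := p) hnonneg x
    have hroot : (∑' k : ℤ, ‖x k‖ ^ p * muP c p lam k) ^ (1/p) ≤
        (a + L) * BDnorm c p x := by
      calc (∑' k : ℤ, ‖x k‖ ^ p * muP c p lam k) ^ (1/p)
          ≤ BDnorm c p (fun j => lam j * x j) + L * BDnorm c p x :=
            K2 hp hsymm hnonneg hrow hlam x hx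
        _ ≤ a * BDnorm c p x + L * BDnorm c p x :=
            add_le_add_left (hmul x hx) _
        _ = (a + L) * BDnorm c p x := by ring
    have h := le_pow hp0 (dsum_nonneg hnonneg x) hroot
    rwa [Real.mul_rpow (by positivity) hBD] at h
  have mulb : ∀ a : ℝ, 0 ≤ a →
      (∀ x : ℤ → ℂ, (Function.support x).Finite →
        ∑' k : ℤ, ‖x k‖ ^ p * muP c p lam k ≤
          a ^ p * (BDnorm c p x) ^ p) →
      ∀ x : ℤ → ℂ, (Function.support x).Finite →
        BDnorm c p (fun j => lam j * x j) ≤ (a + L) * BDnorm c p x := by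
    intro a ha hembed x hx
    have hBD := BD_nonneg (p := p) hnonneg x
    have hroot : (∑' k : ℤ, ‖x k‖ ^ p * muP c p lam k) ^ (1/p) ≤
        a * BDnorm c p x := by
      apply root_le hp0 (dsum_nonneg hnonneg x) (mul_nonneg ha hBD)
      rw [Real.mul_rpow ha hBD]
      exact hembed x hx
    calc BDnorm c p (fun j => lam j * x j)
        ≤ L * BDnorm c p x +
            (∑' k : ℤ, ‖x k‖ ^ p * muP c p lam k) ^ (1/p) :=
          K1 hp hsymm hnonneg hrow hlam x hx
      _ ≤ L * BDnorm c p x + a * BDnorm c p x := add_le_add_right hroot _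
      _ = (a + L) * BDnorm c p x := by ring
  refine ⟨⟨?_, ?_⟩, ?_⟩
  · rintro ⟨M, hM0, hM⟩
    refine ⟨M + L + 1, by positivity, fun x hx => ?_⟩
    refine le_trans (emb M hM0 hM x hx) ?_
    apply mul_le_mul_of_nonneg_right
      (Real.rpow_le_rpow (by positivity) (by linarith) hp0.le)
      (Real.rpow_nonneg (BD_nonneg hnonneg x) p)
  · rintro ⟨C', hC0, hC⟩
    exact ⟨C' + L, by positivity, mulb C' hC0.le hC⟩
  · intro Tn Cb hT hC
    have h1 : Tn ≤ Cb + L := hT.2 ⟨add_nonneg hC.1.1 hL0, mulb Cb hC.1.1 hC.1.2⟩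
    have h2 : Cb ≤ Tn + L := hC.2 ⟨add_nonneg hT.1.1 hL0, emb Tn hT.1.1 hT.1.2⟩
    exact ⟨by linarith, h1⟩
end

section
/- Let C = (c_{j,k}) and C' = (c'_{j,k}) be two symmetric nonnegative non-splitting matrices on ℤ with zero diagonals and finite row sums. If Σ_{j,k} c_{j,k}|x_j − x_k|² = Σ_{j,k} c'_{j,k}|x_j − x_k|² for every finitely supported complex sequence x, then c_{j,k} = c'_{j,k} for all j, k. -/
open Finset in
/-- The quadratic form evaluated at the indicator of a finite set. -/
lemma key_indicator_sum (c : ℤ → ℤ → ℝ) (hsymm : ∀ j k, c j k = c k j)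
    (hnonneg : ∀ j k, 0 ≤ c j k) (hrow : ∀ n : ℤ, Summable fun j => c j n)
    (T : Finset ℤ) :
    ∑' q : ℤ × ℤ, c q.1 q.2 *
        ‖(if q.1 ∈ T then (1:ℂ) else 0) - (if q.2 ∈ T then (1:ℂ) else 0)‖ ^ 2
      = 2 * ∑ a ∈ T, ((∑' b, c a b) - ∑ b ∈ T, c a b) := by
  have hrow2 : ∀ a : ℤ, Summable fun b => c a b := fun a =>
    (hrow a).congr fun b => hsymm b a
  set F1 : ℤ × ℤ → ℝ := fun q => if q.1 ∈ T ∧ q.2 ∉ T then c q.1 q.2 else 0 with hF1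
  set F2 : ℤ × ℤ → ℝ := fun q => if q.1 ∉ T ∧ q.2 ∈ T then c q.1 q.2 else 0 with hF2
  have hF1nn : ∀ q, 0 ≤ F1 q := by
    intro q; simp only [hF1]; split
    · exact hnonneg _ _
    · exact le_rfl
  have hslice : ∀ a : ℤ, Summable fun b => F1 (a, b) := by
    intro a
    apply Summable.of_nonneg_of_le (fun b => hF1nn (a, b)) _ (hrow2 a)
    intro b; simp only [hF1]; split
    · exact le_rfl
    · exact hnonneg a b
  have houter0 : ∀ a : ℤ, a ∉ T → (∑' b, F1 (a, b)) = 0 := by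
    intro a ha
    have : ∀ b, F1 (a, b) = 0 := by
      intro b; simp only [hF1]
      rw [if_neg]; rintro ⟨h1, -⟩; exact ha h1
    simp [this]
  have houter : Summable fun a => ∑' b, F1 (a, b) :=
    summable_of_ne_finset_zero (s := T) fun a ha => houter0 a ha
  have hF1sum : Summable F1 :=
    (summable_prod_of_nonneg hF1nn).2 ⟨hslice, houter⟩
  have hF1val : ∑' q, F1 q = ∑ a ∈ T, ((∑' b, c a b) - ∑ b ∈ T, c a b) := by
    rw [Summable.tsum_prod' hF1sum hslice]
    rw [tsum_eq_sum (s := T) (fun a ha => houter0 a ha)]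
    apply Finset.sum_congr rfl
    intro a ha
    have h1 : ∀ b, F1 (a, b) = c a b - (if b ∈ T then c a b else 0) := by
      intro b; simp only [hF1]
      by_cases hb : b ∈ T <;> simp [hb, ha]
    have h2 : Summable fun b => (if b ∈ T then c a b else 0) :=
      summable_of_ne_finset_zero (s := T) fun b hb => if_neg hb
    calc ∑' b, F1 (a, b) = ∑' b, (c a b - (if b ∈ T then c a b else 0)) :=
          tsum_congr h1
      _ = (∑' b, c a b) - ∑' b, (if b ∈ T then c a b else 0) :=
          Summable.tsum_sub (hrow2 a) h2
      _ = (∑' b, c a b) - ∑ b ∈ T, c a b := by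
          rw [tsum_eq_sum (s := T) (fun b hb => if_neg hb)]
          simp
  have hF2eq : ∀ q : ℤ × ℤ, F2 q = F1 (q.2, q.1) := by
    rintro ⟨a, b⟩
    simp only [hF1, hF2, and_comm]
    split <;> [exact hsymm a b; rfl]
  have hF2sum : Summable F2 := by
    have : Summable (F1 ∘ (Equiv.prodComm ℤ ℤ)) :=
      ((Equiv.prodComm ℤ ℤ).summable_iff).2 hF1sum
    exact this.congr fun q => (hF2eq q).symm
  have hF2val : ∑' q, F2 q = ∑' q, F1 q := by
    rw [tsum_congr hF2eq]
    exact (Equiv.prodComm ℤ ℤ).tsum_eq F1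
  have hpt : ∀ q : ℤ × ℤ, c q.1 q.2 *
      ‖(if q.1 ∈ T then (1:ℂ) else 0) - (if q.2 ∈ T then (1:ℂ) else 0)‖ ^ 2
      = F1 q + F2 q := by
    rintro ⟨a, b⟩
    simp only [hF1, hF2]
    by_cases ha : a ∈ T <;> by_cases hb : b ∈ T <;> simp [ha, hb]
  rw [tsum_congr hpt, Summable.tsum_add hF1sum hF2sum, hF2val, hF1val]
  ring

/-- Uniqueness of the matrix defining a Besov–Dirichlet quadratic form. -/
theorem stmt_6 (c c' : ℤ → ℤ → ℝ)
    (hsymm : ∀ j k, c j k = c k j) (hsymm' : ∀ j k, c' j k = c' k j)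
    (hnonneg : ∀ j k, 0 ≤ c j k) (hnonneg' : ∀ j k, 0 ≤ c' j k)
    (hdiag : ∀ j, c j j = 0) (hdiag' : ∀ j, c' j j = 0)
    (hrow : ∀ n : ℤ, Summable fun j => c j n) (hrow' : ∀ n : ℤ, Summable fun j => c' j n)
    (hns : ∀ A : Set ℤ, (∀ j ∈ A, ∀ k ∉ A, c j k = 0) → A = ∅ ∨ A = Set.univ)
    (hns' : ∀ A : Set ℤ, (∀ j ∈ A, ∀ k ∉ A, c' j k = 0) → A = ∅ ∨ A = Set.univ)
    (heq : ∀ x : ℤ → ℂ, (Function.support x).Finite →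
      ∑' q : ℤ × ℤ, c q.1 q.2 * ‖x q.1 - x q.2‖ ^ 2 =
        ∑' q : ℤ × ℤ, c' q.1 q.2 * ‖x q.1 - x q.2‖ ^ 2) :
    ∀ j k, c j k = c' j k := by
  -- for every finite set T, the two "energy" quantities agree
  have hS : ∀ T : Finset ℤ,
      ∑ a ∈ T, ((∑' b, c a b) - ∑ b ∈ T, c a b)
        = ∑ a ∈ T, ((∑' b, c' a b) - ∑ b ∈ T, c' a b) := by
    intro T
    have hx : (Function.support fun n : ℤ => if n ∈ T then (1:ℂ) else 0).Finite := by
      apply Set.Finite.subset T.finite_toSet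
      intro n hn
      simp only [Function.mem_support, ne_eq] at hn
      by_contra h
      exact hn (if_neg h)
    have h := heq _ hx
    rw [key_indicator_sum c hsymm hnonneg hrow T,
        key_indicator_sum c' hsymm' hnonneg' hrow' T] at h
    linarith
  -- row sums agree
  have hR : ∀ j : ℤ, (∑' b, c j b) = ∑' b, c' j b := by
    intro j
    have := hS {j}
    simpa [hdiag j, hdiag' j] using this
  intro j k
  by_cases hjk : j = k
  · rw [hjk, hdiag k, hdiag' k]
  · have := hS {j, k}
    simp only [Finset.sum_pair hjk] at this
    have h1 := hR j
    have h2 := hR k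
    have h3 := hsymm k j
    have h4 := hsymm' k j
    have h5 := hdiag j; have h6 := hdiag k
    have h7 := hdiag' j; have h8 := hdiag' k
    nlinarith [this]
end

section
/- Let w(e^{it}) = 4 Σ_{k≥1} c_k sin²(kt/2), where c_k ≥ 0 and 0 < Σ c_k < ∞. Then for every trigonometric polynomial p with Fourier coefficients x = (x_j), one has ∫_𝕋 |p|² w dm = (1/2) Σ_{j,l∈ℤ} c_{|j−l|} |x_j − x_l|². In particular the Fourier image of L²(𝕋, w) is the Besov–Dirichlet space B₀²(c_{|j−k|}/2). -/
set_option maxHeartbeats 1000000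

open MeasureTheory Complex


lemma stmt8_cont (a : ℂ) (n : ℤ) : Continuous fun t : ℝ => a * Complex.exp (Complex.I * n * t) := by
  fun_prop

lemma stmt8_orth (n : ℤ) : (∫ t in (0:ℝ)..(2 * Real.pi), Complex.exp (Complex.I * n * t)) =
    if n = 0 then (2 * Real.pi : ℂ) else 0 := by
  rcases eq_or_ne n 0 with h | h
  · simp [h, Complex.ofReal_mul]
  · rw [if_neg h]
    have hc : (Complex.I * n) ≠ 0 := by
      simp [Complex.I_ne_zero, Complex.ext_iff, h]
    have h2 := integral_exp_mul_complex (a := (0:ℝ)) (b := 2*Real.pi) hc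
    simp_rw [mul_assoc] at h2 ⊢
    rw [h2]
    have h3 : Complex.exp (Complex.I * (n * (2*Real.pi : ℝ))) = 1 := by
      rw [show Complex.I * ((n:ℂ) * ((2*Real.pi:ℝ) : ℂ)) = (n : ℂ) * (2*Real.pi*Complex.I) by
        push_cast; ring]
      exact Complex.exp_int_mul_two_pi_mul_I n
    push_cast at h3
    simp [h3]

lemma stmt8_parseval (s : Finset ℤ) (y : ℤ → ℂ) :
    (∫ t in (0:ℝ)..(2 * Real.pi),
      ‖∑ j ∈ s, y j * Complex.exp (Complex.I * (j:ℂ) * (t:ℂ))‖ ^ 2)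
    = 2 * Real.pi * ∑ j ∈ s, ‖y j‖ ^ 2 := by
  set G : ℝ → ℂ := fun t => ∑ j ∈ s, ∑ l ∈ s,
    (y j * (starRingEnd ℂ) (y l)) * Complex.exp (Complex.I * ((j : ℂ) - (l : ℂ)) * t) with hG
  have hpt : ∀ t : ℝ,
      (‖∑ j ∈ s, y j * Complex.exp (Complex.I * (j:ℂ) * (t:ℂ))‖ ^ 2 : ℝ)
        = (G t).re := by
    intro t
    have hGt : G t = (∑ j ∈ s, y j * Complex.exp (Complex.I * (j:ℂ) * (t:ℂ))) *
        (starRingEnd ℂ) (∑ j ∈ s, y j * Complex.exp (Complex.I * (j:ℂ) * (t:ℂ))) := by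
      rw [map_sum, Finset.sum_mul_sum]
      refine Finset.sum_congr rfl fun j _ => Finset.sum_congr rfl fun l _ => ?_
      rw [map_mul, mul_mul_mul_comm]
      congr 1
      rw [← Complex.exp_conj, ← Complex.exp_add]
      congr 1
      simp only [map_mul, Complex.conj_I, Complex.conj_ofReal, map_intCast]
      ring
    rw [hGt, Complex.mul_conj, Complex.ofReal_re, Complex.sq_norm]
  have hIntG : ∀ (j l : ℤ), IntervalIntegrable
      (fun t : ℝ => (y j * (starRingEnd ℂ) (y l)) * Complex.exp (Complex.I * ((j : ℂ) - (l : ℂ)) * t))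
      volume 0 (2 * Real.pi) := by
    intro j l
    have : Continuous fun t : ℝ =>
        (y j * (starRingEnd ℂ) (y l)) * Complex.exp (Complex.I * ((j : ℂ) - (l : ℂ)) * t) := by
      fun_prop
    exact this.intervalIntegrable _ _
  have hIntRow : ∀ j : ℤ, IntervalIntegrable (fun t : ℝ =>
      ∑ l ∈ s, y j * (starRingEnd ℂ) (y l) * Complex.exp (Complex.I * ((j:ℂ) - (l:ℂ)) * t))
      volume 0 (2 * Real.pi) := fun j =>
    ((continuous_finset_sum _ fun l _ => by fun_prop).intervalIntegrable _ _)
  have hGcont : Continuous G := by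
    rw [hG]
    exact continuous_finset_sum _ fun j _ => continuous_finset_sum _ fun l _ => by fun_prop
  have hIntSum : IntervalIntegrable G volume 0 (2 * Real.pi) :=
    hGcont.intervalIntegrable _ _
  have hre : (∫ t in (0:ℝ)..(2 * Real.pi), (G t).re)
      = (∫ t in (0:ℝ)..(2 * Real.pi), G t).re :=
    Complex.reCLM.intervalIntegral_comp_comm hIntSum
  have hGval : (∫ t in (0:ℝ)..(2 * Real.pi), G t)
      = ∑ j ∈ s, (y j * (starRingEnd ℂ) (y j)) * (2 * Real.pi : ℂ) := by
    simp only [hG]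
    rw [intervalIntegral.integral_finset_sum (f := fun (j : ℤ) (t : ℝ) =>
      ∑ l ∈ s, y j * (starRingEnd ℂ) (y l) * Complex.exp (Complex.I * ((j:ℂ) - (l:ℂ)) * t))
      (fun j _ => hIntRow j)]
    refine Finset.sum_congr rfl fun j hj => ?_
    rw [intervalIntegral.integral_finset_sum (fun l _ => hIntG j l)]
    have : ∀ l : ℤ, (∫ t in (0:ℝ)..(2 * Real.pi),
        (y j * (starRingEnd ℂ) (y l)) * Complex.exp (Complex.I * ((j : ℂ) - (l : ℂ)) * t))
        = (y j * (starRingEnd ℂ) (y l)) * (if (j - l : ℤ) = 0 then (2 * Real.pi : ℂ) else 0) := by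
      intro l
      rw [intervalIntegral.integral_const_mul]
      congr 1
      have := stmt8_orth (j - l)
      push_cast at this
      exact this
    simp only [this, sub_eq_zero, mul_ite, mul_zero]
    rw [Finset.sum_ite_eq, if_pos hj]
  simp only [hpt]
  rw [hre, hGval]
  simp only [Complex.mul_conj]
  rw [Complex.re_sum, Finset.mul_sum]
  refine Finset.sum_congr rfl fun j _ => ?_
  simp [Complex.mul_re, Complex.normSq_eq_norm_sq, ← Complex.ofReal_pow]
  ring

/-- Parseval-type identity: for an LKS weight `w(e^{it}) = 4 Σ c_k sin²(kt/2)` and a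
trigonometric polynomial `p` with coefficients `x`,
`∫ |p|² w dm = (1/2) Σ_{j,l} c_{|j−l|}|x_j − x_l|²` (here `dm` is normalized, so the
interval integral over `(0, 2π)` equals `2π` times the right-hand side). -/
theorem stmt_8 (c : ℕ → ℝ) (hc0 : c 0 = 0) (hnonneg : ∀ k, 0 ≤ c k)
    (hsum : Summable c) (hpos : 0 < ∑' k, c k)
    (x : ℤ → ℂ) (hx : (Function.support x).Finite) :
    (∫ t in (0:ℝ)..(2 * Real.pi),
        ‖∑' j : ℤ, x j * Complex.exp (Complex.I * (j : ℂ) * (t : ℂ))‖ ^ 2 *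
          (4 * ∑' k : ℕ, c k * Real.sin (k * t / 2) ^ 2)) =
      (2 * Real.pi) *
        ((1 / 2) * ∑' q : ℤ × ℤ, c (q.1 - q.2).natAbs * ‖x q.1 - x q.2‖ ^ 2) := by
  classical
  have hπ : (0:ℝ) ≤ 2 * Real.pi := by positivity
  set s : Finset ℤ := hx.toFinset with hs
  have hxs : ∀ j : ℤ, j ∉ s → x j = 0 := by
    intro j hj
    by_contra h
    exact hj (by simp [hs, Set.Finite.mem_toFinset, Function.mem_support, h])
  set p : ℝ → ℂ := fun t => ∑ j ∈ s, x j * Complex.exp (Complex.I * (j:ℂ) * (t:ℂ)) with hpdef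
  have hp : ∀ t : ℝ, (∑' j : ℤ, x j * Complex.exp (Complex.I * (j:ℂ) * (t:ℂ))) = p t :=
    fun t => tsum_eq_sum (fun j hj => by rw [hxs j hj, zero_mul])
  have hpcont : Continuous p := by
    rw [hpdef]; exact continuous_finset_sum _ fun j _ => by fun_prop
  set M : ℝ := ∑ j ∈ s, ‖x j‖ with hM
  have habs1 : ∀ (n : ℤ) (t : ℝ), ‖Complex.exp (Complex.I * (n:ℂ) * (t:ℂ))‖ = 1 := by
    intro n t
    rw [show Complex.I * (n:ℂ) * (t:ℂ) = (((n : ℝ) * t : ℝ) : ℂ) * Complex.I by push_cast; ring]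
    exact Complex.norm_exp_ofReal_mul_I _
  have hpbound : ∀ t, ‖p t‖ ≤ M := by
    intro t
    rw [hpdef, hM]
    refine le_trans (norm_sum_le _ _) (le_of_eq (Finset.sum_congr rfl fun j _ => ?_))
    rw [norm_mul, habs1 j t, mul_one]
  set T : ℤ → Finset ℤ := fun k => s ∪ s.image (· + k) with hT
  set y : ℤ → ℤ → ℂ := fun k j => x j - x (j - k) with hy
  have hyT : ∀ k j, j ∉ T k → y k j = 0 := by
    intro k j hj
    rw [hT] at hj
    have h1 : x j = 0 := hxs j (fun hm => hj (Finset.mem_union_left _ hm))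
    have h2 : x (j - k) = 0 := hxs _ (fun hm =>
      hj (Finset.mem_union_right _ (Finset.mem_image.mpr ⟨j - k, hm, by ring⟩)))
    rw [hy]; simp [h1, h2]
  have step4 : ∀ (k : ℤ) (t : ℝ), p t * (1 - Complex.exp (Complex.I * (k:ℂ) * (t:ℂ)))
      = ∑ j ∈ T k, y k j * Complex.exp (Complex.I * (j:ℂ) * (t:ℂ)) := by
    intro k t
    have e1 : ∑ j ∈ T k, x j * Complex.exp (Complex.I * (j:ℂ) * (t:ℂ)) = p t := by
      rw [hpdef, hT]
      exact (Finset.sum_subset Finset.subset_union_left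
        (fun j _ hj => by rw [hxs j hj, zero_mul])).symm
    have e2 : ∑ j ∈ T k, x (j - k) * Complex.exp (Complex.I * (j:ℂ) * (t:ℂ))
        = Complex.exp (Complex.I * (k:ℂ) * (t:ℂ)) * p t := by
      have e2a : ∑ j ∈ s.image (· + k), x (j - k) * Complex.exp (Complex.I * (j:ℂ) * (t:ℂ))
          = ∑ j ∈ T k, x (j - k) * Complex.exp (Complex.I * (j:ℂ) * (t:ℂ)) := by
        rw [hT]
        refine Finset.sum_subset Finset.subset_union_right (fun j _ hj => ?_)
        have : x (j - k) = 0 := hxs _ (fun hm => hj (Finset.mem_image.mpr ⟨j - k, hm, by ring⟩))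
        rw [this, zero_mul]
      rw [← e2a, Finset.sum_image (fun a _ b _ h => by omega)]
      rw [hpdef, Finset.mul_sum]
      refine Finset.sum_congr rfl fun a _ => ?_
      rw [show a + k - k = a by ring]
      rw [show Complex.I * ((a + k : ℤ) : ℂ) * (t:ℂ)
        = Complex.I * (k:ℂ) * (t:ℂ) + Complex.I * (a:ℂ) * (t:ℂ) by push_cast; ring,
        Complex.exp_add]
      ring
    have e3 : ∑ j ∈ T k, y k j * Complex.exp (Complex.I * (j:ℂ) * (t:ℂ))
        = (∑ j ∈ T k, x j * Complex.exp (Complex.I * (j:ℂ) * (t:ℂ)))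
          - ∑ j ∈ T k, x (j - k) * Complex.exp (Complex.I * (j:ℂ) * (t:ℂ)) := by
      rw [← Finset.sum_sub_distrib]
      exact Finset.sum_congr rfl fun j _ => by rw [hy]; ring
    rw [e3, e1, e2]; ring
  have step3 : ∀ (k : ℕ) (t : ℝ),
      ‖1 - Complex.exp (Complex.I * ((k:ℤ):ℂ) * (t:ℂ))‖ ^ 2
        = 4 * Real.sin ((k:ℝ) * t / 2) ^ 2 := by
    intro k t
    rw [show Complex.I * ((k:ℤ):ℂ) * (t:ℂ) = (((k:ℝ) * t : ℝ) : ℂ) * Complex.I by push_cast; ring]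
    rw [Complex.sq_norm, Complex.normSq_apply]
    simp only [Complex.sub_re, Complex.one_re, Complex.sub_im, Complex.one_im,
      Complex.exp_ofReal_mul_I_re, Complex.exp_ofReal_mul_I_im, zero_sub]
    have h1 := Real.sin_sq_add_cos_sq ((k:ℝ) * t)
    have h2 : Real.sin ((k:ℝ) * t / 2) ^ 2 = 1/2 - Real.cos (2 * ((k:ℝ)*t/2)) / 2 :=
      Real.sin_sq_eq_half_sub _
    rw [show 2 * ((k:ℝ)*t/2) = (k:ℝ)*t by ring] at h2
    nlinarith [h1, h2]
  -- the summand functions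
  set F : ℕ → ℝ → ℝ :=
    fun k t => (‖p t‖ ^ 2 * 4) * (c k * Real.sin ((k:ℝ) * t / 2) ^ 2) with hF
  have habscont : Continuous fun t => ‖p t‖ := continuous_norm.comp hpcont
  have hFcont : ∀ k, Continuous (F k) := by
    intro k; rw [hF]
    have h1 : Continuous fun t : ℝ => Real.sin ((k:ℝ) * t / 2) := by fun_prop
    exact ((habscont.pow 2).mul continuous_const).mul (continuous_const.mul (h1.pow 2))
  have hFnonneg : ∀ k t, 0 ≤ F k t := fun k t => by
    rw [hF]
    exact mul_nonneg (by positivity) (mul_nonneg (hnonneg k) (sq_nonneg _))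
  have hMnonneg : 0 ≤ M := by
    rw [hM]; exact Finset.sum_nonneg fun j _ => norm_nonneg _
  have hFbound : ∀ k t, F k t ≤ (M ^ 2 * 4) * c k := by
    intro k t
    have h1 : ‖p t‖ ^ 2 ≤ M ^ 2 := by
      have := hpbound t
      nlinarith [norm_nonneg (p t)]
    have h2 : Real.sin ((k:ℝ)*t/2)^2 ≤ 1 := by
      nlinarith [Real.neg_one_le_sin ((k:ℝ)*t/2), Real.sin_le_one ((k:ℝ)*t/2)]
    simp only [hF]
    have h3 : 0 ≤ ‖p t‖ ^ 2 := sq_nonneg _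
    nlinarith [mul_le_mul_of_nonneg_left
      (mul_le_mul h1 h2 (sq_nonneg _) (sq_nonneg M)) (hnonneg k), hnonneg k]
  -- U and its properties
  set U : ℤ → ℝ := fun n => ∑' j : ℤ, ‖x j - x (j - n)‖ ^ 2 with hU
  have hUfin : ∀ n : ℤ, U n = ∑ j ∈ T n, ‖y n j‖ ^ 2 := by
    intro n
    rw [hU]
    refine tsum_eq_sum (fun j hj => ?_)
    have := hyT n j hj
    rw [hy] at this
    simp only at this
    rw [this]; simp
  have hUsummand : ∀ n : ℤ, Summable (fun j : ℤ => ‖x j - x (j - n)‖ ^ 2) := by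
    intro n
    refine summable_of_ne_finset_zero (s := T n) (fun j hj => ?_)
    have := hyT n j hj
    rw [hy] at this
    simp only at this
    rw [this]; simp
  have hUnonneg : ∀ n : ℤ, 0 ≤ U n := fun n => tsum_nonneg fun j => sq_nonneg _
  have hVsummand : Summable (fun j : ℤ => ‖x j‖ ^ 2) :=
    summable_of_ne_finset_zero (s := s) (fun j hj => by rw [hxs j hj]; simp)
  set V : ℝ := ∑' j : ℤ, ‖x j‖ ^ 2 with hV
  have htransS : ∀ n : ℤ, Summable (fun j : ℤ => ‖x (j - n)‖ ^ 2) := by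
    intro n
    refine summable_of_ne_finset_zero (s := s.image (· + n)) (fun j hj => ?_)
    have : x (j - n) = 0 := hxs _ (fun hm => hj (Finset.mem_image.mpr ⟨j - n, hm, by ring⟩))
    rw [this]; simp
  have htrans : ∀ n : ℤ, (∑' j : ℤ, ‖x (j - n)‖ ^ 2) = V := by
    intro n
    rw [hV]
    exact (Equiv.subRight n).tsum_eq (fun j => ‖x j‖ ^ 2)
  have hUbound : ∀ n : ℤ, U n ≤ 4 * V := by
    intro n
    have hle : ∀ j : ℤ, ‖x j - x (j - n)‖ ^ 2
        ≤ 2 * ‖x j‖ ^ 2 + 2 * ‖x (j - n)‖ ^ 2 := by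
      intro j
      have h := norm_sub_le (x j) (x (j - n))
      nlinarith [pow_le_pow_left₀ (norm_nonneg (x j - x (j - n))) h 2,
        sq_nonneg (‖x j‖ - ‖x (j - n)‖)]
    have hsumm2 : Summable (fun j : ℤ =>
        2 * ‖x j‖ ^ 2 + 2 * ‖x (j - n)‖ ^ 2) :=
      (hVsummand.mul_left 2).add ((htransS n).mul_left 2)
    have := Summable.tsum_le_tsum hle (hUsummand n) hsumm2
    rw [hU]
    refine le_trans this (le_of_eq ?_)
    rw [Summable.tsum_add (hVsummand.mul_left 2) ((htransS n).mul_left 2), tsum_mul_left, tsum_mul_left,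
      htrans n, ← hV]
    ring
  have hZsummable : Summable (fun n : ℤ => c n.natAbs) := by
    refine Summable.of_nat_of_neg ?_ ?_
    · simpa using hsum
    · simpa using hsum
  have hhsummable : Summable (fun n : ℤ => c n.natAbs * U n) := by
    refine Summable.of_nonneg_of_le (fun n => mul_nonneg (hnonneg _) (hUnonneg n))
      (fun n => ?_) (hZsummable.mul_right (4 * V))
    exact mul_le_mul_of_nonneg_left (hUbound n) (hnonneg _)
  have hgfib : ∀ n : ℤ, Summable (fun j : ℤ => c n.natAbs * ‖x j - x (j - n)‖ ^ 2) :=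
    fun n => (hUsummand n).mul_left _
  have hgfibsum : ∀ n : ℤ,
      (∑' j : ℤ, c n.natAbs * ‖x j - x (j - n)‖ ^ 2) = c n.natAbs * U n := by
    intro n; rw [hU, tsum_mul_left]
  have hgsum : Summable (fun q : ℤ × ℤ => c q.1.natAbs * ‖x q.2 - x (q.2 - q.1)‖ ^ 2) := by
    refine (summable_prod_of_nonneg (fun q => mul_nonneg (hnonneg _) (sq_nonneg _))).2 ⟨hgfib, ?_⟩
    have : (fun n : ℤ => ∑' j : ℤ, c n.natAbs * ‖x j - x (j - n)‖ ^ 2)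
        = fun n : ℤ => c n.natAbs * U n := funext hgfibsum
    rw [this]; exact hhsummable
  set e : ℤ × ℤ ≃ ℤ × ℤ :=
    { toFun := fun q => (q.2, q.2 - q.1)
      invFun := fun q => (q.1 - q.2, q.1)
      left_inv := fun q => by obtain ⟨a, b⟩ := q; simp
      right_inv := fun q => by obtain ⟨a, b⟩ := q; simp } with he
  have hreindex : (∑' q : ℤ × ℤ, c (q.1 - q.2).natAbs * ‖x q.1 - x q.2‖ ^ 2)
      = ∑' q : ℤ × ℤ, c q.1.natAbs * ‖x q.2 - x (q.2 - q.1)‖ ^ 2 := by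
    rw [← Equiv.tsum_eq e (fun q : ℤ × ℤ => c (q.1 - q.2).natAbs * ‖x q.1 - x q.2‖ ^ 2)]
    refine tsum_congr fun q => ?_
    obtain ⟨n, j⟩ := q
    have h1 : ((j, j - n) : ℤ × ℤ).1 - (j, j - n).2 = n := by simp
    simp only [he, Equiv.coe_fn_mk]
    rw [show j - (j - n) = n by ring]
  have hUsym : ∀ n : ℤ, U (-n) = U n := by
    intro n
    have key := Equiv.tsum_eq (Equiv.addRight n) (fun j : ℤ => ‖x j - x (j - n)‖ ^ 2)
    simp only [Equiv.coe_addRight] at key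
    calc U (-n) = ∑' j : ℤ, ‖x j - x (j + n)‖ ^ 2 := by
          rw [hU]; exact tsum_congr fun j => by rw [sub_neg_eq_add]
      _ = ∑' j : ℤ, ‖x (j + n) - x j‖ ^ 2 :=
          tsum_congr fun j => by rw [norm_sub_rev]
      _ = U n := by
          show _ = ∑' j : ℤ, ‖x j - x (j - n)‖ ^ 2
          rw [← key]
          exact tsum_congr fun j => by rw [show j + n - n = j by ring]
  have hZsum : (∑' n : ℤ, c n.natAbs * U n) = 2 * ∑' k : ℕ, c k * U (k : ℤ) := by
    have hkey := tsum_nat_add_neg hhsummable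
    have h0 : c ((0:ℤ)).natAbs * U 0 = 0 := by simp [hc0]
    rw [h0, add_zero] at hkey
    rw [← hkey]
    have heach : ∀ k : ℕ, c ((k:ℤ)).natAbs * U (k:ℤ) + c ((-(k:ℤ))).natAbs * U (-(k:ℤ))
        = 2 * (c k * U (k : ℤ)) := by
      intro k
      rw [hUsym]
      simp only [Int.natAbs_natCast, Int.natAbs_neg]
      ring
    rw [tsum_congr heach, tsum_mul_left]
  -- RHS value
  have hR : (∑' q : ℤ × ℤ, c (q.1 - q.2).natAbs * ‖x q.1 - x q.2‖ ^ 2)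
      = 2 * ∑' k : ℕ, c k * U (k : ℤ) := by
    rw [hreindex, Summable.tsum_prod' hgsum hgfib]
    rw [tsum_congr hgfibsum, hZsum]
  have hL : (∫ t in (0:ℝ)..(2 * Real.pi),
      ‖∑' j : ℤ, x j * Complex.exp (Complex.I * (j : ℂ) * (t : ℂ))‖ ^ 2 *
        (4 * ∑' k : ℕ, c k * Real.sin ((k:ℝ) * t / 2) ^ 2))
      = 2 * Real.pi * ∑' k : ℕ, c k * U (k : ℤ) := by
    have hswap : ∀ t : ℝ,
        ‖∑' j : ℤ, x j * Complex.exp (Complex.I * (j:ℂ) * (t:ℂ))‖ ^ 2 *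
          (4 * ∑' k : ℕ, c k * Real.sin ((k:ℝ) * t / 2) ^ 2) = ∑' k : ℕ, F k t := by
      intro t
      rw [hp t]
      have hFk : ∀ k : ℕ, F k t
          = (‖p t‖ ^ 2 * 4) * (c k * Real.sin ((k:ℝ) * t / 2) ^ 2) := fun k => rfl
      rw [tsum_congr hFk, tsum_mul_left]
      ring
    rw [intervalIntegral.integral_congr (g := fun t => ∑' k : ℕ, F k t) (fun t _ => hswap t)]
    rw [intervalIntegral.integral_of_le hπ]
    have hFInt : ∀ k : ℕ, IntegrableOn (F k) (Set.Ioc (0:ℝ) (2*Real.pi)) volume :=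
      fun k => (hFcont k).integrableOn_Ioc
    have hFnorm : Summable (fun k : ℕ => ∫ t in Set.Ioc (0:ℝ) (2*Real.pi), ‖F k t‖) := by
      refine Summable.of_nonneg_of_le (fun k => integral_nonneg fun t => norm_nonneg _)
        (fun k => ?_) ((hsum.mul_left (M^2*4)).mul_left (2*Real.pi))
      have h1 : (fun t => ‖F k t‖) = F k := funext fun t => Real.norm_of_nonneg (hFnonneg k t)
      rw [h1]
      have h2 : (∫ t in Set.Ioc (0:ℝ) (2*Real.pi), F k t)
          ≤ ∫ _t in Set.Ioc (0:ℝ) (2*Real.pi), (M^2*4) * c k := by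
        refine setIntegral_mono_on (hFInt k) ?_ measurableSet_Ioc (fun t _ => hFbound k t)
        exact integrableOn_const (by rw [Real.volume_Ioc]; exact ENNReal.ofReal_ne_top)
      refine le_trans h2 (le_of_eq ?_)
      rw [setIntegral_const, Real.volume_real_Ioc_of_le (by linarith)]
      rw [smul_eq_mul, sub_zero]
    rw [← MeasureTheory.integral_tsum_of_summable_integral_norm (fun k => hFInt k) hFnorm]
    have hFval : ∀ k : ℕ, (∫ t in Set.Ioc (0:ℝ) (2*Real.pi), F k t)
        = 2 * Real.pi * (c k * U (k:ℤ)) := by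
      intro k
      rw [← intervalIntegral.integral_of_le hπ]
      have hptw : ∀ t : ℝ, F k t = c k *
          ‖∑ j ∈ T (k:ℤ), y (k:ℤ) j * Complex.exp (Complex.I * (j:ℂ) * (t:ℂ))‖ ^ 2 := by
        intro t
        rw [← step4 (k:ℤ) t, norm_mul, mul_pow, step3 k t]
        have expand : F k t
            = (‖p t‖ ^ 2 * 4) * (c k * Real.sin ((k:ℝ) * t / 2) ^ 2) := rfl
        rw [expand]
        ring
      rw [intervalIntegral.integral_congr (g := fun t => c k *
        ‖∑ j ∈ T (k:ℤ), y (k:ℤ) j * Complex.exp (Complex.I * (j:ℂ) * (t:ℂ))‖ ^ 2)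
        (fun t _ => hptw t)]
      rw [intervalIntegral.integral_const_mul, stmt8_parseval]
      rw [← hUfin (k:ℤ)]
      ring
    rw [tsum_congr hFval, tsum_mul_left]
  rw [hL, hR]
  ring
end

section
/- Let c : [0,∞) → (0,∞) be a positive piecewise differentiable function such that x ↦ x^γ c(x) eventually decreases for some 1 < γ < 3, and set c_k = c(k), w(e^{it}) = 4 Σ_{k≥1} c_k sin²(kt/2). Then w(e^{it}) ≍ W(t) := t² ∫₀^{π/t} c(x) x² dx as t → 0⁺, and consequently 1/w ∈ L¹(𝕋) if and only if Σ_{n≥1} 1 / (Σ_{k=1}^{n} c_k k²) < ∞. -/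
open MeasureTheory Real Set

namespace LKS12

variable {γ a : ℝ} {c : ℝ → ℝ}

/-- `c` is antitone on `Ici a`. -/
lemma c_anti (hγ : 0 < γ) (ha : 0 < a) (hpos : ∀ x : ℝ, 0 ≤ x → 0 < c x)
    (hmono : AntitoneOn (fun x => x ^ γ * c x) (Set.Ici a)) :
    AntitoneOn c (Set.Ici a) := by
  intro u hu v hv huv
  have hu0 : (0:ℝ) < u := lt_of_lt_of_le ha hu
  have hv0 : (0:ℝ) < v := lt_of_lt_of_le ha hv
  have h := hmono hu hv huv
  have hle : u ^ γ ≤ v ^ γ := Real.rpow_le_rpow hu0.le huv hγ.le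
  have hcu : 0 < c u := hpos u hu0.le
  have h2 : v ^ γ * c v ≤ v ^ γ * c u := by
    calc v ^ γ * c v ≤ u ^ γ * c u := h
    _ ≤ v ^ γ * c u := by nlinarith
  have hvγ : (0:ℝ) < v ^ γ := Real.rpow_pos_of_pos hv0 γ
  exact le_of_mul_le_mul_left h2 hvγ

/-- pointwise decay bound: for `a ≤ u ≤ x`, `c x ≤ c u * u^γ * x^(-γ)`. -/
lemma c_decay (ha : 0 < a) (hmono : AntitoneOn (fun x => x ^ γ * c x) (Set.Ici a))
    {u x : ℝ} (hu : a ≤ u) (hx : u ≤ x) :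
    c x ≤ c u * u ^ γ * x ^ (-γ) := by
  have hu0 : (0:ℝ) < u := lt_of_lt_of_le ha hu
  have hx0 : (0:ℝ) < x := lt_of_lt_of_le hu0 hx
  have h := hmono hu (le_trans hu hx) hx
  have hxγ : (0:ℝ) < x ^ γ := Real.rpow_pos_of_pos hx0 γ
  simp only [] at h
  rw [Real.rpow_neg hx0.le]
  rw [← sub_nonneg] at h ⊢
  have : c u * u ^ γ * (x ^ γ)⁻¹ - c x = (u ^ γ * c u - x ^ γ * c x) * (x ^ γ)⁻¹ := by
    field_simp
  rw [this]
  positivity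

/-- integral tail bound : `∫_u^b c ≤ c u * u / (γ-1)` for `a ≤ u ≤ b`. -/
lemma integral_c_tail (hγ : 1 < γ) (ha : 0 < a) (hcont : Continuous c)
    (hpos : ∀ x : ℝ, 0 ≤ x → 0 < c x)
    (hmono : AntitoneOn (fun x => x ^ γ * c x) (Set.Ici a))
    {u b : ℝ} (hu : a ≤ u) (hb : u ≤ b) :
    (∫ x in u..b, c x) ≤ c u * u / (γ - 1) := by
  have hu0 : (0:ℝ) < u := lt_of_lt_of_le ha hu
  have hcu : 0 < c u := hpos u hu0.le
  have h1 : (∫ x in u..b, c x) ≤ ∫ x in u..b, c u * u ^ γ * x ^ (-γ) := by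
    apply intervalIntegral.integral_mono_on hb (hcont.intervalIntegrable _ _)
    · apply ContinuousOn.intervalIntegrable
      apply ContinuousOn.mul continuousOn_const
      apply ContinuousOn.rpow_const continuousOn_id
      intro x hx
      rw [uIcc_of_le hb] at hx
      exact Or.inl (ne_of_gt (lt_of_lt_of_le hu0 hx.1))
    · intro x hx
      exact c_decay ha hmono hu hx.1
  have h2 : (∫ x in u..b, x ^ (-γ)) = (b ^ (-γ+1) - u ^ (-γ+1)) / (-γ+1) := by
    apply integral_rpow
    right
    constructor
    · intro h; linarith
    · rw [uIcc_of_le hb]; intro h; exact absurd h.1 (not_le.mpr hu0)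
  calc (∫ x in u..b, c x) ≤ ∫ x in u..b, c u * u ^ γ * x ^ (-γ) := h1
    _ = c u * u ^ γ * ((b ^ (-γ+1) - u ^ (-γ+1)) / (-γ+1)) := by
        rw [intervalIntegral.integral_const_mul, h2]
    _ = c u * u ^ γ * ((u ^ (-γ+1) - b ^ (-γ+1)) / (γ-1)) := by
        rw [show -γ+1 = -(γ-1) from by ring] at *
        rw [div_neg, ← neg_div, neg_sub]
    _ ≤ c u * u ^ γ * (u ^ (-γ+1) / (γ-1)) := by
        have hb0 : (0:ℝ) < b := lt_of_lt_of_le hu0 hb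
        have : (0:ℝ) < b ^ (-γ+1) := Real.rpow_pos_of_pos hb0 _
        have hγ1 : (0:ℝ) < γ - 1 := by linarith
        have hsub : u ^ (-γ+1) - b ^ (-γ+1) ≤ u ^ (-γ+1) := by linarith
        apply mul_le_mul_of_nonneg_left _ (by positivity)
        exact div_le_div_of_nonneg_right hsub hγ1.le
    _ = c u * u / (γ - 1) := by
        rw [mul_div_assoc'] at *
        rw [mul_assoc, ← Real.rpow_add hu0, show γ + (-γ+1) = 1 from by ring, Real.rpow_one]

/-- sum tail bound via integral comparison -/
lemma sum_range_tail_le (hγ : 1 < γ) (ha : 0 < a) (hcont : Continuous c)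
    (hpos : ∀ x : ℝ, 0 ≤ x → 0 < c x)
    (hmono : AntitoneOn (fun x => x ^ γ * c x) (Set.Ici a))
    {n : ℕ} (hn : a ≤ (n:ℝ)) (K : ℕ) :
    ∑ i ∈ Finset.range K, c ((n:ℝ) + 1 + i) ≤ c n * n / (γ - 1) := by
  have hanti : AntitoneOn c (Set.Icc (n:ℝ) ((n:ℝ) + K)) := by
    apply (c_anti (by linarith) ha hpos hmono).mono
    intro x hx; exact le_trans hn hx.1
  have h1 := hanti.sum_le_integral
  have h2 : (∫ x in (n:ℝ)..((n:ℝ)+K), c x) ≤ c n * n / (γ - 1) :=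
    integral_c_tail hγ ha hcont hpos hmono hn (le_add_of_nonneg_right (Nat.cast_nonneg K))
  refine le_trans ?_ (le_trans h1 h2)
  apply le_of_eq
  apply Finset.sum_congr rfl
  intro i _
  push_cast
  ring_nf

lemma summable_c (hγ : 1 < γ) (ha : 0 < a) (hcont : Continuous c)
    (hpos : ∀ x : ℝ, 0 ≤ x → 0 < c x)
    (hmono : AntitoneOn (fun x => x ^ γ * c x) (Set.Ici a)) :
    Summable (fun k : ℕ => c k) := by
  set n : ℕ := ⌈a⌉₊ + 1 with hn_def
  have hn : a ≤ (n:ℝ) := by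
    have := Nat.le_ceil a
    push_cast [hn_def]; linarith
  apply summable_of_sum_range_le (c := (∑ i ∈ Finset.range (n+1), c i) + c n * n / (γ - 1))
  · intro k; exact (hpos k (Nat.cast_nonneg k)).le
  · intro K
    rcases le_or_gt K (n+1) with hK | hK
    · have h1 : ∑ i ∈ Finset.range K, c i ≤ ∑ i ∈ Finset.range (n+1), c i := by
        apply Finset.sum_le_sum_of_subset_of_nonneg (Finset.range_subset_range.mpr hK)
        intro i _ _; exact (hpos i (Nat.cast_nonneg i)).le
      have h2 : (0:ℝ) ≤ c n * n / (γ-1) := by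
        have := hpos n (Nat.cast_nonneg n)
        have : (0:ℝ) < γ - 1 := by linarith
        positivity
      linarith
    · obtain ⟨m, rfl⟩ : ∃ m, K = (n+1) + m := ⟨K - (n+1), by omega⟩
      rw [Finset.sum_range_add]
      have h2 : ∑ i ∈ Finset.range m, c ((n+1) + i : ℕ) ≤ c n * n / (γ-1) := by
        refine le_trans (le_of_eq ?_) (sum_range_tail_le hγ ha hcont hpos hmono hn m)
        apply Finset.sum_congr rfl
        intro i _; congr 1; push_cast; ring
      linarith

lemma tsum_tail_le (hγ : 1 < γ) (ha : 0 < a) (hcont : Continuous c)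
    (hpos : ∀ x : ℝ, 0 ≤ x → 0 < c x)
    (hmono : AntitoneOn (fun x => x ^ γ * c x) (Set.Ici a))
    {n : ℕ} (hn : a ≤ (n:ℝ)) :
    ∑' k : ℕ, c ((k + (n+1) : ℕ)) ≤ c n * n / (γ - 1) := by
  apply Real.tsum_le_of_sum_range_le
  · intro k; exact (hpos _ (Nat.cast_nonneg _)).le
  · intro K
    refine le_trans (le_of_eq ?_) (sum_range_tail_le hγ ha hcont hpos hmono hn K)
    apply Finset.sum_congr rfl
    intro i _; congr 1; push_cast; ring

lemma cx2_intable (hcont : Continuous c) (u v : ℝ) :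
    IntervalIntegrable (fun x => c x * x^2) volume u v :=
  ((hcont.mul (continuous_pow 2)).intervalIntegrable _ _)

lemma I_mono (hcont : Continuous c) (hpos : ∀ x : ℝ, 0 ≤ x → 0 < c x)
    {b₁ b₂ : ℝ} (h0 : 0 ≤ b₁) (h : b₁ ≤ b₂) :
    (∫ x in (0:ℝ)..b₁, c x * x^2) ≤ ∫ x in (0:ℝ)..b₂, c x * x^2 := by
  rw [← intervalIntegral.integral_add_adjacent_intervals (cx2_intable hcont 0 b₁)
    (cx2_intable hcont b₁ b₂)]
  have : (0:ℝ) ≤ ∫ x in b₁..b₂, c x * x^2 := by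
    apply intervalIntegral.integral_nonneg h
    intro x hx
    have hx0 : (0:ℝ) ≤ x := le_trans h0 hx.1
    have := hpos x hx0
    positivity
  linarith

lemma I_pos (hcont : Continuous c) (hpos : ∀ x : ℝ, 0 ≤ x → 0 < c x)
    {b : ℝ} (hb : 0 < b) : 0 < ∫ x in (0:ℝ)..b, c x * x^2 := by
  apply intervalIntegral.intervalIntegral_pos_of_pos_on (cx2_intable hcont 0 b) _ hb
  intro x hx
  have := hpos x hx.1.le
  have := hx.1
  positivity

lemma piece_upper (ha : 0 < a) (hcont : Continuous c)
    (hpos : ∀ x : ℝ, 0 ≤ x → 0 < c x)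
    (hmono : AntitoneOn (fun x => x ^ γ * c x) (Set.Ici a)) (hγ : 0 < γ)
    {m : ℕ} (hm : a ≤ (m:ℝ)) :
    (∫ x in (m:ℝ)..((m:ℝ)+1), c x * x^2) ≤ 4 * (c m * (m:ℝ)^2) := by
  have hm0 : (0:ℝ) < m := lt_of_lt_of_le ha hm
  have hm1 : (1:ℝ) ≤ m := by exact_mod_cast Nat.one_le_iff_ne_zero.mpr (by
    intro h; rw [h] at hm0; simp at hm0)
  have hcm : 0 < c m := hpos m hm0.le
  have anti := c_anti hγ ha hpos hmono
  have h1 : (∫ x in (m:ℝ)..((m:ℝ)+1), c x * x^2) ≤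
      ∫ _x in (m:ℝ)..((m:ℝ)+1), c m * ((m:ℝ)+1)^2 := by
    apply intervalIntegral.integral_mono_on (by linarith) (cx2_intable hcont _ _)
      (intervalIntegrable_const)
    intro x hx
    have hcx : c x ≤ c m := anti (le_trans hm (le_refl _) |>.trans (le_refl _) |>.trans_eq rfl
      |> fun h => h) (le_trans hm hx.1) hx.1
    have hx2 : x^2 ≤ ((m:ℝ)+1)^2 := by nlinarith [hx.1, hx.2]
    have hcx0 : 0 ≤ c x := (hpos x (by linarith [hx.1])).le
    nlinarith
  have h2 : (∫ _x in (m:ℝ)..((m:ℝ)+1), c m * ((m:ℝ)+1)^2) = c m * ((m:ℝ)+1)^2 := by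
    simp
  nlinarith [mul_nonneg hcm.le (sq_nonneg ((m:ℝ)-1)), mul_le_mul_of_nonneg_left (sq_nonneg ((m:ℝ)-1)) hcm.le]

lemma piece_lower (ha : 0 < a) (hcont : Continuous c)
    (hpos : ∀ x : ℝ, 0 ≤ x → 0 < c x)
    (hmono : AntitoneOn (fun x => x ^ γ * c x) (Set.Ici a)) (hγ : 0 < γ)
    {m : ℕ} (hm : a ≤ (m:ℝ)) :
    c ((m:ℝ)+1) * ((m:ℝ)+1)^2 ≤ 4 * ∫ x in (m:ℝ)..((m:ℝ)+1), c x * x^2 := by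
  have hm0 : (0:ℝ) < m := lt_of_lt_of_le ha hm
  have hm1 : (1:ℝ) ≤ m := by exact_mod_cast Nat.one_le_iff_ne_zero.mpr (by
    intro h; rw [h] at hm0; simp at hm0)
  have anti := c_anti hγ ha hpos hmono
  have hcm1 : 0 < c ((m:ℝ)+1) := hpos _ (by linarith)
  have h1 : (∫ _x in (m:ℝ)..((m:ℝ)+1), c ((m:ℝ)+1) * (m:ℝ)^2) ≤
      ∫ x in (m:ℝ)..((m:ℝ)+1), c x * x^2 := by
    apply intervalIntegral.integral_mono_on (by linarith) (intervalIntegrable_const)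
      (cx2_intable hcont _ _)
    intro x hx
    have hcx : c ((m:ℝ)+1) ≤ c x := anti (le_trans hm hx.1) (by
      exact le_trans hm (by linarith)) hx.2
    have hx2 : (m:ℝ)^2 ≤ x^2 := by nlinarith [hx.1]
    have hcx0 : 0 ≤ c x := (hpos x (by linarith [hx.1])).le
    nlinarith
  have h2 : (∫ _x in (m:ℝ)..((m:ℝ)+1), c ((m:ℝ)+1) * (m:ℝ)^2) = c ((m:ℝ)+1) * (m:ℝ)^2 := by
    simp
  nlinarith [mul_nonneg hcm1.le (sq_nonneg ((m:ℝ)-1)), mul_le_mul_of_nonneg_left (sq_nonneg ((m:ℝ)-1)) hcm1.le]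

lemma S_le_I_aux (ha : 0 < a) (hcont : Continuous c)
    (hpos : ∀ x : ℝ, 0 ≤ x → 0 < c x)
    (hmono : AntitoneOn (fun x => x ^ γ * c x) (Set.Ici a)) (hγ : 0 < γ)
    {m₀ n : ℕ} (hm₀ : a ≤ (m₀:ℝ)) (h : m₀ ≤ n) :
    (∑ k ∈ Finset.Icc 1 n, c k * (k:ℝ)^2) ≤
      (∑ k ∈ Finset.Icc 1 m₀, c k * (k:ℝ)^2) + 4 * ∫ x in (0:ℝ)..(n:ℝ), c x * x^2 := by
  have key : ∑ k ∈ Finset.Ioc m₀ n, c k * (k:ℝ)^2 ≤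
      4 * ∫ x in (m₀:ℝ)..(n:ℝ), c x * x^2 := by
    have e1 : Finset.Ioc m₀ n = Finset.Ico (m₀+1) (n+1) := by
      rw [← Finset.Icc_add_one_left_eq_Ioc, Finset.Ico_add_one_right_eq_Icc]
    rw [e1, Finset.sum_Ico_eq_sum_range]
    have e2 : (n+1) - (m₀+1) = n - m₀ := by omega
    rw [e2]
    have hint : ∀ k : ℕ, k < n - m₀ →
        IntervalIntegrable (fun x => c x * x^2) volume ((m₀:ℝ)+k) ((m₀:ℝ)+(k+1:ℕ)) :=
      fun k _ => cx2_intable hcont _ _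
    have e3 := intervalIntegral.sum_integral_adjacent_intervals (f := fun x => c x * x^2)
      (a := fun k => (m₀:ℝ)+k) (n := n - m₀) hint
    simp only [Nat.cast_zero, add_zero] at e3
    have e4 : ((m₀:ℝ) + ((n - m₀ : ℕ):ℝ)) = (n:ℝ) := by
      push_cast [Nat.cast_sub h]; ring
    rw [e4] at e3
    rw [← e3, Finset.mul_sum]
    apply Finset.sum_le_sum
    intro i hi
    have hp := piece_lower ha hcont hpos hmono hγ
      (m := m₀ + i) (le_trans hm₀ (by push_cast; linarith [Nat.cast_nonneg (α := ℝ) i]))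
    have ecast : ((m₀ + 1 + i : ℕ):ℝ) = ((m₀ + i : ℕ):ℝ) + 1 := by push_cast; ring
    have eA : (m₀:ℝ)+(i:ℝ) = ((m₀+i:ℕ):ℝ) := by push_cast; ring
    have eB : (m₀:ℝ)+((i+1:ℕ):ℝ) = ((m₀+i:ℕ):ℝ)+1 := by push_cast; ring
    rw [ecast, eA, eB]
    exact hp
  have split : ∑ k ∈ Finset.Icc 1 n, c k * (k:ℝ)^2 =
      (∑ k ∈ Finset.Icc 1 m₀, c k * (k:ℝ)^2) + ∑ k ∈ Finset.Ioc m₀ n, c k * (k:ℝ)^2 := by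
    have e : ∀ k : ℕ, Finset.Icc 1 k = Finset.Ioc 0 k := by
      intro k; ext x; simp [Finset.mem_Icc, Finset.mem_Ioc]; omega
    rw [e, e]
    exact (Finset.sum_Ioc_consecutive _ (Nat.zero_le m₀) h).symm
  have hIm : (∫ x in (m₀:ℝ)..(n:ℝ), c x * x^2) ≤ ∫ x in (0:ℝ)..(n:ℝ), c x * x^2 := by
    have := intervalIntegral.integral_add_adjacent_intervals
      (cx2_intable hcont 0 m₀) (cx2_intable hcont m₀ n)
    have hnn : (0:ℝ) ≤ ∫ x in (0:ℝ)..(m₀:ℝ), c x * x^2 := by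
      apply intervalIntegral.integral_nonneg (Nat.cast_nonneg m₀)
      intro x hx; have := hpos x hx.1; positivity
    linarith
  linarith

lemma I_le_S_aux (ha : 0 < a) (hcont : Continuous c)
    (hpos : ∀ x : ℝ, 0 ≤ x → 0 < c x)
    (hmono : AntitoneOn (fun x => x ^ γ * c x) (Set.Ici a)) (hγ : 0 < γ)
    {m₀ n : ℕ} (hm₀ : a ≤ (m₀:ℝ)) (h : m₀ ≤ n) :
    (∫ x in (0:ℝ)..(n:ℝ), c x * x^2) ≤
      (∫ x in (0:ℝ)..(m₀:ℝ), c x * x^2) + 4 * ∑ k ∈ Finset.Icc 1 n, c k * (k:ℝ)^2 := by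
  have hm1 : 1 ≤ m₀ := by
    by_contra hc
    push_neg at hc
    interval_cases m₀
    · simp at hm₀; linarith
  have key : (∫ x in (m₀:ℝ)..(n:ℝ), c x * x^2) ≤
      4 * ∑ k ∈ Finset.Ico m₀ n, c k * (k:ℝ)^2 := by
    have hint : ∀ k : ℕ, k < n - m₀ →
        IntervalIntegrable (fun x => c x * x^2) volume ((m₀:ℝ)+k) ((m₀:ℝ)+(k+1:ℕ)) :=
      fun k _ => cx2_intable hcont _ _
    have e3 := intervalIntegral.sum_integral_adjacent_intervals (f := fun x => c x * x^2)
      (a := fun k => (m₀:ℝ)+k) (n := n - m₀) hint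
    simp only [Nat.cast_zero, add_zero] at e3
    have e4 : ((m₀:ℝ) + ((n - m₀ : ℕ):ℝ)) = (n:ℝ) := by
      push_cast [Nat.cast_sub h]; ring
    rw [e4] at e3
    rw [← e3, Finset.sum_Ico_eq_sum_range, Finset.mul_sum]
    apply Finset.sum_le_sum
    intro i hi
    have hp := piece_upper ha hcont hpos hmono hγ
      (m := m₀ + i) (le_trans hm₀ (by push_cast; linarith [Nat.cast_nonneg (α := ℝ) i]))
    have eA : (m₀:ℝ)+(i:ℝ) = ((m₀+i:ℕ):ℝ) := by push_cast; ring
    have eB : (m₀:ℝ)+((i+1:ℕ):ℝ) = ((m₀+i:ℕ):ℝ)+1 := by push_cast; ring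
    rw [eA, eB]
    exact hp
  have hsub : ∑ k ∈ Finset.Ico m₀ n, c k * (k:ℝ)^2 ≤ ∑ k ∈ Finset.Icc 1 n, c k * (k:ℝ)^2 := by
    apply Finset.sum_le_sum_of_subset_of_nonneg
    · intro k hk
      simp only [Finset.mem_Ico, Finset.mem_Icc] at hk ⊢
      omega
    · intro k _ _
      have := hpos k (Nat.cast_nonneg k); positivity
  have adj := intervalIntegral.integral_add_adjacent_intervals
    (cx2_intable hcont 0 m₀) (cx2_intable hcont m₀ n)
  linarith

lemma sum_shift (f : ℕ → ℝ) (hf0 : f 0 = 0) (N : ℕ) :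
    ∑ k ∈ Finset.range (N+1), f k = ∑ k ∈ Finset.Icc 1 N, f k := by
  rw [Finset.range_eq_Ico, ← Finset.sum_Ico_consecutive f (Nat.zero_le 1) (Nat.le_add_left 1 N)]
  have e1 : ∑ k ∈ Finset.Ico 0 1, f k = 0 := by simp [hf0]
  have e2 : Finset.Ico 1 (N+1) = Finset.Icc 1 N := Finset.Ico_add_one_right_eq_Icc 1 N
  rw [e1, e2, zero_add]

lemma SN_pos (hpos : ∀ x : ℝ, 0 ≤ x → 0 < c x) {N : ℕ} (hN : 1 ≤ N) :
    0 < ∑ k ∈ Finset.Icc 1 N, c k * (k:ℝ)^2 := by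
  apply Finset.sum_pos
  · intro k hk
    simp only [Finset.mem_Icc] at hk
    have hk1 : (1:ℝ) ≤ k := by exact_mod_cast hk.1
    have := hpos k (by linarith)
    positivity
  · exact ⟨1, by simp [Finset.mem_Icc, hN]⟩

lemma SN_lower (hγ : 0 < γ) (ha : 0 < a) (hpos : ∀ x : ℝ, 0 ≤ x → 0 < c x)
    (hmono : AntitoneOn (fun x => x ^ γ * c x) (Set.Ici a))
    {N : ℕ} (hN2 : 2 ≤ N) (hNa : a ≤ ((N/2 : ℕ):ℝ)) :
    c N * (N:ℝ)^3 ≤ 32 * ∑ k ∈ Finset.Icc 1 N, c k * (k:ℝ)^2 := by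
  set M := N / 2 with hM
  have anti := c_anti hγ ha hpos hmono
  have hM0 : (0:ℝ) < M := lt_of_lt_of_le ha hNa
  have hMN : M ≤ N := Nat.div_le_self N 2
  have hsub : ∑ k ∈ Finset.Icc M N, c N * (M:ℝ)^2 ≤ ∑ k ∈ Finset.Icc 1 N, c k * (k:ℝ)^2 := by
    have h1 : ∑ k ∈ Finset.Icc M N, c N * (M:ℝ)^2 ≤ ∑ k ∈ Finset.Icc M N, c k * (k:ℝ)^2 := by
      apply Finset.sum_le_sum
      intro k hk
      simp only [Finset.mem_Icc] at hk
      have hkM : (M:ℝ) ≤ k := by exact_mod_cast hk.1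
      have hkN : (k:ℝ) ≤ N := by exact_mod_cast hk.2
      have hck : c N ≤ c k := anti (le_trans hNa hkM) (le_trans hNa (le_trans hkM hkN)) hkN
      have hck0 : 0 < c k := hpos k (by linarith)
      have hM2 : (M:ℝ)^2 ≤ (k:ℝ)^2 := by nlinarith
      nlinarith
    refine le_trans h1 (Finset.sum_le_sum_of_subset_of_nonneg ?_ ?_)
    · intro k hk
      simp only [Finset.mem_Icc] at hk ⊢
      omega
    · intro k hk _
      simp only [Finset.mem_Icc] at hk
      have hk1 : (1:ℝ) ≤ k := by exact_mod_cast hk.1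
      have := hpos k (by linarith); positivity
  rw [Finset.sum_const, Nat.card_Icc] at hsub
  have hcN : 0 < c N := hpos N (by positivity)
  -- card = N + 1 - M ≥ N/2 ; M ≥ N/4
  have hcard : (N:ℝ) ≤ 2 * ((N + 1 - M : ℕ):ℝ) := by
    have : N ≤ 2 * (N + 1 - M) := by omega
    exact_mod_cast this
  have hM4 : (N:ℝ) ≤ 4 * (M:ℝ) := by
    have : N ≤ 4 * M := by omega
    exact_mod_cast this
  have hsmul : ((N + 1 - M : ℕ):ℝ) * (c N * (M:ℝ)^2) ≤
      ∑ k ∈ Finset.Icc 1 N, c k * (k:ℝ)^2 := by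
    simpa [nsmul_eq_mul] using hsub
  have hNnn : (0:ℝ) ≤ (N:ℝ) := Nat.cast_nonneg N
  have h1 : (N:ℝ)^2 ≤ 16*(M:ℝ)^2 := by nlinarith [Nat.cast_nonneg (α := ℝ) M]
  have h2 : (N:ℝ)^3 ≤ 32 * (((N + 1 - M : ℕ):ℝ) * (M:ℝ)^2) := by
    have s1 : (N:ℝ)^3 ≤ (N:ℝ) * (16*(M:ℝ)^2) := by nlinarith
    have s2 : (N:ℝ) * (16*(M:ℝ)^2) ≤ (2 * ((N + 1 - M : ℕ):ℝ)) * (16*(M:ℝ)^2) := by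
      apply mul_le_mul_of_nonneg_right hcard
      positivity
    linarith
  have h3 : c N * (N:ℝ)^3 ≤ c N * (32 * (((N + 1 - M : ℕ):ℝ) * (M:ℝ)^2)) :=
    mul_le_mul_of_nonneg_left h2 hcN.le
  nlinarith [hsmul]

lemma summable_f (hγ : 1 < γ) (ha : 0 < a) (hcont : Continuous c)
    (hpos : ∀ x : ℝ, 0 ≤ x → 0 < c x)
    (hmono : AntitoneOn (fun x => x ^ γ * c x) (Set.Ici a)) (t : ℝ) :
    Summable (fun k : ℕ => c k * Real.sin (k * t / 2) ^ 2) := by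
  apply Summable.of_nonneg_of_le _ _ (summable_c hγ ha hcont hpos hmono)
  · intro k
    have := hpos k (Nat.cast_nonneg k); positivity
  · intro k
    have h1 : Real.sin (k * t / 2) ^ 2 ≤ 1 := by
      rw [← Real.sin_sq_add_cos_sq (k * t / 2)]
      nlinarith [sq_nonneg (Real.cos (k * t / 2))]
    have := hpos k (Nat.cast_nonneg k)
    nlinarith

set_option maxHeartbeats 1000000 in
/-- The core two-sided comparison of `w(t)` with `t² S(N)`, `N = ⌊π/t⌋`. -/
lemma w_comp (hγ : 1 < γ) (ha : 0 < a) (hcont : Continuous c)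
    (hpos : ∀ x : ℝ, 0 ≤ x → 0 < c x)
    (hmono : AntitoneOn (fun x => x ^ γ * c x) (Set.Ici a))
    {t : ℝ} (ht : 0 < t) {N : ℕ}
    (hNt : (N:ℝ) ≤ Real.pi / t) (htN : Real.pi / t < (N:ℝ) + 1)
    (hN2 : 2 ≤ N) (hNa : a ≤ ((N/2 : ℕ):ℝ)) (hNa' : a ≤ (N:ℝ)) :
    (4 / Real.pi^2) * (t^2 * ∑ k ∈ Finset.Icc 1 N, c k * (k:ℝ)^2) ≤
        4 * ∑' k : ℕ, c k * Real.sin (k * t / 2) ^ 2 ∧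
      4 * ∑' k : ℕ, c k * Real.sin (k * t / 2) ^ 2 ≤
        (1 + 512/((γ-1) * Real.pi^2)) * (t^2 * ∑ k ∈ Finset.Icc 1 N, c k * (k:ℝ)^2) := by
  have hπ : (0:ℝ) < π := Real.pi_pos
  have hγ1 : (0:ℝ) < γ - 1 := by linarith
  set f : ℕ → ℝ := fun k => c k * Real.sin (k * t / 2) ^ 2 with hf
  set SN := ∑ k ∈ Finset.Icc 1 N, c k * (k:ℝ)^2 with hSN
  have hsumf : Summable f := summable_f hγ ha hcont hpos hmono t
  have hsumc : Summable (fun k : ℕ => c k) := summable_c hγ ha hcont hpos hmono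
  have hfnn : ∀ k, 0 ≤ f k := by
    intro k; have := hpos k (Nat.cast_nonneg k); simp only [hf]; positivity
  have hsplit := Summable.sum_add_tsum_nat_add (N+1) hsumf
  have hf0 : f 0 = 0 := by simp [hf]
  have hrange : ∑ k ∈ Finset.range (N+1), f k = ∑ k ∈ Finset.Icc 1 N, f k :=
    sum_shift f hf0 N
  have htail_nn : 0 ≤ ∑' i : ℕ, f (i + (N+1)) := tsum_nonneg (fun i => hfnn _)
  -- bounds on sin for k in Icc 1 N
  have hkt : ∀ k : ℕ, k ∈ Finset.Icc 1 N → 0 ≤ (k:ℝ) * t / 2 ∧ (k:ℝ) * t / 2 ≤ π / 2 := by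
    intro k hk
    simp only [Finset.mem_Icc] at hk
    have hkN : (k:ℝ) ≤ N := by exact_mod_cast hk.2
    have h1 : (N:ℝ) * t ≤ π := by
      rw [le_div_iff₀ ht] at hNt; linarith
    constructor
    · positivity
    · nlinarith
  -- lower bound for the partial sum
  have hlow : (1/π^2) * (t^2 * SN) ≤ ∑ k ∈ Finset.Icc 1 N, f k := by
    have : ∀ k ∈ Finset.Icc 1 N, (1/π^2) * (t^2 * (c k * (k:ℝ)^2)) ≤ f k := by
      intro k hk
      obtain ⟨h0, hhalf⟩ := hkt k hk
      have hsin := Real.mul_le_sin h0 hhalf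
      have hsin0 : 0 ≤ 2 / π * ((k:ℝ) * t / 2) := by positivity
      have hsq : (2 / π * ((k:ℝ) * t / 2))^2 ≤ Real.sin ((k:ℝ) * t / 2) ^ 2 :=
        pow_le_pow_left₀ hsin0 hsin 2
      have hck : 0 ≤ c k := (hpos k (Nat.cast_nonneg k)).le
      have : c k * (2 / π * ((k:ℝ) * t / 2))^2 ≤ f k := by
        simp only [hf]; nlinarith
      refine le_trans (le_of_eq ?_) this
      field_simp
    calc (1/π^2) * (t^2 * SN) = ∑ k ∈ Finset.Icc 1 N, (1/π^2) * (t^2 * (c k * (k:ℝ)^2)) := by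
          simp only [hSN, Finset.mul_sum]
      _ ≤ ∑ k ∈ Finset.Icc 1 N, f k := Finset.sum_le_sum this
  -- upper bound for the partial sum
  have hup : ∑ k ∈ Finset.Icc 1 N, f k ≤ (1/4) * (t^2 * SN) := by
    have : ∀ k ∈ Finset.Icc 1 N, f k ≤ (1/4) * (t^2 * (c k * (k:ℝ)^2)) := by
      intro k hk
      obtain ⟨h0, _⟩ := hkt k hk
      have hsinle : Real.sin ((k:ℝ) * t / 2) ≤ (k:ℝ) * t / 2 := Real.sin_le h0
      have hsinge : -((k:ℝ) * t / 2) ≤ Real.sin ((k:ℝ) * t / 2) := by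
        have := Real.neg_one_le_sin ((k:ℝ) * t / 2)
        nlinarith [Real.sin_le h0, Real.neg_one_le_sin ((k:ℝ) * t / 2),
          Real.sin_nonneg_of_nonneg_of_le_pi (x := (k:ℝ) * t / 2) h0 (by
            have := hkt k hk; nlinarith [this.2, hπ])]
      have hsq : Real.sin ((k:ℝ) * t / 2) ^ 2 ≤ ((k:ℝ) * t / 2)^2 := sq_le_sq' hsinge hsinle
      have hck : 0 ≤ c k := (hpos k (Nat.cast_nonneg k)).le
      have : f k ≤ c k * ((k:ℝ) * t / 2)^2 := by simp only [hf]; nlinarith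
      refine le_trans this (le_of_eq ?_)
      ring
    calc ∑ k ∈ Finset.Icc 1 N, f k ≤
        ∑ k ∈ Finset.Icc 1 N, (1/4) * (t^2 * (c k * (k:ℝ)^2)) := Finset.sum_le_sum this
      _ = (1/4) * (t^2 * SN) := by
          simp only [hSN, Finset.mul_sum]
  -- tail bound
  have htail : ∑' i : ℕ, f (i + (N+1)) ≤ 128 * (t^2 * SN) / ((γ-1) * π^2) := by
    have e1 : ∑' i : ℕ, f (i + (N+1)) ≤ ∑' i : ℕ, c ((i + (N+1) : ℕ)) := by
      refine Summable.tsum_le_tsum (fun i => ?_) ((summable_nat_add_iff (N+1)).mpr hsumf)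
        ((summable_nat_add_iff (N+1)).mpr hsumc)
      have hsin : Real.sin (((i + (N+1) : ℕ):ℝ) * t / 2) ^ 2 ≤ 1 := by
        rw [← Real.sin_sq_add_cos_sq (((i + (N+1) : ℕ):ℝ) * t / 2)]
        nlinarith [sq_nonneg (Real.cos (((i + (N+1) : ℕ):ℝ) * t / 2))]
      have := hpos ((i + (N+1) : ℕ)) (Nat.cast_nonneg _)
      simp only [hf]
      nlinarith
    have e2 : ∑' i : ℕ, c ((i + (N+1) : ℕ)) ≤ c N * N / (γ - 1) :=
      tsum_tail_le hγ ha hcont hpos hmono hNa'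
    have e3 : c N * (N:ℝ)^3 ≤ 32 * SN := SN_lower (by linarith) ha hpos hmono hN2 hNa
    have e4 : π^2 ≤ 4 * t^2 * (N:ℝ)^2 := by
      have h1 : π < ((N:ℝ) + 1) * t := by rwa [div_lt_iff₀ ht] at htN
      have hN1 : (1:ℝ) ≤ N := by exact_mod_cast le_trans (by norm_num) hN2
      have h2 : ((N:ℝ)+1) * t ≤ 2 * (N:ℝ) * t := by nlinarith
      nlinarith
    have hcN : 0 ≤ c N := (hpos N (Nat.cast_nonneg N)).le
    have hNnn : (0:ℝ) ≤ N := Nat.cast_nonneg N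
    rw [le_div_iff₀ (by positivity)]
    have t1 : (∑' i : ℕ, f (i + (N+1))) * ((γ-1) * π^2) ≤
        (c N * N / (γ - 1)) * ((γ-1) * π^2) := by
      apply mul_le_mul_of_nonneg_right (le_trans e1 e2) (by positivity)
    have t2 : (c N * N / (γ - 1)) * ((γ-1) * π^2) = c N * N * π^2 := by
      field_simp
    have t3 : c N * (N:ℝ) * π^2 ≤ c N * (N:ℝ) * (4 * t^2 * (N:ℝ)^2) := by
      apply mul_le_mul_of_nonneg_left e4 (by positivity)
    have t4 : c N * (N:ℝ) * (4 * t^2 * (N:ℝ)^2) = 4 * t^2 * (c N * (N:ℝ)^3) := by ring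
    have t5 : 4 * t^2 * (c N * (N:ℝ)^3) ≤ 4 * t^2 * (32 * SN) := by
      apply mul_le_mul_of_nonneg_left e3 (by positivity)
    calc (∑' i : ℕ, f (i + (N+1))) * ((γ-1) * π^2) ≤ c N * N * π^2 := by rw [← t2]; exact t1
      _ ≤ 4 * t^2 * (32 * SN) := by rw [← t4] at t5; linarith [t3, t5]
      _ = 128 * (t^2 * SN) := by ring
  constructor
  · -- lower bound
    have : (1/π^2) * (t^2 * SN) ≤ ∑' k : ℕ, f k := by
      rw [← hsplit, hrange]
      linarith
    calc (4/π^2) * (t^2 * SN) = 4 * ((1/π^2) * (t^2 * SN)) := by ring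
      _ ≤ 4 * ∑' k : ℕ, f k := by linarith
  · -- upper bound
    have h1 : ∑' k : ℕ, f k ≤ (1/4) * (t^2 * SN) + 128 * (t^2 * SN) / ((γ-1) * π^2) := by
      rw [← hsplit, hrange]
      linarith
    have h2 : 4 * (128 * (t^2 * SN) / ((γ-1) * π^2)) = (512/((γ-1) * π^2)) * (t^2 * SN) := by
      field_simp; ring
    calc 4 * ∑' k : ℕ, f k ≤ 4 * ((1/4) * (t^2 * SN)) + 4 * (128 * (t^2 * SN) / ((γ-1) * π^2)) := by
          linarith
      _ = (1 + 512/((γ-1) * π^2)) * (t^2 * SN) := by rw [h2]; ring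

lemma S_mono (hpos : ∀ x : ℝ, 0 ≤ x → 0 < c x) {m n : ℕ} (h : m ≤ n) :
    ∑ k ∈ Finset.Icc 1 m, c k * (k:ℝ)^2 ≤ ∑ k ∈ Finset.Icc 1 n, c k * (k:ℝ)^2 := by
  apply Finset.sum_le_sum_of_subset_of_nonneg
  · apply Finset.Icc_subset_Icc_right h
  · intro k _ _
    have := hpos k (Nat.cast_nonneg k); positivity

lemma S_succ_le (hγ : 0 < γ) (ha : 0 < a) (hpos : ∀ x : ℝ, 0 ≤ x → 0 < c x)
    (hmono : AntitoneOn (fun x => x ^ γ * c x) (Set.Ici a))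
    {n : ℕ} (hn : a ≤ (n:ℝ)) (hn1 : 1 ≤ n) :
    ∑ k ∈ Finset.Icc 1 (n+1), c k * (k:ℝ)^2 ≤ 5 * ∑ k ∈ Finset.Icc 1 n, c k * (k:ℝ)^2 := by
  have anti := c_anti hγ ha hpos hmono
  rw [← Finset.Ico_add_one_right_eq_Icc, Finset.sum_Ico_succ_top (by omega), Finset.Ico_add_one_right_eq_Icc]
  have h1 : c ((n+1:ℕ)) ≤ c n := by
    have : ((n+1:ℕ):ℝ) = (n:ℝ)+1 := by push_cast; ring
    rw [this]
    exact anti (Set.mem_Ici.mpr hn) (Set.mem_Ici.mpr (by linarith)) (by linarith)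
  have h2 : c n * (n:ℝ)^2 ≤ ∑ k ∈ Finset.Icc 1 n, c k * (k:ℝ)^2 := by
    apply Finset.single_le_sum (f := fun k : ℕ => c k * (k:ℝ)^2)
    · intro k hk
      simp only [Finset.mem_Icc] at hk
      have : (0:ℝ) ≤ k := Nat.cast_nonneg k
      have := hpos k this; positivity
    · simp [Finset.mem_Icc, hn1]
  have hn1' : (1:ℝ) ≤ n := by exact_mod_cast hn1
  have hc1 : 0 < c ((n+1:ℕ)) := hpos _ (Nat.cast_nonneg _)
  have hcast : ((n+1:ℕ):ℝ) = (n:ℝ)+1 := by push_cast; ring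
  have h3 : c ((n+1:ℕ)) * ((n+1:ℕ):ℝ)^2 ≤ 4 * (c n * (n:ℝ)^2) := by
    rw [hcast] at h1 ⊢
    have hcn : 0 ≤ c (n:ℝ) := (hpos n (Nat.cast_nonneg n)).le
    have hsq : ((n:ℝ)+1)^2 ≤ 4*(n:ℝ)^2 := by nlinarith
    nlinarith [mul_le_mul_of_nonneg_right h1 (sq_nonneg ((n:ℝ)+1)),
      mul_le_mul_of_nonneg_left hsq hcn]
  linarith

lemma S_le_KI (hγ : 0 < γ) (ha : 0 < a) (hcont : Continuous c)
    (hpos : ∀ x : ℝ, 0 ≤ x → 0 < c x)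
    (hmono : AntitoneOn (fun x => x ^ γ * c x) (Set.Ici a))
    {m₀ n : ℕ} (hm₀ : a ≤ (m₀:ℝ)) (h : m₀ ≤ n) :
    (∑ k ∈ Finset.Icc 1 n, c k * (k:ℝ)^2) ≤
      ((∑ k ∈ Finset.Icc 1 m₀, c k * (k:ℝ)^2) / (∫ x in (0:ℝ)..(m₀:ℝ), c x * x^2) + 4) *
        ∫ x in (0:ℝ)..(n:ℝ), c x * x^2 := by
  have hm₀0 : (0:ℝ) < m₀ := lt_of_lt_of_le ha hm₀
  have hI0 : 0 < ∫ x in (0:ℝ)..(m₀:ℝ), c x * x^2 := I_pos hcont hpos hm₀0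
  have hm₀1 : 1 ≤ m₀ := by exact_mod_cast Nat.one_le_iff_ne_zero.mpr (by
    intro hh; rw [hh] at hm₀0; simp at hm₀0)
  have hS0 : 0 < ∑ k ∈ Finset.Icc 1 m₀, c k * (k:ℝ)^2 := SN_pos hpos hm₀1
  have h1 := S_le_I_aux ha hcont hpos hmono hγ hm₀ h
  have hImono : (∫ x in (0:ℝ)..(m₀:ℝ), c x * x^2) ≤ ∫ x in (0:ℝ)..(n:ℝ), c x * x^2 :=
    I_mono hcont hpos (Nat.cast_nonneg m₀) (by exact_mod_cast h)
  set Sm := ∑ k ∈ Finset.Icc 1 m₀, c k * (k:ℝ)^2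
  set Im := ∫ x in (0:ℝ)..(m₀:ℝ), c x * x^2
  set In := ∫ x in (0:ℝ)..(n:ℝ), c x * x^2
  have h2 : Sm ≤ (Sm / Im) * In := by
    rw [div_mul_eq_mul_div, le_div_iff₀ hI0]
    nlinarith
  have h3 : ((Sm / Im) + 4) * In = (Sm/Im) * In + 4 * In := by ring
  linarith

lemma I_le_KS (hγ : 0 < γ) (ha : 0 < a) (hcont : Continuous c)
    (hpos : ∀ x : ℝ, 0 ≤ x → 0 < c x)
    (hmono : AntitoneOn (fun x => x ^ γ * c x) (Set.Ici a))
    {m₀ n : ℕ} (hm₀ : a ≤ (m₀:ℝ)) (h : m₀ ≤ n) :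
    (∫ x in (0:ℝ)..(n:ℝ), c x * x^2) ≤
      ((∫ x in (0:ℝ)..(m₀:ℝ), c x * x^2) / (∑ k ∈ Finset.Icc 1 m₀, c k * (k:ℝ)^2) + 4) *
        ∑ k ∈ Finset.Icc 1 n, c k * (k:ℝ)^2 := by
  have hm₀0 : (0:ℝ) < m₀ := lt_of_lt_of_le ha hm₀
  have hI0 : 0 < ∫ x in (0:ℝ)..(m₀:ℝ), c x * x^2 := I_pos hcont hpos hm₀0
  have hm₀1 : 1 ≤ m₀ := by exact_mod_cast Nat.one_le_iff_ne_zero.mpr (by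
    intro hh; rw [hh] at hm₀0; simp at hm₀0)
  have hS0 : 0 < ∑ k ∈ Finset.Icc 1 m₀, c k * (k:ℝ)^2 := SN_pos hpos hm₀1
  have h1 := I_le_S_aux ha hcont hpos hmono hγ hm₀ h
  have hSmono := S_mono hpos h (c := c)
  set Sm := ∑ k ∈ Finset.Icc 1 m₀, c k * (k:ℝ)^2
  set Sn := ∑ k ∈ Finset.Icc 1 n, c k * (k:ℝ)^2
  set Im := ∫ x in (0:ℝ)..(m₀:ℝ), c x * x^2
  have h2 : Im ≤ (Im / Sm) * Sn := by
    rw [div_mul_eq_mul_div, le_div_iff₀ hS0]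
    nlinarith
  have h3 : ((Im / Sm) + 4) * Sn = (Im/Sm) * Sn + 4 * Sn := by ring
  linarith

set_option maxHeartbeats 1000000 in
lemma part1 (hγ₁ : 1 < γ) (ha : 0 < a) (hcont : Continuous c)
    (hpos : ∀ x : ℝ, 0 ≤ x → 0 < c x)
    (hmono : AntitoneOn (fun x => x ^ γ * c x) (Set.Ici a)) :
    ∃ c₁ C₁ t₀ : ℝ, 0 < c₁ ∧ c₁ ≤ C₁ ∧ 0 < t₀ ∧
      ∀ t : ℝ, 0 < t → t < t₀ →
        c₁ * (t ^ 2 * ∫ x in (0:ℝ)..(Real.pi / t), c x * x ^ 2) ≤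
            4 * ∑' k : ℕ, c k * Real.sin (k * t / 2) ^ 2 ∧
          4 * ∑' k : ℕ, c k * Real.sin (k * t / 2) ^ 2 ≤
            C₁ * (t ^ 2 * ∫ x in (0:ℝ)..(Real.pi / t), c x * x ^ 2) := by
  have hπ : (0:ℝ) < π := Real.pi_pos
  have hγ0 : (0:ℝ) < γ := by linarith
  have hγ1 : (0:ℝ) < γ - 1 := by linarith
  set m₀ : ℕ := ⌈a⌉₊ + 1 with hm₀def
  have ham₀ : a ≤ (m₀:ℝ) := by
    have := Nat.le_ceil a
    push_cast [hm₀def]; linarith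
  have hm₀0 : (0:ℝ) < m₀ := lt_of_lt_of_le ha ham₀
  have hm₀1 : 1 ≤ m₀ := by omega
  set n₀ : ℕ := 2*m₀ + 4 with hn₀def
  have hI0 : 0 < ∫ x in (0:ℝ)..(m₀:ℝ), c x * x^2 := I_pos hcont hpos hm₀0
  have hS0 : 0 < ∑ k ∈ Finset.Icc 1 m₀, c k * (k:ℝ)^2 := SN_pos hpos hm₀1
  set Sm := ∑ k ∈ Finset.Icc 1 m₀, c k * (k:ℝ)^2
  set Im := ∫ x in (0:ℝ)..(m₀:ℝ), c x * x^2
  set K₁ : ℝ := Sm / Im + 4 with hK₁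
  set K₂ : ℝ := 5 * (Im / Sm + 4) with hK₂
  have hK₁0 : 0 < K₁ := by have : 0 < Sm / Im := div_pos hS0 hI0; rw [hK₁]; linarith
  have hK₂0 : 0 < K₂ := by have : 0 < Im / Sm := div_pos hI0 hS0; rw [hK₂]; linarith
  set cl : ℝ := 4 / π^2 with hcl
  set cu : ℝ := 1 + 512/((γ-1) * π^2) with hcu
  have hcl0 : 0 < cl := by rw [hcl]; positivity
  have hcu0 : 0 < cu := by rw [hcu]; positivity
  refine ⟨cl/K₂, max (cl/K₂) (cu*K₁), π/n₀, by positivity, le_max_left _ _, by positivity, ?_⟩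
  intro t ht htlt
  set N : ℕ := ⌊π/t⌋₊ with hNdef
  have hπt : (0:ℝ) < π/t := by positivity
  have hn₀N : (n₀:ℝ) ≤ π/t := by
    rw [lt_div_iff₀ (by positivity : (0:ℝ) < (n₀:ℕ))] at htlt
    rw [le_div_iff₀ ht]; linarith
  have hNn₀ : n₀ ≤ N := Nat.le_floor hn₀N
  have hNt : (N:ℝ) ≤ π/t := Nat.floor_le hπt.le
  have htN : π/t < (N:ℝ)+1 := Nat.lt_floor_add_one _
  have hN2 : 2 ≤ N := by omega
  have ham₀N2 : m₀ ≤ N/2 := by omega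
  have hNa : a ≤ ((N/2:ℕ):ℝ) := le_trans ham₀ (by exact_mod_cast ham₀N2)
  have hNa' : a ≤ (N:ℝ) := le_trans ham₀ (by exact_mod_cast (by omega : m₀ ≤ N))
  obtain ⟨hwl, hwu⟩ := w_comp hγ₁ ha hcont hpos hmono ht hNt htN hN2 hNa hNa'
  set SN := ∑ k ∈ Finset.Icc 1 N, c k * (k:ℝ)^2 with hSNdef
  set Iv := ∫ x in (0:ℝ)..(π/t), c x * x^2 with hIv
  have hIv0 : 0 ≤ Iv := by
    apply intervalIntegral.integral_nonneg hπt.le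
    intro x hx; have := hpos x hx.1; positivity
  -- Iv ≤ K₂ * SN
  have hIvK : Iv ≤ K₂ * SN := by
    have h1 : Iv ≤ ∫ x in (0:ℝ)..((N:ℝ)+1), c x * x^2 := by
      rw [hIv]
      have e : ((N:ℝ)+1) = ((N+1:ℕ):ℝ) := by push_cast; ring
      rw [e]
      exact I_mono hcont hpos hπt.le (by rw [← e]; linarith)
    have h2 := I_le_KS hγ0 ha hcont hpos hmono ham₀ (show m₀ ≤ N+1 by omega)
    have h3 := S_succ_le hγ0 ha hpos hmono hNa' (by omega)
    have e : ((N:ℝ)+1) = ((N+1:ℕ):ℝ) := by push_cast; ring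
    rw [e] at h1
    have h4 : (∫ x in (0:ℝ)..((N+1:ℕ):ℝ), c x * x^2) ≤ (Im/Sm + 4) * (5 * SN) := by
      refine le_trans h2 ?_
      apply mul_le_mul_of_nonneg_left h3
      have : 0 < Im / Sm := div_pos hI0 hS0
      linarith
    rw [hK₂]
    calc Iv ≤ (Im/Sm + 4) * (5 * SN) := le_trans h1 h4
      _ = 5 * (Im/Sm + 4) * SN := by ring
  -- SN ≤ K₁ * Iv
  have hSNK : SN ≤ K₁ * Iv := by
    have h1 : (∫ x in (0:ℝ)..(N:ℝ), c x * x^2) ≤ Iv := I_mono hcont hpos (Nat.cast_nonneg N) hNt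
    have h2 := S_le_KI hγ0 ha hcont hpos hmono ham₀ (show m₀ ≤ N by omega)
    calc SN ≤ K₁ * ∫ x in (0:ℝ)..(N:ℝ), c x * x^2 := h2
      _ ≤ K₁ * Iv := mul_le_mul_of_nonneg_left h1 hK₁0.le
  constructor
  · -- lower bound
    have h1 : t^2 * Iv ≤ K₂ * (t^2 * SN) := by nlinarith
    have h2 : (cl/K₂) * (t^2 * Iv) ≤ (cl/K₂) * (K₂ * (t^2 * SN)) :=
      mul_le_mul_of_nonneg_left h1 (by positivity)
    have h3 : (cl/K₂) * (K₂ * (t^2 * SN)) = cl * (t^2 * SN) := by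
      field_simp
    calc (cl/K₂) * (t^2 * Iv) ≤ cl * (t^2 * SN) := by rw [← h3]; exact h2
      _ ≤ 4 * ∑' k : ℕ, c k * Real.sin (k * t / 2) ^ 2 := hwl
  · -- upper bound
    have h1 : cu * (t^2 * SN) ≤ cu * (K₁ * (t^2 * Iv)) := by
      apply mul_le_mul_of_nonneg_left _ hcu0.le
      nlinarith
    calc 4 * ∑' k : ℕ, c k * Real.sin (k * t / 2) ^ 2 ≤ cu * (t^2 * SN) := hwu
      _ ≤ cu * K₁ * (t^2 * Iv) := by rw [mul_assoc]; exact h1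
      _ ≤ max (cl/K₂) (cu*K₁) * (t^2 * Iv) := by
          apply mul_le_mul_of_nonneg_right (le_max_right _ _)
          positivity

lemma w_cont (hγ : 1 < γ) (ha : 0 < a) (hcont : Continuous c)
    (hpos : ∀ x : ℝ, 0 ≤ x → 0 < c x)
    (hmono : AntitoneOn (fun x => x ^ γ * c x) (Set.Ici a)) :
    Continuous (fun t : ℝ => ∑' k : ℕ, c k * Real.sin (k * t / 2) ^ 2) := by
  apply continuous_tsum
  · intro k
    exact continuous_const.mul ((Real.continuous_sin.comp (by continuity)).pow 2)
  · exact summable_c hγ ha hcont hpos hmono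
  · intro k x
    have hck : 0 < c k := hpos k (Nat.cast_nonneg k)
    have hs : Real.sin (k * x / 2) ^ 2 ≤ 1 := by
      rw [← Real.sin_sq_add_cos_sq (k * x / 2)]
      nlinarith [sq_nonneg (Real.cos (k * x / 2))]
    rw [Real.norm_eq_abs, abs_of_nonneg (by positivity)]
    nlinarith

lemma piece_lintegral {S : ℝ} (hS : 0 < S) {n : ℕ} (hn : 1 ≤ n) :
    ∫⁻ t in Set.Ioc (Real.pi/((n:ℝ)+1)) (Real.pi/(n:ℝ)), ENNReal.ofReal ((t^2 * S)⁻¹) =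
      ENNReal.ofReal (1/(Real.pi * S)) := by
  have hπ : (0:ℝ) < π := Real.pi_pos
  have hn1 : (1:ℝ) ≤ n := by exact_mod_cast hn
  set α := π/((n:ℝ)+1) with hα
  set β := π/(n:ℝ) with hβ
  have hα0 : 0 < α := by rw [hα]; positivity
  have hαβ : α ≤ β := by
    rw [hα, hβ]
    apply div_le_div_of_nonneg_left hπ.le (by linarith) (by linarith)
  have hg : ContinuousOn (fun t : ℝ => (t^2 * S)⁻¹) (Set.Icc α β) := by
    apply ContinuousOn.inv₀
    · exact ((continuous_pow 2).mul continuous_const).continuousOn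
    · intro x hx
      have hx0 : 0 < x := lt_of_lt_of_le hα0 hx.1
      positivity
  have hInt : IntegrableOn (fun t : ℝ => (t^2 * S)⁻¹) (Set.Ioc α β) :=
    (hg.integrableOn_compact isCompact_Icc).mono_set Set.Ioc_subset_Icc_self
  rw [← ofReal_integral_eq_lintegral_ofReal hInt (Filter.Eventually.of_forall (fun x => by
      have : (0:ℝ) ≤ x^2 * S := by positivity
      exact inv_nonneg.mpr this))]
  congr 1
  rw [← intervalIntegral.integral_of_le hαβ]
  have hrw : ∀ t : ℝ, (t^2 * S)⁻¹ = S⁻¹ * (t:ℝ)^(-2:ℤ) := by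
    intro t
    rw [mul_inv, zpow_neg, zpow_two]
    ring_nf
  simp_rw [hrw]
  rw [intervalIntegral.integral_const_mul]
  rw [integral_zpow (Or.inr ⟨by norm_num, by
    rw [Set.uIcc_of_le hαβ]
    intro hmem
    exact absurd hmem.1 (not_le.mpr hα0)⟩)]
  have hβinv : β^(-2+1:ℤ) = (n:ℝ)/π := by
    rw [hβ]
    norm_num
  have hαinv : α^(-2+1:ℤ) = ((n:ℝ)+1)/π := by
    rw [hα]
    norm_num
  rw [hβinv, hαinv]
  have : ((n:ℝ)/π - ((n:ℝ)+1)/π) / ((-2:ℤ)+1) = 1/π := by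
    push_cast
    field_simp
    ring
  rw [this]
  rw [one_div, one_div, mul_inv]
  ring

set_option maxHeartbeats 2000000 in
lemma part2 (hγ₁ : 1 < γ) (ha : 0 < a) (hcont : Continuous c)
    (hpos : ∀ x : ℝ, 0 ≤ x → 0 < c x)
    (hmono : AntitoneOn (fun x => x ^ γ * c x) (Set.Ici a)) :
    IntegrableOn
        (fun t : ℝ => 1 / (4 * ∑' k : ℕ, c k * Real.sin (k * t / 2) ^ 2))
        (Set.Ioc 0 Real.pi) ↔
      Summable fun n : ℕ => 1 / ∑ k ∈ Finset.Icc 1 (n + 1), c k * (k : ℝ) ^ 2 := by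
  have hπ : (0:ℝ) < π := Real.pi_pos
  have hγ1 : (0:ℝ) < γ - 1 := by linarith
  set m₀ : ℕ := ⌈a⌉₊ + 1 with hm₀def
  have ham₀ : a ≤ (m₀:ℝ) := by
    have := Nat.le_ceil a
    push_cast [hm₀def]; linarith
  set n₀ : ℕ := 2*m₀ + 4 with hn₀def
  have hn₀1 : 1 ≤ n₀ := by omega
  set t₀ : ℝ := π / n₀ with ht₀def
  have ht₀pos : 0 < t₀ := by rw [ht₀def]; positivity
  have ht₀π : t₀ ≤ π := by
    rw [ht₀def]
    apply div_le_self hπ.le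
    exact_mod_cast hn₀1
  set w : ℝ → ℝ := fun t => 4 * ∑' k : ℕ, c k * Real.sin (k * t / 2) ^ 2 with hwdef
  have hwcont : Continuous w := continuous_const.mul (w_cont hγ₁ ha hcont hpos hmono)
  have hwpos : ∀ t : ℝ, 0 < t → t ≤ π → 0 < w t := by
    intro t ht htπ
    have hsumf := summable_f hγ₁ ha hcont hpos hmono t
    have h1 : c 1 * Real.sin (1 * t / 2) ^ 2 ≤ ∑' k : ℕ, c k * Real.sin (k * t / 2) ^ 2 := by
      have := Summable.le_tsum hsumf 1 (fun j _ => by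
        have := hpos j (Nat.cast_nonneg j); positivity)
      simpa using this
    have hsin : 0 < Real.sin (1 * t / 2) := by
      apply Real.sin_pos_of_pos_of_lt_pi
      · linarith
      · nlinarith
    have hc1 : 0 < c 1 := hpos 1 (by norm_num)
    have : 0 < c 1 * Real.sin (1 * t / 2) ^ 2 := by positivity
    simp only [hwdef]
    push_cast
    nlinarith [le_trans this.le h1, this]
  set SNf : ℝ → ℝ := fun t => ∑ k ∈ Finset.Icc 1 ⌊π/t⌋₊, c k * (k:ℝ)^2 with hSNf
  set h : ℝ → ℝ := fun t => (t^2 * SNf t)⁻¹ with hhdef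
  have hfloor : Measurable (fun t : ℝ => ⌊π/t⌋₊) :=
    Nat.measurable_floor.comp ((measurable_const : Measurable fun _ : ℝ => Real.pi).div measurable_id)
  have hSNf_meas : Measurable SNf :=
    (measurable_from_nat (f := fun n : ℕ => ∑ k ∈ Finset.Icc 1 n, c k * (k:ℝ)^2)).comp hfloor
  have hh_meas : Measurable h :=
    ((measurable_id.pow_const 2).mul hSNf_meas).inv
  have hh_nonneg : ∀ t, 0 ≤ h t := by
    intro t
    apply inv_nonneg.mpr
    apply mul_nonneg (sq_nonneg t)
    apply Finset.sum_nonneg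
    intro k _
    have := hpos k (Nat.cast_nonneg k); positivity
  set cl : ℝ := 4 / π^2 with hcl
  set cu : ℝ := 1 + 512/((γ-1) * π^2) with hcu
  have hcl0 : 0 < cl := by rw [hcl]; positivity
  have hcu0 : 0 < cu := by rw [hcu]; positivity
  -- facts for t in Ioc 0 t₀
  have hfacts : ∀ t ∈ Set.Ioc (0:ℝ) t₀, n₀ ≤ ⌊π/t⌋₊ ∧ 0 < SNf t ∧
      cl * (t^2 * SNf t) ≤ w t ∧ w t ≤ cu * (t^2 * SNf t) := by
    intro t ht
    obtain ⟨ht0, htle⟩ := ht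
    set N : ℕ := ⌊π/t⌋₊ with hN
    have hπt : (0:ℝ) < π/t := by positivity
    have hn₀N' : (n₀:ℝ) ≤ π/t := by
      rw [le_div_iff₀ ht0]
      rw [ht₀def, le_div_iff₀ (by positivity : (0:ℝ) < (n₀:ℕ))] at htle
      linarith
    have hNn₀ : n₀ ≤ N := Nat.le_floor hn₀N'
    have hNt : (N:ℝ) ≤ π/t := Nat.floor_le hπt.le
    have htN : π/t < (N:ℝ)+1 := Nat.lt_floor_add_one _
    have hN2 : 2 ≤ N := by omega
    have hNa : a ≤ ((N/2:ℕ):ℝ) := le_trans ham₀ (by exact_mod_cast (by omega : m₀ ≤ N/2))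
    have hNa' : a ≤ (N:ℝ) := le_trans ham₀ (by exact_mod_cast (by omega : m₀ ≤ N))
    obtain ⟨hwl, hwu⟩ := w_comp hγ₁ ha hcont hpos hmono ht0 hNt htN hN2 hNa hNa'
    exact ⟨hNn₀, SN_pos hpos (by omega), hwl, hwu⟩
  -- Step A : reduce from Ioc 0 π to Ioc 0 t₀
  have hunion : Set.Ioc (0:ℝ) t₀ ∪ Set.Ioc t₀ π = Set.Ioc (0:ℝ) π :=
    Set.Ioc_union_Ioc_eq_Ioc ht₀pos.le ht₀π
  have int2 : IntegrableOn (fun t => 1 / w t) (Set.Ioc t₀ π) := by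
    apply IntegrableOn.mono_set _ Set.Ioc_subset_Icc_self
    apply ContinuousOn.integrableOn_compact isCompact_Icc
    apply ContinuousOn.div continuousOn_const hwcont.continuousOn
    intro x hx
    exact (hwpos x (lt_of_lt_of_le ht₀pos hx.1) hx.2).ne'
  have stepA : IntegrableOn (fun t => 1 / w t) (Set.Ioc 0 π) ↔
      IntegrableOn (fun t => 1 / w t) (Set.Ioc 0 t₀) := by
    constructor
    · intro hI
      exact hI.mono_set (by rw [← hunion]; exact Set.subset_union_left)
    · intro hI
      rw [← hunion]
      exact (integrableOn_union).mpr ⟨hI, int2⟩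
  -- Step B : comparison with h on Ioc 0 t₀
  have stepB : IntegrableOn (fun t => 1 / w t) (Set.Ioc 0 t₀) ↔
      IntegrableOn h (Set.Ioc 0 t₀) := by
    have hmeasIoc : MeasurableSet (Set.Ioc (0:ℝ) t₀) := measurableSet_Ioc
    have hw_aesm : AEStronglyMeasurable (fun t => 1 / w t)
        (volume.restrict (Set.Ioc (0:ℝ) t₀)) :=
      (measurable_const.div hwcont.measurable).aestronglyMeasurable
    constructor
    · intro hI
      refine Integrable.mono' (hI.const_mul cu) hh_meas.aestronglyMeasurable ?_
      rw [ae_restrict_iff' hmeasIoc]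
      refine Filter.Eventually.of_forall (fun t htmem => ?_)
      obtain ⟨hN, hSN0, hwl, hwu⟩ := hfacts t htmem
      have ht0 := htmem.1
      have hX : 0 < t^2 * SNf t := by positivity
      have hwt : 0 < w t := lt_of_lt_of_le (by positivity : (0:ℝ) < cl*(t^2*SNf t)) hwl
      rw [Real.norm_eq_abs, abs_of_nonneg (hh_nonneg t)]
      show (t^2 * SNf t)⁻¹ ≤ cu * (1 / w t)
      rw [inv_eq_one_div, mul_one_div, div_le_div_iff₀ hX hwt]
      linarith
    · intro hI
      refine Integrable.mono' (hI.const_mul cl⁻¹) hw_aesm ?_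
      rw [ae_restrict_iff' hmeasIoc]
      refine Filter.Eventually.of_forall (fun t htmem => ?_)
      obtain ⟨hN, hSN0, hwl, hwu⟩ := hfacts t htmem
      have ht0 := htmem.1
      have hX : 0 < t^2 * SNf t := by positivity
      have hwt : 0 < w t := lt_of_lt_of_le (by positivity : (0:ℝ) < cl*(t^2*SNf t)) hwl
      rw [Real.norm_eq_abs, abs_of_nonneg (by positivity : (0:ℝ) ≤ 1 / w t)]
      show 1 / w t ≤ cl⁻¹ * (t^2 * SNf t)⁻¹
      rw [← mul_inv]
      rw [inv_eq_one_div (cl * (t^2 * SNf t))]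
      apply one_div_le_one_div_of_le (by positivity) hwl
  -- Step C : integral of h equals sum
  have stepC : IntegrableOn h (Set.Ioc 0 t₀) ↔
      Summable (fun n : ℕ => 1 / ∑ k ∈ Finset.Icc 1 (n + 1), c k * (k : ℝ) ^ 2) := by
    set S : ℕ → ℝ := fun n => ∑ k ∈ Finset.Icc 1 n, c k * (k:ℝ)^2 with hSdef
    have hSpos : ∀ n : ℕ, 1 ≤ n → 0 < S n := fun n hn => SN_pos hpos hn
    set P : ℕ → Set ℝ := fun k => Set.Ioc (π/(((n₀+k:ℕ):ℝ)+1)) (π/((n₀+k:ℕ):ℝ)) with hPdef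
    have hPmeas : ∀ k, MeasurableSet (P k) := fun k => measurableSet_Ioc
    have hcastpos : ∀ k : ℕ, (0:ℝ) < ((n₀+k:ℕ):ℝ) := by
      intro k
      have : 0 < n₀ + k := by omega
      exact_mod_cast this
    have hdisj : Pairwise (Function.onFun Disjoint P) := by
      intro i j hij
      have key : ∀ i j : ℕ, i < j → Disjoint (P i) (P j) := by
        intro i j hlt
        apply Set.Ioc_disjoint_Ioc.mpr
        have h1 : π/((n₀+j:ℕ):ℝ) ≤ π/(((n₀+i:ℕ):ℝ)+1) := by
          apply div_le_div_of_nonneg_left hπ.le (by positivity)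
          have : ((n₀+i:ℕ):ℝ)+1 = ((n₀+i+1:ℕ):ℝ) := by push_cast; ring
          rw [this]
          exact_mod_cast (by omega : n₀+i+1 ≤ n₀+j)
        calc min (π/((n₀+i:ℕ):ℝ)) (π/((n₀+j:ℕ):ℝ)) ≤ π/((n₀+j:ℕ):ℝ) := min_le_right _ _
          _ ≤ π/(((n₀+i:ℕ):ℝ)+1) := h1
          _ ≤ max (π/(((n₀+i:ℕ):ℝ)+1)) (π/(((n₀+j:ℕ):ℝ)+1)) := le_max_left _ _
      rcases lt_or_gt_of_ne hij with hlt | hgt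
      · exact key i j hlt
      · exact (key j i hgt).symm
    have hcover : Set.Ioc (0:ℝ) t₀ = ⋃ k, P k := by
      ext t
      simp only [Set.mem_iUnion, Set.mem_Ioc]
      constructor
      · rintro ⟨ht0, htle⟩
        set N : ℕ := ⌊π/t⌋₊ with hN
        have hπt : (0:ℝ) < π/t := by positivity
        have hn₀N' : (n₀:ℝ) ≤ π/t := by
          rw [le_div_iff₀ ht0]
          rw [ht₀def, le_div_iff₀ (by positivity : (0:ℝ) < (n₀:ℕ))] at htle
          linarith
        have hNn₀ : n₀ ≤ N := Nat.le_floor hn₀N'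
        have hNt : (N:ℝ) ≤ π/t := Nat.floor_le hπt.le
        have htN : π/t < (N:ℝ)+1 := Nat.lt_floor_add_one _
        have hNpos : (0:ℝ) < (N:ℝ) := by
          have : 1 ≤ N := by omega
          exact_mod_cast this
        refine ⟨N - n₀, ?_, ?_⟩
        · have he : (n₀ + (N - n₀) : ℕ) = N := by omega
          rw [he, div_lt_iff₀ (by linarith : (0:ℝ) < (N:ℝ)+1)]
          rw [div_lt_iff₀ ht0] at htN
          linarith
        · have he : (n₀ + (N - n₀) : ℕ) = N := by omega
          rw [he, le_div_iff₀ hNpos]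
          rw [le_div_iff₀ ht0] at hNt
          linarith
      · rintro ⟨k, hk1, hk2⟩
        have hc1 : (0:ℝ) < ((n₀+k:ℕ):ℝ)+1 := by linarith [hcastpos k]
        have ht0 : 0 < t := lt_trans (by positivity) hk1
        refine ⟨ht0, le_trans hk2 ?_⟩
        rw [ht₀def]
        apply div_le_div_of_nonneg_left hπ.le (by positivity : (0:ℝ) < (n₀:ℕ))
        exact_mod_cast (by omega : n₀ ≤ n₀ + k)
    have hfloorP : ∀ k : ℕ, ∀ t ∈ P k, ⌊π/t⌋₊ = n₀+k := by
      intro k t htP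
      obtain ⟨h1, h2⟩ := htP
      have hc0 : (0:ℝ) < ((n₀+k:ℕ):ℝ) := hcastpos k
      have ht0 : 0 < t := lt_trans (by positivity) h1
      rw [Nat.floor_eq_iff (by positivity : (0:ℝ) ≤ π/t)]
      constructor
      · rw [le_div_iff₀ ht0]
        rw [le_div_iff₀ hc0] at h2
        linarith
      · rw [div_lt_iff₀ ht0]
        rw [div_lt_iff₀ (by linarith : (0:ℝ) < ((n₀+k:ℕ):ℝ)+1)] at h1
        linarith
    have hL : ∫⁻ t in Set.Ioc 0 t₀, ENNReal.ofReal (h t) =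
        ∑' k : ℕ, ENNReal.ofReal (1/(π * S (n₀+k))) := by
      rw [hcover, lintegral_iUnion hPmeas hdisj]
      congr 1
      funext k
      have e1 : ∫⁻ t in P k, ENNReal.ofReal (h t) =
          ∫⁻ t in P k, ENNReal.ofReal ((t^2 * S (n₀+k))⁻¹) := by
        apply setLIntegral_congr_fun (hPmeas k)
        intro t htP
        have hfl := hfloorP k t htP
        simp only [hhdef, hSNf, hSdef, hfl]
      rw [e1]
      exact piece_lintegral (hSpos (n₀+k) (by omega)) (by omega : 1 ≤ n₀+k)
    have hnn : ∀ k : ℕ, 0 ≤ 1/(π * S (n₀+k)) := by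
      intro k
      have := hSpos (n₀+k) (by omega)
      positivity
    have iff1 : IntegrableOn h (Set.Ioc 0 t₀) ↔
        ∫⁻ t in Set.Ioc 0 t₀, ENNReal.ofReal (h t) < ⊤ := by
      constructor
      · intro hI
        exact (hasFiniteIntegral_iff_ofReal
          (Filter.Eventually.of_forall hh_nonneg)).mp hI.hasFiniteIntegral
      · intro hfin
        exact ⟨hh_meas.aestronglyMeasurable,
          (hasFiniteIntegral_iff_ofReal (Filter.Eventually.of_forall hh_nonneg)).mpr hfin⟩
    have iff2 : (∑' k : ℕ, ENNReal.ofReal (1/(π * S (n₀+k))) < ⊤) ↔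
        Summable (fun k : ℕ => 1/(π * S (n₀+k))) := by
      rw [lt_top_iff_ne_top]
      have e : (fun k : ℕ => ENNReal.ofReal (1/(π * S (n₀+k)))) =
          fun k : ℕ => (((1/(π * S (n₀+k))).toNNReal : NNReal) : ENNReal) := rfl
      rw [e, ENNReal.tsum_coe_ne_top_iff_summable, ← NNReal.summable_coe]
      have e2 : (fun k : ℕ => (((1/(π * S (n₀+k))).toNNReal : NNReal) : ℝ)) =
          fun k : ℕ => 1/(π * S (n₀+k)) := funext fun k => Real.coe_toNNReal _ (hnn k)
      rw [e2]
    have iff3 : Summable (fun k : ℕ => 1/(π * S (n₀+k))) ↔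
        Summable (fun k : ℕ => 1/S (n₀+k)) := by
      constructor
      · intro hs
        refine (summable_congr ?_).mp (hs.mul_left π)
        intro k
        have := (hSpos (n₀+k) (by omega)).ne'
        field_simp
      · intro hs
        refine (summable_congr ?_).mp (hs.mul_left π⁻¹)
        intro k
        have := (hSpos (n₀+k) (by omega)).ne'
        rw [one_div, one_div, mul_inv]
    have iff4 : Summable (fun k : ℕ => 1/S (n₀+k)) ↔
        Summable (fun n : ℕ => 1/S (n+1)) := by
      have e : (fun k : ℕ => 1/S (n₀+k)) = fun k : ℕ => 1/S (k+n₀) := by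
        funext k; rw [add_comm]
      have A := summable_nat_add_iff (f := fun n : ℕ => 1/S n) n₀
      have B := summable_nat_add_iff (f := fun n : ℕ => 1/S n) 1
      rw [e]
      exact A.trans B.symm
    rw [iff1, hL, iff2, iff3, iff4]
  rw [hwdef] at stepA stepB
  rw [stepA, stepB, stepC]

end LKS12

open MeasureTheory

/-- For coefficients `c_k = c(k)` with `x^γ c(x)` eventually decreasing (`1 < γ < 3`),
the LKS weight satisfies `w(e^{it}) ≍ W(t) = t² ∫₀^{π/t} c(x)x² dx` as `t → 0⁺`, and
consequently `1/w ∈ L¹(𝕋)` iff `Σ_{n≥1} 1/(Σ_{k=1}^n c_k k²) < ∞`. -/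
theorem stmt_12 (γ : ℝ) (hγ₁ : 1 < γ) (hγ₃ : γ < 3) (c : ℝ → ℝ)
    (hcont : Continuous c) (hpos : ∀ x : ℝ, 0 ≤ x → 0 < c x)
    (a : ℝ) (ha : 0 < a)
    (hmono : AntitoneOn (fun x => x ^ γ * c x) (Set.Ici a)) :
    (∃ c₁ C₁ t₀ : ℝ, 0 < c₁ ∧ c₁ ≤ C₁ ∧ 0 < t₀ ∧
      ∀ t : ℝ, 0 < t → t < t₀ →
        c₁ * (t ^ 2 * ∫ x in (0:ℝ)..(Real.pi / t), c x * x ^ 2) ≤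
            4 * ∑' k : ℕ, c k * Real.sin (k * t / 2) ^ 2 ∧
          4 * ∑' k : ℕ, c k * Real.sin (k * t / 2) ^ 2 ≤
            C₁ * (t ^ 2 * ∫ x in (0:ℝ)..(Real.pi / t), c x * x ^ 2))
    ∧ (IntegrableOn
        (fun t : ℝ => 1 / (4 * ∑' k : ℕ, c k * Real.sin (k * t / 2) ^ 2))
        (Set.Ioc 0 Real.pi) ↔
      Summable fun n : ℕ => 1 / ∑ k ∈ Finset.Icc 1 (n + 1), c k * (k : ℝ) ^ 2) := by
  exact ⟨LKS12.part1 hγ₁ ha hcont hpos hmono, LKS12.part2 hγ₁ ha hcont hpos hmono⟩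
end

section
/- Let c(x) be positive and piecewise differentiable with x^γ c(x) eventually decreasing for some γ ∈ (1,3), and let a be chosen so that x^γ c(x) decreases on [a, ∞). Then for any C > (3−γ)/(γ−1), one has C ∫_a^s y² c(y) dy ≥ s² ∫_s^∞ c(x) dx − const for all s ≥ a. -/
open MeasureTheory

/-- Key integral inequality: if `x^γ c(x)` decreases on `[a, ∞)` with `1 < γ < 3`, then
for every `C > (3−γ)/(γ−1)` there is a constant `K` with
`s² ∫_s^∞ c dx − K ≤ C ∫_a^s y² c(y) dy` for all `s ≥ a`. -/
theorem stmt_13 (γ : ℝ) (hγ₁ : 1 < γ) (hγ₃ : γ < 3) (a : ℝ) (ha : 0 < a)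
    (c : ℝ → ℝ) (hpos : ∀ x : ℝ, a ≤ x → 0 < c x)
    (hcont : ContinuousOn c (Set.Ici a))
    (hint : IntegrableOn c (Set.Ici a))
    (hmono : AntitoneOn (fun x => x ^ γ * c x) (Set.Ici a)) :
    ∀ C : ℝ, (3 - γ) / (γ - 1) < C →
      ∃ K : ℝ, ∀ s : ℝ, a ≤ s →
        s ^ 2 * (∫ x in Set.Ioi s, c x) - K ≤ C * ∫ y in a..s, y ^ 2 * c y := by
  intro C hC
  set F : ℝ → ℝ := fun y => ∫ x in Set.Ioi y, c x with hF
  have hγ' : (0 : ℝ) < γ - 1 := by linarith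
  -- Key pointwise inequality: (γ-1) F y ≤ y * c y for y ≥ a.
  have key : ∀ y : ℝ, a ≤ y → (γ - 1) * F y ≤ y * c y := by
    intro y hy
    have hy0 : 0 < y := lt_of_lt_of_le ha hy
    have hintc : IntegrableOn c (Set.Ioi y) :=
      hint.mono_set (fun x hx => le_trans hy (le_of_lt hx))
    have hintr : IntegrableOn (fun x => (y ^ γ * c y) * x ^ (-γ)) (Set.Ioi y) :=
      (integrableOn_Ioi_rpow_of_lt (by linarith : -γ < -1) hy0).const_mul _
    have hb : F y ≤ ∫ x in Set.Ioi y, (y ^ γ * c y) * x ^ (-γ) := by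
      apply setIntegral_mono_on hintc hintr measurableSet_Ioi
      intro x hx
      have hx' : y < x := hx
      have hx0 : 0 < x := hy0.trans hx'
      have hm : x ^ γ * c x ≤ y ^ γ * c y :=
        hmono hy (le_trans hy hx'.le) hx'.le
      have h1 : c x = (x ^ γ * c x) * x ^ (-γ) := by
        rw [mul_comm (x ^ γ) (c x), mul_assoc, ← Real.rpow_add hx0]
        simp
      rw [h1]
      exact mul_le_mul_of_nonneg_right hm (Real.rpow_nonneg hx0.le _)
    have hval : ∫ x in Set.Ioi y, (y ^ γ * c y) * x ^ (-γ)
        = (y ^ γ * c y) * (y ^ (1 - γ) / (γ - 1)) := by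
      rw [MeasureTheory.integral_const_mul, integral_Ioi_rpow_of_lt (by linarith : -γ < -1) hy0]
      congr 1
      rw [show -γ + 1 = 1 - γ from by ring,
        div_eq_div_iff (by intro h; apply absurd h; intro h'; linarith [h'] : (1:ℝ) - γ ≠ 0)
          (by linarith : γ - 1 ≠ 0)]
      ring
    have hyy : y ^ γ * y ^ (1 - γ) = y := by
      rw [← Real.rpow_add hy0]; norm_num
    have hc : (y ^ γ * c y) * (y ^ (1 - γ) / (γ - 1)) = y * c y / (γ - 1) := by
      rw [mul_div_assoc', mul_right_comm, hyy]
    rw [hval, hc] at hb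
    calc (γ - 1) * F y ≤ (γ - 1) * (y * c y / (γ - 1)) :=
          mul_le_mul_of_nonneg_left hb hγ'.le
      _ = y * c y := by field_simp
  -- F y = F a - ∫ t in a..y, c t for y ≥ a.
  have hF_eq : ∀ y : ℝ, a ≤ y → F y = F a - ∫ t in a..y, c t := by
    intro y hy
    have h1 : IntegrableOn c (Set.Ioc a y) :=
      hint.mono_set (fun x hx => le_of_lt hx.1)
    have h2 : IntegrableOn c (Set.Ioi y) :=
      hint.mono_set (fun x hx => le_trans hy (le_of_lt hx))
    have h3 : (∫ t in Set.Ioc a y, c t) + F y = F a := by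
      rw [hF]
      rw [← setIntegral_union (Set.Ioc_disjoint_Ioi le_rfl) measurableSet_Ioi h1 h2]
      rw [Set.Ioc_union_Ioi_eq_Ioi hy]
    rw [intervalIntegral.integral_of_le hy]
    linarith
  refine ⟨a ^ 2 * F a, ?_⟩
  intro s hs
  have huIcc : Set.uIcc a s = Set.Icc a s := Set.uIcc_of_le hs
  -- continuity of F on Icc a s
  have hprim : ContinuousOn (fun y => ∫ t in a..y, c t) (Set.Icc a s) := by
    have h := intervalIntegral.continuousOn_primitive_interval (μ := volume)
      (f := c) (a := a) (b := s) (hint.mono_set (huIcc ▸ Set.Icc_subset_Ici_self))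
    rwa [huIcc] at h
  have hFconts : ContinuousOn F (Set.Icc a s) :=
    (continuousOn_const.sub hprim).congr (fun y hy => hF_eq y hy.1)
  have hgcont : ContinuousOn (fun y => y ^ 2 * F y) (Set.Icc a s) :=
    ((continuous_pow 2).continuousOn).mul hFconts
  -- derivative of y² F y on Ioo a s
  have hderiv : ∀ t ∈ Set.Ioo a s,
      HasDerivAt (fun y => y ^ 2 * F y) (2 * t * F t - t ^ 2 * c t) t := by
    intro t ht
    have hta : a < t := ht.1
    have hca : ContinuousAt c t :=
      (hcont t hta.le).continuousAt (Ici_mem_nhds hta)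
    have hii : IntervalIntegrable c volume a t :=
      (hint.mono_set ((Set.uIcc_of_le hta.le) ▸ Set.Icc_subset_Ici_self)).intervalIntegrable
    have hprim' : HasDerivAt (fun y => ∫ x in a..y, c x) (c t) t :=
      intervalIntegral.integral_hasDerivAt_right hii
        ⟨Set.Ioi a, Ioi_mem_nhds hta,
          (hcont.mono (Set.Ioi_subset_Ici_self)).aestronglyMeasurable measurableSet_Ioi⟩ hca
    have hdF : HasDerivAt F (-(c t)) t := by
      have h1 : HasDerivAt (fun y => F a - ∫ x in a..y, c x) (-(c t)) t := by
        exact ((hasDerivAt_const t (F a)).sub hprim').congr_deriv (by ring)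
      apply h1.congr_of_eventuallyEq
      filter_upwards [Ioi_mem_nhds hta] with y hy
      exact hF_eq y (le_of_lt hy)
    have := (hasDerivAt_pow 2 t).mul hdF
    exact this.congr_deriv (by rw [show (2:ℕ) - 1 = 1 from rfl]; push_cast; ring)
  -- f' is interval integrable (continuous on Icc)
  have hf'cont : ContinuousOn (fun t => 2 * t * F t - t ^ 2 * c t) (Set.Icc a s) :=
    ((continuousOn_const.mul continuousOn_id).mul hFconts).sub
      (((continuous_pow 2).continuousOn).mul (hcont.mono Set.Icc_subset_Ici_self))
  have hf'int : IntervalIntegrable (fun t => 2 * t * F t - t ^ 2 * c t) volume a s :=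
    (hf'cont.mono (huIcc ▸ le_rfl)).intervalIntegrable
  have hFTC : ∫ t in a..s, (2 * t * F t - t ^ 2 * c t)
      = s ^ 2 * F s - a ^ 2 * F a :=
    intervalIntegral.integral_eq_sub_of_hasDeriv_right_of_le hs hgcont
      (fun t ht => (hderiv t ht).hasDerivWithinAt) hf'int
  -- integrand comparison
  have h2cont : ContinuousOn (fun t => (3 - γ) / (γ - 1) * (t ^ 2 * c t)) (Set.Icc a s) :=
    continuousOn_const.mul
      (((continuous_pow 2).continuousOn).mul (hcont.mono Set.Icc_subset_Ici_self))
  have h2int : IntervalIntegrable (fun t => (3 - γ) / (γ - 1) * (t ^ 2 * c t)) volume a s :=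
    (h2cont.mono (huIcc ▸ le_rfl)).intervalIntegrable
  have hmono2 : ∫ t in a..s, (2 * t * F t - t ^ 2 * c t)
      ≤ ∫ t in a..s, (3 - γ) / (γ - 1) * (t ^ 2 * c t) := by
    apply intervalIntegral.integral_mono_on hs hf'int h2int
    intro t ht
    have hta : a ≤ t := ht.1
    have ht0 : 0 < t := lt_of_lt_of_le ha hta
    have hk := key t hta
    rw [div_mul_eq_mul_div, le_div_iff₀ hγ']
    nlinarith [mul_le_mul_of_nonneg_left hk (by linarith : (0:ℝ) ≤ 2 * t)]
  have hIconst : ∫ t in a..s, (3 - γ) / (γ - 1) * (t ^ 2 * c t)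
      = (3 - γ) / (γ - 1) * ∫ t in a..s, t ^ 2 * c t :=
    intervalIntegral.integral_const_mul _ _
  have hInonneg : 0 ≤ ∫ t in a..s, t ^ 2 * c t := by
    apply intervalIntegral.integral_nonneg hs
    intro t ht
    exact mul_nonneg (sq_nonneg t) (hpos t ht.1).le
  have hCle : (3 - γ) / (γ - 1) * (∫ t in a..s, t ^ 2 * c t)
      ≤ C * ∫ t in a..s, t ^ 2 * c t :=
    mul_le_mul_of_nonneg_right hC.le hInonneg
  rw [hFTC, hIconst] at hmono2
  have hFs : (∫ x in Set.Ioi s, c x) = F s := rfl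
  rw [hFs]
  linarith
end

section
/- Let d ≥ 1, let θ₀, …, θ_{d−1} ∈ [0, 2π) be pairwise distinct with θ₀ = 0, and set W(e^{it}) = Σ_{j=0}^{d−1} Π_{m=0}^{d−1} |e^{it} − e^{i(θ_m − θ_j)}|^α, α > 0. If W(e^{it}) = 0 for some t ∈ (0, 2π), then t = 2πn/d for some integer n ∈ {1,…,d−1}, and there exists a permutation j ↦ m(j) of {0,…,d−1} with θ_{m(j)} = θ_j + t (mod 2π) for all j; moreover all cycles of this permutation have the same length l, where l divides d, and the set {e^{iθ_j}} is a union of d/l vertex sets of regular l-sided polygons. Consequently the zero set of W is exactly the set of roots of unity of order d_s, where d_s is the maximal such cycle length over all zeros (d_s = 1 meaning W vanishes only at e^{it} = 1). -/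
open Complex Function Equiv

noncomputable def cexpI (x : ℝ) : ℂ := Complex.exp (Complex.I * (x : ℂ))

lemma cexpI_ne_zero (x : ℝ) : cexpI x ≠ 0 := Complex.exp_ne_zero _

lemma cexpI_zero : cexpI 0 = 1 := by simp [cexpI]

lemma cexpI_add (x y : ℝ) : cexpI (x + y) = cexpI x * cexpI y := by
  rw [cexpI, cexpI, cexpI, ← Complex.exp_add]
  congr 1
  push_cast
  ring

lemma cexpI_eq_iff {x y : ℝ} : cexpI x = cexpI y ↔ ∃ n : ℤ, x = y + 2 * Real.pi * n := by
  rw [cexpI, cexpI, Complex.exp_eq_exp_iff_exists_int]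
  constructor
  · rintro ⟨n, hn⟩
    refine ⟨n, ?_⟩
    have h2 : Complex.I * (x : ℂ) = Complex.I * ((y : ℂ) + 2 * Real.pi * n) := by
      rw [hn]; ring
    have h3 := mul_left_cancel₀ Complex.I_ne_zero h2
    exact_mod_cast h3
  · rintro ⟨n, hn⟩
    refine ⟨n, ?_⟩
    rw [hn]; push_cast; ring

lemma cexpI_eq_one_iff {x : ℝ} : cexpI x = 1 ↔ ∃ n : ℤ, x = 2 * Real.pi * n := by
  rw [← cexpI_zero, cexpI_eq_iff]
  simp

lemma cexpI_pow (x : ℝ) (n : ℕ) : (cexpI x) ^ n = cexpI (n * x) := by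
  rw [cexpI, cexpI, ← Complex.exp_nat_mul]
  congr 1
  push_cast
  ring

/-- the multiplicative zero condition -/
def Pz {d : ℕ} (θ : Fin d → ℝ) (ζ : ℂ) : Prop :=
  ∀ j : Fin d, ∃ m : Fin d, ζ * cexpI (θ j) = cexpI (θ m)

section
variable {d : ℕ} {θ : Fin d → ℝ}
  (hdist : ∀ i j : Fin d, i ≠ j → ∀ n : ℤ, θ i - θ j ≠ 2 * Real.pi * n)

include hdist in
lemma cexpI_theta_inj : Function.Injective (fun j : Fin d => cexpI (θ j)) := by
  intro i j hij
  by_contra hne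
  obtain ⟨n, hn⟩ := cexpI_eq_iff.mp hij
  exact hdist i j hne n (by linarith)

include hdist in
lemma perm_of_Pz (hd : 0 < d) {ζ : ℂ} (hP : Pz θ ζ) :
    ∃ σ : Equiv.Perm (Fin d), ∀ j, cexpI (θ (σ j)) = ζ * cexpI (θ j) := by
  have hζ : ζ ≠ 0 := by
    obtain ⟨m, hm⟩ := hP ⟨0, hd⟩
    intro h
    exact cexpI_ne_zero (θ m) (by rw [← hm, h, zero_mul])
  choose f hf using hP
  have hinj : Function.Injective f := by
    intro i j hij
    apply cexpI_theta_inj hdist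
    have h1 : ζ * cexpI (θ i) = ζ * cexpI (θ j) := by
      rw [hf i, hf j, hij]
    exact mul_left_cancel₀ hζ h1
  exact ⟨Equiv.ofBijective f (Finite.injective_iff_bijective.mp hinj),
    fun j => (hf j).symm⟩

variable {σ : Equiv.Perm (Fin d)} {ζ : ℂ}
  (hσ : ∀ j, cexpI (θ (σ j)) = ζ * cexpI (θ j))

include hσ in
lemma pow_rel : ∀ (n : ℕ) (j : Fin d), cexpI (θ ((σ ^ n) j)) = ζ ^ n * cexpI (θ j) := by
  intro n
  induction n with
  | zero => simp
  | succ n ih =>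
    intro j
    rw [pow_succ', Equiv.Perm.mul_apply, hσ, ih, pow_succ']
    ring

include hdist hσ in
lemma fixed_iff {n : ℕ} {j : Fin d} : (σ ^ n) j = j ↔ ζ ^ n = 1 := by
  constructor
  · intro h
    have := pow_rel hσ n j
    rw [h] at this
    have h2 : ζ ^ n * cexpI (θ j) = 1 * cexpI (θ j) := by rw [one_mul, ← this]
    exact mul_right_cancel₀ (cexpI_ne_zero _) h2
  · intro h
    apply cexpI_theta_inj hdist
    show cexpI (θ ((σ ^ n) j)) = cexpI (θ j)
    rw [pow_rel hσ n j, h, one_mul]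

end

section
variable {d : ℕ} {θ : Fin d → ℝ}
  (hdist : ∀ i j : Fin d, i ≠ j → ∀ n : ℤ, θ i - θ j ≠ 2 * Real.pi * n)
  {σ : Equiv.Perm (Fin d)} {ζ : ℂ}
  (hσ : ∀ j, cexpI (θ (σ j)) = ζ * cexpI (θ j))

include hdist hσ

lemma finite_order (hd : 0 < d) : ζ ^ orderOf σ = 1 ∧ 0 < orderOf ζ := by
  have hpos : 0 < orderOf σ := orderOf_pos σ
  have h1 : (σ ^ orderOf σ) ⟨0, hd⟩ = ⟨0, hd⟩ := by rw [pow_orderOf_eq_one]; rfl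
  have h2 : ζ ^ orderOf σ = 1 := (fixed_iff hdist hσ).mp h1
  exact ⟨h2, orderOf_pos_iff.mpr (isOfFinOrder_iff_pow_eq_one.mpr ⟨_, hpos, h2⟩)⟩

lemma sigma_pow_orderOf (hd : 0 < d) : σ ^ orderOf ζ = 1 :=
  Equiv.ext fun j => (fixed_iff hdist hσ).mpr (pow_orderOf_eq_one ζ)

lemma minPeriod_eq (hd : 0 < d) (j : Fin d) :
    Function.minimalPeriod (⇑σ) j = orderOf ζ := by
  have h1 : Function.IsPeriodicPt (⇑σ) (orderOf ζ) j := by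
    show Function.IsFixedPt (⇑σ)^[orderOf ζ] j
    rw [← Equiv.Perm.coe_pow, sigma_pow_orderOf hdist hσ hd]
    rfl
  have h2 := h1.minimalPeriod_dvd
  have h3 : (σ ^ Function.minimalPeriod (⇑σ) j) j = j := by
    rw [Equiv.Perm.coe_pow]
    exact Function.isPeriodicPt_minimalPeriod (⇑σ) j
  have h4 : orderOf ζ ∣ Function.minimalPeriod (⇑σ) j :=
    orderOf_dvd_of_pow_eq_one ((fixed_iff hdist hσ).mp h3)
  exact Nat.dvd_antisymm h2 h4

lemma same_cycle_iff (hd : 0 < d) {x y : Fin d} :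
    σ.SameCycle x y ↔ ∃ k < orderOf ζ, (σ ^ k) x = y := by
  constructor
  · rintro ⟨i, hi⟩
    set l := orderOf ζ with hl
    have hlpos : 0 < l := (finite_order hdist hσ hd).2
    have hzl : σ ^ (l : ℤ) = 1 := by
      rw [zpow_natCast, sigma_pow_orderOf hdist hσ hd]
    have key : σ ^ i = σ ^ ((i % l).toNat) := by
      conv_lhs => rw [← Int.emod_add_mul_ediv i l]
      rw [zpow_add, zpow_mul, hzl, one_zpow, mul_one,
        ← zpow_natCast σ ((i % l).toNat), Int.toNat_of_nonneg
          (Int.emod_nonneg i (by exact_mod_cast hlpos.ne'))]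
    refine ⟨(i % l).toNat, ?_, ?_⟩
    · have := Int.emod_lt_of_pos i (show (0:ℤ) < l by exact_mod_cast hlpos)
      omega
    · rw [← hi, key]
  · rintro ⟨k, _, hk⟩
    exact ⟨(k : ℤ), by rwa [zpow_natCast]⟩

lemma card_fiber (hd : 0 < d) (x : Fin d) :
    (Finset.univ.filter fun j => σ.SameCycle x j).card = orderOf ζ := by
  classical
  set l := orderOf ζ with hl
  have himg : (Finset.univ.filter fun j => σ.SameCycle x j) =
      (Finset.range l).image (fun k => (σ ^ k) x) := by
    ext j
    simp only [Finset.mem_filter, Finset.mem_univ, true_and, Finset.mem_image,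
      Finset.mem_range]
    rw [same_cycle_iff hdist hσ hd]
  have key : ∀ a b : ℕ, a < l → b < l → a ≤ b → (σ ^ a) x = (σ ^ b) x → a = b := by
    intro a b ha hb hle hab
    have h1 : (σ ^ (b - a)) ((σ ^ a) x) = (σ ^ a) x := by
      rw [← Equiv.Perm.mul_apply, ← pow_add, Nat.sub_add_cancel hle, ← hab]
    have h3 : l ∣ (b - a) := orderOf_dvd_of_pow_eq_one ((fixed_iff hdist hσ).mp h1)
    have h4 : b - a = 0 := Nat.eq_zero_of_dvd_of_lt h3 (by omega)
    omega
  rw [himg, Finset.card_image_of_injOn, Finset.card_range]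
  intro a ha b hb hab
  simp only [Finset.coe_range, Set.mem_Iio] at ha hb
  dsimp only at hab
  rcases le_total a b with hle | hle
  · exact key a b ha hb hle hab
  · exact (key b a hb ha hle hab.symm).symm

/-- the same-cycle setoid of a permutation -/
def scSetoid {d : ℕ} (σ : Equiv.Perm (Fin d)) : Setoid (Fin d) :=
  ⟨σ.SameCycle, ⟨Equiv.Perm.SameCycle.refl σ, Equiv.Perm.SameCycle.symm,
    Equiv.Perm.SameCycle.trans⟩⟩

lemma card_quot (hd : 0 < d) :
    Nat.card (Quotient (scSetoid σ)) * orderOf ζ = d := by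
  classical
  letI : Fintype (Quotient (scSetoid σ)) := Fintype.ofFinite _
  rw [Nat.card_eq_fintype_card]
  have hcount : (Finset.univ : Finset (Fin d)).card =
      ∑ q : Quotient (scSetoid σ),
        (Finset.univ.filter fun j => Quotient.mk (scSetoid σ) j = q).card :=
    Finset.card_eq_sum_card_fiberwise (fun x _ => Finset.mem_univ _)
  have hfib : ∀ q, (Finset.univ.filter fun j => Quotient.mk (scSetoid σ) j = q).card
      = orderOf ζ := by
    intro q
    induction q using Quotient.inductionOn with
    | h x =>
      rw [← card_fiber hdist hσ hd x]
      congr 1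
      ext j
      simp only [Finset.mem_filter, Finset.mem_univ, true_and]
      rw [Quotient.eq]
      exact ⟨fun h => h.symm, fun h => h.symm⟩
  rw [Finset.card_univ, Fintype.card_fin] at hcount
  have h5 : d = Fintype.card (Quotient (scSetoid σ)) * orderOf ζ := by
    conv_lhs => rw [hcount]
    rw [Finset.sum_congr rfl (fun q _ => hfib q), Finset.sum_const,
      Finset.card_univ, smul_eq_mul]
  omega

lemma orderOf_dvd_d (hd : 0 < d) : orderOf ζ ∣ d :=
  ⟨Nat.card (Quotient (scSetoid σ)), by rw [mul_comm, card_quot hdist hσ hd]⟩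

lemma polygon (hd : 0 < d) :
    ∃ φ : Fin (d / orderOf ζ) → ℝ,
      (Set.range fun j : Fin d => cexpI (θ j)) =
        ⋃ r : Fin (d / orderOf ζ), Set.range fun k : Fin (orderOf ζ) =>
          cexpI (φ r + 2 * Real.pi * (k.val : ℝ) / (orderOf ζ : ℝ)) := by
  classical
  have hlpos : 0 < orderOf ζ := (finite_order hdist hσ hd).2
  haveI : NeZero (orderOf ζ) := ⟨hlpos.ne'⟩
  letI : Fintype (Quotient (scSetoid σ)) := Fintype.ofFinite _
  have hcard : Fintype.card (Quotient (scSetoid σ)) = d / orderOf ζ := by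
    have h := card_quot hdist hσ hd
    rw [Nat.card_eq_fintype_card] at h
    exact (Nat.div_eq_of_eq_mul_left hlpos h.symm).symm
  let e : Fin (d / orderOf ζ) ≃ Quotient (scSetoid σ) :=
    (Fintype.equivFinOfCardEq hcard).symm
  refine ⟨fun r => θ (e r).out, ?_⟩
  have hu : IsPrimitiveRoot (Complex.exp (2 * Real.pi * Complex.I / (orderOf ζ : ℕ)))
      (orderOf ζ) := Complex.isPrimitiveRoot_exp _ hlpos.ne'
  have hζprim : IsPrimitiveRoot ζ (orderOf ζ) := IsPrimitiveRoot.orderOf ζ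
  have hupow : ∀ m : ℕ,
      (Complex.exp (2 * Real.pi * Complex.I / (orderOf ζ : ℕ))) ^ m =
        cexpI (2 * Real.pi * (m : ℝ) / (orderOf ζ : ℝ)) := by
    intro m
    rw [← Complex.exp_nat_mul, cexpI]
    congr 1
    push_cast
    ring
  ext z
  simp only [Set.mem_range, Set.mem_iUnion]
  constructor
  · rintro ⟨j, rfl⟩
    refine ⟨e.symm (Quotient.mk (scSetoid σ) j), ?_⟩
    set x := (e (e.symm (Quotient.mk (scSetoid σ) j))).out with hxdef
    have hsc : σ.SameCycle x j := by
      rw [hxdef, e.apply_symm_apply]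
      have h := Quotient.exact (Quotient.out_eq (Quotient.mk (scSetoid σ) j))
      exact h
    obtain ⟨k, hk, hσk⟩ := (same_cycle_iff hdist hσ hd).mp hsc
    have h1 : cexpI (θ j) = ζ ^ k * cexpI (θ x) := by
      rw [← hσk, pow_rel hσ]
    have h2 : (ζ ^ k) ^ orderOf ζ = 1 := by
      rw [← pow_mul, mul_comm k (orderOf ζ), pow_mul, pow_orderOf_eq_one, one_pow]
    obtain ⟨m, hm, hum⟩ := hu.eq_pow_of_pow_eq_one h2
    refine ⟨⟨m, hm⟩, ?_⟩
    rw [h1, ← hum, hupow m, ← cexpI_add,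
      add_comm (2 * Real.pi * (m : ℝ) / (orderOf ζ : ℝ)) (θ x)]
  · rintro ⟨r, k, rfl⟩
    have h2 : ((Complex.exp (2 * Real.pi * Complex.I / (orderOf ζ : ℕ))) ^ (k : ℕ))
        ^ orderOf ζ = 1 := by
      rw [← pow_mul, mul_comm (k : ℕ) (orderOf ζ), pow_mul, hu.pow_eq_one, one_pow]
    obtain ⟨m, hm, hmeq⟩ := hζprim.eq_pow_of_pow_eq_one h2
    refine ⟨(σ ^ m) (e r).out, ?_⟩
    rw [pow_rel hσ m, hmeq, hupow, ← cexpI_add,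
      add_comm (2 * Real.pi * ((k : ℕ) : ℝ) / (orderOf ζ : ℝ)) (θ (e r).out)]

end

/-- the stabilizer group of the configuration -/
def Hgrp {d : ℕ} (θ : Fin d → ℝ) (hd : 0 < d)
    (hdist : ∀ i j : Fin d, i ≠ j → ∀ n : ℤ, θ i - θ j ≠ 2 * Real.pi * n) :
    Subgroup ℂˣ where
  carrier := {u | Pz θ (u : ℂ)}
  one_mem' := fun j => ⟨j, by simp⟩
  mul_mem' := by
    rintro a b ha hb j
    obtain ⟨m, hm⟩ := hb j
    obtain ⟨m', hm'⟩ := ha m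
    exact ⟨m', by rw [Units.val_mul, mul_assoc, hm, hm']⟩
  inv_mem' := by
    intro u hu j
    obtain ⟨σ, hσ⟩ := perm_of_Pz hdist hd hu
    refine ⟨σ⁻¹ j, ?_⟩
    have h1 : cexpI (θ j) = (u : ℂ) * cexpI (θ (σ⁻¹ j)) := by
      rw [← hσ (σ⁻¹ j), ← Equiv.Perm.mul_apply, mul_inv_cancel, Equiv.Perm.one_apply]
    rw [h1, ← mul_assoc]
    have h2 : ((u⁻¹ : ℂˣ) : ℂ) * (u : ℂ) = 1 := by
      rw [← Units.val_mul, inv_mul_cancel, Units.val_one]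
    rw [h2, one_mul]

lemma Hgrp_finite {d : ℕ} (θ : Fin d → ℝ) (hd : 0 < d)
    (hdist : ∀ i j : Fin d, i ≠ j → ∀ n : ℤ, θ i - θ j ≠ 2 * Real.pi * n) :
    Finite ↥(Hgrp θ hd hdist) := by
  have himg : Units.val '' ((Hgrp θ hd hdist : Subgroup ℂˣ) : Set ℂˣ) ⊆
      Set.range (fun m : Fin d => cexpI (θ m) * (cexpI (θ ⟨0, hd⟩))⁻¹) := by
    rintro z ⟨u, hu, rfl⟩
    obtain ⟨m, hm⟩ := hu ⟨0, hd⟩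
    refine ⟨m, ?_⟩
    show cexpI (θ m) * (cexpI (θ ⟨0, hd⟩))⁻¹ = ↑u
    rw [← hm]
    field_simp [cexpI_ne_zero]
  have hfin : ((Hgrp θ hd hdist : Subgroup ℂˣ) : Set ℂˣ).Finite :=
    Set.Finite.of_finite_image ((Set.finite_range _).subset himg)
      (Units.val_injective.injOn)
  exact hfin.to_subtype

lemma Wzero_iff {d : ℕ} (θ : Fin d → ℝ) {α : ℝ} (hα : 0 < α) (t : ℝ) :
    (∑ j : Fin d, ∏ m : Fin d,
      ‖Complex.exp (Complex.I * (t : ℂ)) -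
        Complex.exp (Complex.I * ((θ m - θ j : ℝ) : ℂ))‖ ^ α) = 0 ↔ Pz θ (cexpI t) := by
  rw [Finset.sum_eq_zero_iff_of_nonneg (fun j _ => Finset.prod_nonneg fun m _ =>
    Real.rpow_nonneg (norm_nonneg _) α)]
  constructor
  · intro h j
    obtain ⟨m, _, hm⟩ := Finset.prod_eq_zero_iff.mp (h j (Finset.mem_univ j))
    have h0 : ‖cexpI t - cexpI (θ m - θ j)‖ = 0 :=
      ((Real.rpow_eq_zero_iff_of_nonneg (norm_nonneg _)).mp hm).1
    have h1 : cexpI t = cexpI (θ m - θ j) :=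
      sub_eq_zero.mp (norm_eq_zero.mp h0)
    exact ⟨m, by rw [h1, ← cexpI_add, sub_add_cancel]⟩
  · intro hP j _
    obtain ⟨m, hm⟩ := hP j
    apply Finset.prod_eq_zero (Finset.mem_univ m)
    have h0 : cexpI (θ m - θ j) * cexpI (θ j) = cexpI (θ m) := by
      rw [← cexpI_add, sub_add_cancel]
    have h1 : cexpI t = cexpI (θ m - θ j) :=
      mul_right_cancel₀ (cexpI_ne_zero _) (by rw [hm, h0])
    show ‖cexpI t - cexpI (θ m - θ j)‖ ^ α = 0
    rw [h1, sub_self, norm_zero]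
    exact Real.zero_rpow hα.ne'

/-- Combinatorial lemma on zeros of `W(e^{it}) = Σ_j Π_m |e^{it} − e^{i(θ_m − θ_j)}|^α`:
any zero `t ∈ (0, 2π)` is of the form `2πn/d`, comes from a permutation `σ` of the
singularities with `θ_{σ(j)} ≡ θ_j + t (mod 2π)` all of whose cycles have the same
length `l ∣ d`, so that `{e^{iθ_j}}` is a union of `d/l` regular `l`-gons; and the zero
set of `W` in `[0, 2π)` is exactly the set of roots of unity of some order `d_s ∣ d`. -/
theorem stmt_19 (d : ℕ) (hd : 0 < d) (α : ℝ) (hα : 0 < α)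
    (θ : Fin d → ℝ) (hθ0 : θ ⟨0, hd⟩ = 0)
    (hdist : ∀ i j : Fin d, i ≠ j → ∀ n : ℤ, θ i - θ j ≠ 2 * Real.pi * n)
    (W : ℝ → ℝ)
    (hW : ∀ t : ℝ, W t = ∑ j : Fin d, ∏ m : Fin d,
      ‖Complex.exp (Complex.I * (t : ℂ)) -
        Complex.exp (Complex.I * ((θ m - θ j : ℝ) : ℂ))‖ ^ α) :
    (∀ t : ℝ, t ∈ Set.Ioo 0 (2 * Real.pi) → W t = 0 →
      (∃ n : ℕ, 1 ≤ n ∧ n < d ∧ t = 2 * Real.pi * (n : ℝ) / (d : ℝ)) ∧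
      ∃ σ : Equiv.Perm (Fin d),
        (∀ j : Fin d, ∃ N : ℤ, θ (σ j) = θ j + t + 2 * Real.pi * N) ∧
        ∃ l : ℕ, 0 < l ∧ l ∣ d ∧
          (∀ j : Fin d, Function.minimalPeriod (⇑σ) j = l) ∧
          ∃ φ : Fin (d / l) → ℝ,
            (Set.range fun j : Fin d => Complex.exp (Complex.I * ((θ j : ℝ) : ℂ))) =
              ⋃ r : Fin (d / l), Set.range fun k : Fin l =>
                Complex.exp (Complex.I *
                  (((φ r + 2 * Real.pi * (k.val : ℝ) / (l : ℝ)) : ℝ) : ℂ)))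
    ∧ ∃ ds : ℕ, 0 < ds ∧ ds ∣ d ∧
        {t : ℝ | t ∈ Set.Ico 0 (2 * Real.pi) ∧ W t = 0} =
          {t : ℝ | ∃ k : Fin ds, t = 2 * Real.pi * (k.val : ℝ) / (ds : ℝ)} := by
  have hπ := Real.pi_pos
  have hWz : ∀ t : ℝ, W t = 0 ↔ Pz θ (cexpI t) := fun t => by
    rw [hW t]; exact Wzero_iff θ hα t
  constructor
  · intro t ht hWt
    obtain ⟨ht0, ht2⟩ := ht
    have hP := (hWz t).mp hWt
    obtain ⟨σ, hσ⟩ := perm_of_Pz hdist hd hP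
    have hl : 0 < orderOf (cexpI t) := (finite_order hdist hσ hd).2
    have hld : orderOf (cexpI t) ∣ d := orderOf_dvd_d hdist hσ hd
    set l := orderOf (cexpI t) with hldef
    have hζl : cexpI ((l : ℝ) * t) = 1 := by
      rw [← cexpI_pow]; exact pow_orderOf_eq_one _
    obtain ⟨N, hN⟩ := cexpI_eq_one_iff.mp hζl
    have hlr : (0:ℝ) < l := by exact_mod_cast hl
    have hNpos : 0 < N := by
      have : (0:ℝ) < (N:ℝ) := by nlinarith
      exact_mod_cast this
    have hNl : (N:ℝ) < l := by nlinarith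
    have hNlt : N < (l:ℤ) := by exact_mod_cast hNl
    set c := d / l with hcdef
    have hlc : l * c = d := Nat.mul_div_cancel' hld
    have hcpos : 0 < c := Nat.div_pos (Nat.le_of_dvd hd hld) hl
    constructor
    · refine ⟨N.toNat * c, ?_, ?_, ?_⟩
      · exact Nat.mul_pos (by omega) hcpos
      · have h1 : N.toNat < l := by omega
        calc N.toNat * c < l * c := mul_lt_mul_of_pos_right h1 hcpos
        _ = d := hlc
      · have ht' : t = 2 * Real.pi * N / l := by
          rw [eq_div_iff hlr.ne']
          linarith [hN]
        have hdr : (d:ℝ) = (l:ℝ) * (c:ℝ) := by exact_mod_cast hlc.symm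
        have hNtn : ((N.toNat : ℕ) : ℝ) = (N : ℝ) := by
          exact_mod_cast Int.toNat_of_nonneg hNpos.le
        have hnr : ((N.toNat * c : ℕ) : ℝ) = (N:ℝ) * (c:ℝ) := by
          push_cast
          rw [hNtn]
        have hcr : (0:ℝ) < c := by exact_mod_cast hcpos
        rw [ht', hdr, hnr]
        field_simp
    · refine ⟨σ, ?_, l, hl, hld, minPeriod_eq hdist hσ hd, ?_⟩
      · intro j
        have h1 : cexpI (θ (σ j)) = cexpI (t + θ j) := by rw [hσ j, cexpI_add]
        obtain ⟨M, hM⟩ := cexpI_eq_iff.mp h1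
        exact ⟨M, by linarith⟩
      · obtain ⟨φ, hφ⟩ := polygon hdist hσ hd
        exact ⟨φ, hφ⟩
  · haveI : Finite ↥(Hgrp θ hd hdist) := Hgrp_finite θ hd hdist
    obtain ⟨g, hg⟩ := IsCyclic.exists_generator (α := ↥(Hgrp θ hd hdist))
    set ds := Nat.card ↥(Hgrp θ hd hdist) with hdsdef
    have hds_pos : 0 < ds := Nat.card_pos
    have hdsr : (0:ℝ) < ds := by exact_mod_cast hds_pos
    have hordg : orderOf g = ds := orderOf_eq_card_of_forall_mem_zpowers hg
    have hord : orderOf (((g : ℂˣ)) : ℂ) = ds := by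
      rw [orderOf_units]
      rw [← hordg]
      exact orderOf_injective (Hgrp θ hd hdist).subtype
        (Subgroup.subtype_injective _) g
    have hPg : Pz θ (((g : ℂˣ)) : ℂ) := g.2
    obtain ⟨σg, hσg⟩ := perm_of_Pz hdist hd hPg
    have hds_dvd : ds ∣ d := hord ▸ orderOf_dvd_d hdist hσg hd
    refine ⟨ds, hds_pos, hds_dvd, ?_⟩
    ext t
    simp only [Set.mem_setOf_eq, Set.mem_Ico]
    constructor
    · rintro ⟨⟨ht0, ht2⟩, hWt⟩
      have hP := (hWz t).mp hWt
      set u : ℂˣ := Units.mk0 (cexpI t) (cexpI_ne_zero t) with hu_def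
      have hu : u ∈ Hgrp θ hd hdist := hP
      have hpow : (⟨u, hu⟩ : ↥(Hgrp θ hd hdist)) ^ ds = 1 := pow_card_eq_one'
      have hpowC : (cexpI t) ^ ds = 1 := by
        have h2 := congrArg (fun x : ↥(Hgrp θ hd hdist) => ((x : ℂˣ) : ℂ)) hpow
        simpa [hu_def] using h2
      rw [cexpI_pow] at hpowC
      obtain ⟨N, hN⟩ := cexpI_eq_one_iff.mp hpowC
      have hN0 : (0:ℝ) ≤ N := by nlinarith
      have hNds : (N:ℝ) < ds := by nlinarith
      refine ⟨⟨N.toNat, ?_⟩, ?_⟩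
      · have : (N:ℝ) < (ds:ℝ) := hNds
        have h3 : N < (ds:ℤ) := by exact_mod_cast this
        omega
      · show t = 2 * Real.pi * ((N.toNat : ℕ) : ℝ) / ds
        have h4 : ((N.toNat : ℕ) : ℝ) = (N:ℝ) := by
          have h5 : (0:ℤ) ≤ N := by exact_mod_cast hN0
          exact_mod_cast Int.toNat_of_nonneg h5
        rw [h4, eq_div_iff hdsr.ne']
        linarith [hN]
    · rintro ⟨k, rfl⟩
      have hk : (k.val : ℝ) < ds := by exact_mod_cast k.isLt
      have hk0 : (0:ℝ) ≤ (k.val : ℝ) := by positivity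
      refine ⟨⟨?_, ?_⟩, ?_⟩
      · positivity
      · rw [div_lt_iff₀ hdsr]
        nlinarith
      · apply (hWz _).mpr
        haveI : NeZero ds := ⟨hds_pos.ne'⟩
        have hx : (cexpI (2 * Real.pi * (k.val : ℝ) / ds)) ^ ds = 1 := by
          rw [cexpI_pow]
          apply cexpI_eq_one_iff.mpr
          refine ⟨k.val, ?_⟩
          push_cast
          field_simp
        have hprim : IsPrimitiveRoot (((g : ℂˣ)) : ℂ) ds :=
          hord ▸ IsPrimitiveRoot.orderOf _
        obtain ⟨i, hi, hieq⟩ := hprim.eq_pow_of_pow_eq_one hx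
        have hmem : ((g : ℂˣ) ^ i) ∈ Hgrp θ hd hdist :=
          Subgroup.pow_mem _ g.2 i
        have hPz : Pz θ ((((g : ℂˣ) ^ i) : ℂˣ) : ℂ) := hmem
        rwa [Units.val_pow_eq_pow_val, hieq] at hPz
end
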